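/- arXiv:1404.6392 — 12 statements merged into one kernel-verified Lean document; each statement's English description precedes it below -/
import Mathlib

section
/- Let ℱ be a family of finite subsets of ℤⁿ, ⪰ an additive total preorder on ℤⁿ, and ℳ ⊆ ℤⁿ. If ℳ is a Markov basis of ℱ (i.e., for each F ∈ ℱ the undirected graph F_ℳ with edges {u,v} whenever u−v ∈ ±ℳ is connected), then ℳ is a ⪰-Gröbner basis of ℱ if and only if: (1) for any two ⪰-minimal elements u, v of a fiber F ∈ ℱ there is a directed path from u to v in F_{ℳ,⪰}, and (2) for any u ∈ F that is not ⪰-minimal in F there is a directed path u → u₁ → ⋯ → u_r in F_{ℳ,⪰} with u_r ≺ u. -/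
namespace Stmt1

/-- An additive (total) preorder on `ℤⁿ`: reflexive, transitive, total, and
translation invariant.  `R u v` means `u ⪰ v`. -/
def isAddPreorder {n : ℕ} (R : (Fin n → ℤ) → (Fin n → ℤ) → Prop) : Prop :=
  (∀ u, R u u) ∧ (∀ u v w, R u v → R v w → R u w) ∧
  (∀ u v, R u v ∨ R v u) ∧ (∀ u v w, R u v → R (u + w) (v + w))

/-- Directed edge of the fiber graph `F_{M,⪰}`: `u → v` iff both lie in `F`,
`v - u ∈ ±M` and `u ⪰ v`. -/
def dstep {n : ℕ} (F M : Set (Fin n → ℤ)) (R : (Fin n → ℤ) → (Fin n → ℤ) → Prop)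
    (u v : Fin n → ℤ) : Prop :=
  u ∈ F ∧ v ∈ F ∧ (v - u ∈ M ∨ u - v ∈ M) ∧ R u v

/-- Mutual reachability (strong connectivity equivalence). -/
def mutReach {n : ℕ} (F M : Set (Fin n → ℤ)) (R : (Fin n → ℤ) → (Fin n → ℤ) → Prop)
    (u v : Fin n → ℤ) : Prop :=
  Relation.ReflTransGen (dstep F M R) u v ∧ Relation.ReflTransGen (dstep F M R) v u

/-- `u` lies in a sink of the condensation `F_{M,⪰}/∼`. -/
def isSink {n : ℕ} (F M : Set (Fin n → ℤ)) (R : (Fin n → ℤ) → (Fin n → ℤ) → Prop)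
    (u : Fin n → ℤ) : Prop :=
  u ∈ F ∧ ∀ v, Relation.ReflTransGen (dstep F M R) u v →
    Relation.ReflTransGen (dstep F M R) v u

/-- Weak connectivity of the directed fiber graph. -/
def weakConn {n : ℕ} (F M : Set (Fin n → ℤ)) (R : (Fin n → ℤ) → (Fin n → ℤ) → Prop) : Prop :=
  ∀ u ∈ F, ∀ v ∈ F,
    Relation.ReflTransGen (fun a b => dstep F M R a b ∨ dstep F M R b a) u v

/-- `M` is a `⪰`-Gröbner basis of the family `Fam`. -/
def isGroebner {n : ℕ} (Fam : Set (Set (Fin n → ℤ))) (M : Set (Fin n → ℤ))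
    (R : (Fin n → ℤ) → (Fin n → ℤ) → Prop) : Prop :=
  ∀ F ∈ Fam, weakConn F M R ∧
    (∀ u v, isSink F M R u → isSink F M R v → mutReach F M R u v) ∧
    (∀ u, isSink F M R u → ∀ v ∈ F, R v u)

/-- `u` is a `⪰`-minimum of `F`. -/
def isMinimal {n : ℕ} (F : Set (Fin n → ℤ)) (R : (Fin n → ℤ) → (Fin n → ℤ) → Prop)
    (u : Fin n → ℤ) : Prop :=
  u ∈ F ∧ ∀ v ∈ F, R v u

/-- Undirected edge of the fiber graph `F_M`. -/
def mstep {n : ℕ} (F M : Set (Fin n → ℤ)) (u v : Fin n → ℤ) : Prop :=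
  u ∈ F ∧ v ∈ F ∧ (v - u ∈ M ∨ u - v ∈ M)

/-- `M` is a Markov basis of the family `Fam`: every fiber graph `F_M` is connected. -/
def isMarkov {n : ℕ} (Fam : Set (Set (Fin n → ℤ))) (M : Set (Fin n → ℤ)) : Prop :=
  ∀ F ∈ Fam, ∀ u ∈ F, ∀ v ∈ F, Relation.ReflTransGen (mstep F M) u v

/-!
In a finite fiber every vertex reaches a sink of the condensation. Given condition (2), a sink
is a `⪰`-minimum, since a strict descent out of it could not be undone; condition (1) then makes
the sinks mutually reachable, and weak connectivity comes from the Markov property because the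
preorder is total. Conversely, if sinks are minima then a non-minimal vertex descends strictly
into a sink, and two minima are joined through their sinks, a path to a sink from a minimum
being reversible since all its vertices are `⪰`-equivalent.
-/

open Relation

theorem exists_reflTransGen_sink {α : Type*} {r : α → α → Prop} {a : α}
    (hfin : {b | ReflTransGen r a b}.Finite) :
    ∃ b, ReflTransGen r a b ∧ ∀ c, ReflTransGen r b c → ReflTransGen r c b := by
  -- take `b` whose set of reachable points is `⊆`-minimal
  obtain ⟨b, hab, hmin⟩ :=
    hfin.exists_minimalFor (fun b => {c | ReflTransGen r b c}) _ ⟨a, .refl⟩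
  refine ⟨b, hab, fun c hbc => ?_⟩
  have hsub : {d | ReflTransGen r c d} ⊆ {d | ReflTransGen r b d} := fun _ hcd => hbc.trans hcd
  exact hmin (hab.trans hbc) hsub (ReflTransGen.refl : ReflTransGen r b b)

section FiberGraph

variable {n : ℕ} {F M : Set (Fin n → ℤ)} {R : (Fin n → ℤ) → (Fin n → ℤ) → Prop} {u v : Fin n → ℤ}

theorem mem_of_reflTransGen_dstep (hu : u ∈ F) (h : ReflTransGen (dstep F M R) u v) : v ∈ F := by
  induction h with
  | refl => exact hu
  | tail _ hstep _ => exact hstep.2.1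

theorem rel_of_reflTransGen_dstep (hR : isAddPreorder R) (h : ReflTransGen (dstep F M R) u v) :
    R u v := by
  induction h with
  | refl => exact hR.1 u
  | tail _ hstep ih => exact hR.2.1 _ _ _ ih hstep.2.2.2

theorem dstep.symm (h : dstep F M R u v) (hvu : R v u) : dstep F M R v u :=
  ⟨h.2.1, h.1, h.2.2.1.symm, hvu⟩

/-- All vertices of such a path are `R`-equivalent, so each of its edges can be reversed. -/
theorem reflTransGen_dstep_symm (hR : isAddPreorder R) (h : ReflTransGen (dstep F M R) u v)
    (hvu : R v u) : ReflTransGen (dstep F M R) v u := by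
  induction h with
  | refl => exact .refl
  | @tail w x huw hwx ih =>
    have hxw : R x w := hR.2.1 _ _ _ hvu (rel_of_reflTransGen_dstep hR huw)
    exact .head (hwx.symm hxw) (ih (hR.2.1 _ _ _ hwx.2.2.2 hvu))

theorem exists_reflTransGen_dstep_isSink (hfin : F.Finite) (hu : u ∈ F) :
    ∃ t, ReflTransGen (dstep F M R) u t ∧ isSink F M R t := by
  obtain ⟨t, hut, hsink⟩ := exists_reflTransGen_sink
    (hfin.subset fun _ (h : ReflTransGen (dstep F M R) u _) => mem_of_reflTransGen_dstep hu h)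
  exact ⟨t, hut, mem_of_reflTransGen_dstep hu hut, hsink⟩

theorem isSink.isMinimal (hR : isAddPreorder R)
    (hdescent : ∀ u ∈ F, ¬ isMinimal F R u →
      ∃ w, ReflTransGen (dstep F M R) u w ∧ R u w ∧ ¬ R w u)
    (hu : isSink F M R u) : isMinimal F R u := by
  by_contra hmin
  obtain ⟨w, huw, -, hwu⟩ := hdescent u hu.1 hmin
  exact hwu (rel_of_reflTransGen_dstep hR (hu.2 w huw))

theorem weakConn_of_reflTransGen_mstep (hR : isAddPreorder R)
    (hconn : ∀ u ∈ F, ∀ v ∈ F, ReflTransGen (mstep F M) u v) : weakConn F M R :=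
  fun u hu v hv => ReflTransGen.mono (fun a b ⟨ha, hb, hd⟩ =>
    (hR.2.2.1 a b).imp (fun hab => ⟨ha, hb, hd, hab⟩) (fun hba => ⟨hb, ha, hd.symm, hba⟩))
    u v (hconn u hu v hv)

end FiberGraph

/-- Lemma 2.2: a Markov basis is a `⪰`-Gröbner basis iff (1) any two
`⪰`-minimal elements of a fiber are joined by a directed path, and (2) from any
non-minimal element there is a directed path reaching a strictly smaller element. -/
theorem stmt_1 (n : ℕ) (Fam : Set (Set (Fin n → ℤ))) (hfin : ∀ F ∈ Fam, F.Finite)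
    (R : (Fin n → ℤ) → (Fin n → ℤ) → Prop) (hR : isAddPreorder R)
    (M : Set (Fin n → ℤ)) (hM : isMarkov Fam M) :
    isGroebner Fam M R ↔
      ((∀ F ∈ Fam, ∀ u v, isMinimal F R u → isMinimal F R v →
          Relation.ReflTransGen (dstep F M R) u v) ∧
       (∀ F ∈ Fam, ∀ u ∈ F, ¬ isMinimal F R u →
          ∃ w, Relation.ReflTransGen (dstep F M R) u w ∧ R u w ∧ ¬ R w u)) := by
  refine ⟨fun hG => ⟨?_, ?_⟩, fun ⟨hpath, hdescent⟩ F hF => ?_⟩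
  · intro F hF u v hu hv
    obtain ⟨-, hsinks, -⟩ := hG F hF
    obtain ⟨t, hut, ht⟩ := exists_reflTransGen_dstep_isSink (hfin F hF) hu.1
    obtain ⟨s, hvs, hs⟩ := exists_reflTransGen_dstep_isSink (hfin F hF) hv.1
    have hsv := reflTransGen_dstep_symm hR hvs (hv.2 s hs.1)
    exact hut.trans ((hsinks t s ht hs).1.trans hsv)
  · intro F hF u hu hmin
    obtain ⟨-, -, hsink_min⟩ := hG F hF
    obtain ⟨t, hut, ht⟩ := exists_reflTransGen_dstep_isSink (hfin F hF) hu
    have htu : ¬ R t u := fun htu =>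
      hmin ⟨hu, fun v hv => hR.2.1 _ _ _ (hsink_min t ht v hv) htu⟩
    exact ⟨t, hut, (hR.2.2.1 u t).resolve_right htu, htu⟩
  · have hsink_min (u) (hu : isSink F M R u) := hu.isMinimal hR (hdescent F hF)
    refine ⟨weakConn_of_reflTransGen_mstep hR (hM F hF), fun u v hu hv => ?_,
      fun u hu => (hsink_min u hu).2⟩
    exact ⟨hpath F hF u v (hsink_min u hu) (hsink_min v hv),
      hpath F hF v u (hsink_min v hv) (hsink_min u hu)⟩

end Stmt1
end

section
/- Let D ∈ ℤ^{r×n}, ℒ ⊆ ℤⁿ a lattice with lattice basis given by the columns of an integer matrix L of size n×t, and assume that D̃ = DL ∈ ℤ^{r×t} has rank t. If 𝒢 ⊆ ℒ is an (ℒ, D)-Markov basis (a set of moves connecting every set {u ∈ ℒ + v : Du ≥ c} for all c ∈ ℤʳ, v ∈ ℤⁿ), then D(𝒢) ⊆ ℤʳ is a Markov basis of the lattice ℤD̃ spanned by the columns of D̃ (i.e., it connects every set {w ∈ ℕʳ : w ∈ ℤD̃ + b} for b ∈ ℤʳ). -/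
namespace Stmt3

/-- Undirected move step within a fiber `F` using moves from `±M`. -/
def mstep {ι : Type*} (F M : Set (ι → ℤ)) (u v : ι → ℤ) : Prop :=
  u ∈ F ∧ v ∈ F ∧ (v - u ∈ M ∨ u - v ∈ M)

/-- `M` connects the set `F`. -/
def connects {ι : Type*} (M F : Set (ι → ℤ)) : Prop :=
  ∀ u ∈ F, ∀ v ∈ F, Relation.ReflTransGen (mstep F M) u v

/-- The inequality fiber `{u ∈ ℒ + v : D u ≥ c}`. -/
def ineqFiber {r n : ℕ} (D : Matrix (Fin r) (Fin n) ℤ) (L : Set (Fin n → ℤ))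
    (v : Fin n → ℤ) (c : Fin r → ℤ) : Set (Fin n → ℤ) :=
  {u | u - v ∈ L ∧ c ≤ D.mulVec u}

/-- `G` is an `(ℒ,D)`-Markov basis: it connects all inequality fibers. -/
def isIneqMarkov {r n : ℕ} (D : Matrix (Fin r) (Fin n) ℤ) (L : Set (Fin n → ℤ))
    (G : Set (Fin n → ℤ)) : Prop :=
  ∀ (c : Fin r → ℤ) (v : Fin n → ℤ), connects G (ineqFiber D L v c)

/-- The lattice fiber `{w ∈ ℕʳ : w - b ∈ Lat}`. -/
def latFiber {r : ℕ} (Lat : Set (Fin r → ℤ)) (b : Fin r → ℤ) : Set (Fin r → ℤ) :=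
  {w | 0 ≤ w ∧ w - b ∈ Lat}

/-- `G` is a Markov basis of the lattice `Lat ⊆ ℤʳ`. -/
def isLatMarkov {r : ℕ} (Lat : Set (Fin r → ℤ)) (G : Set (Fin r → ℤ)) : Prop :=
  ∀ b : Fin r → ℤ, connects G (latFiber Lat b)

/-!
`w ↦ D w + b` maps the inequality fiber `{u ∈ ℒ : D u ≥ -b}` onto the lattice fiber
`{w ≥ 0 : w ∈ ℤD̃ + b}`, and it sends a move `g` between two points to the move `D g`
between their images. Hence the images of paths along `±𝒢` are paths along `±D(𝒢)`.
-/

open Set Matrix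

section Transport

variable {ι κ : Type*}

theorem mstep_map {F M : Set (ι → ℤ)} {F' : Set (κ → ℤ)} (A : (ι → ℤ) →+ (κ → ℤ))
    (c : κ → ℤ) (hmaps : MapsTo (fun w => A w + c) F F') {u v : ι → ℤ}
    (h : mstep F M u v) : mstep F' (A '' M) (A u + c) (A v + c) := by
  obtain ⟨hu, hv, hmove⟩ := h
  refine ⟨hmaps hu, hmaps hv, ?_⟩
  simp only [add_sub_add_right_eq_sub, ← map_sub]
  exact hmove.imp (mem_image_of_mem A) (mem_image_of_mem A)

theorem connects_image {F M : Set (ι → ℤ)} {F' : Set (κ → ℤ)} (A : (ι → ℤ) →+ (κ → ℤ))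
    (c : κ → ℤ) (hM : connects M F) (hmaps : MapsTo (fun w => A w + c) F F')
    (hsurj : SurjOn (fun w => A w + c) F F') : connects (A '' M) F' := by
  intro u' hu' v' hv'
  obtain ⟨u, hu, rfl⟩ := hsurj hu'
  obtain ⟨v, hv, rfl⟩ := hsurj hv'
  exact (hM u hu v hv).lift (fun w => A w + c) fun _ _ => mstep_map A c hmaps

end Transport

section Fibers

variable {r n t : ℕ} (D : Matrix (Fin r) (Fin n) ℤ) (L : Matrix (Fin n) (Fin t) ℤ)
  (b : Fin r → ℤ)

theorem mapsTo_ineqFiber_latFiber :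
    MapsTo (fun w => D *ᵥ w + b) (ineqFiber D (range L.mulVec) 0 (-b))
      (latFiber (range (D * L).mulVec) b) := by
  rintro w ⟨⟨z, hz⟩, hw⟩
  rw [sub_zero] at hz
  subst hz
  refine ⟨fun i => ?_, z, ?_⟩
  · simpa [neg_le_iff_add_nonneg] using hw i
  · simp [mulVec_mulVec]

theorem surjOn_ineqFiber_latFiber :
    SurjOn (fun w => D *ᵥ w + b) (ineqFiber D (range L.mulVec) 0 (-b))
      (latFiber (range (D * L).mulVec) b) := by
  rintro w ⟨hw, x, hx⟩
  have hDLx : D *ᵥ (L *ᵥ x) = w - b := by rw [mulVec_mulVec, hx]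
  refine ⟨L *ᵥ x, ⟨⟨x, by simp⟩, ?_⟩, ?_⟩
  · rw [hDLx, neg_le_sub_iff_le_add, le_add_iff_nonneg_left]
    exact hw
  · simp [hDLx]

end Fibers

theorem stmt_3_general (r n t : ℕ) (D : Matrix (Fin r) (Fin n) ℤ) (L : Matrix (Fin n) (Fin t) ℤ)
    (G : Set (Fin n → ℤ))
    (hMB : isIneqMarkov D (Set.range L.mulVec) G) :
    isLatMarkov (Set.range (D * L).mulVec) (D.mulVec '' G) := fun b =>
  connects_image D.mulVecLin.toAddMonoidHom b (hMB (-b) 0)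
    (mapsTo_ineqFiber_latFiber D L b) (surjOn_ineqFiber_latFiber D L b)

/-- Lemma 2.6(1): if `𝒢` is an `(ℒ,D)`-Markov basis, where `ℒ` is the
lattice spanned by the columns of `L` and `D̃ = D L` has rank `t`, then `D(𝒢)` is a
Markov basis of the lattice `ℤD̃` spanned by the columns of `D̃`. -/
theorem stmt_3 (r n t : ℕ) (D : Matrix (Fin r) (Fin n) ℤ) (L : Matrix (Fin n) (Fin t) ℤ)
    (hrank : (D * L).rank = t)
    (G : Set (Fin n → ℤ)) (hG : G ⊆ Set.range L.mulVec)
    (hMB : isIneqMarkov D (Set.range L.mulVec) G) :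
    isLatMarkov (Set.range (D * L).mulVec) (D.mulVec '' G) :=
  stmt_3_general r n t D L G hMB

end Stmt3
end

section
/- Let D ∈ ℤ^{r×n}, ℒ ⊆ ℤⁿ a lattice with basis the columns of L ∈ ℤ^{n×t}, and suppose D̃ = DL has rank t. If 𝒢' is a Markov basis of the lattice ℤD̃ ⊆ ℤʳ, then the set D⁻¹(𝒢') ∩ ℒ = {m ∈ ℒ : Dm ∈ 𝒢'} is an (ℒ, D)-Markov basis. -/
namespace Stmt4

/-- Undirected move step within a fiber `F` using moves from `±M`. -/
def mstep {ι : Type*} (F M : Set (ι → ℤ)) (u v : ι → ℤ) : Prop :=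
  u ∈ F ∧ v ∈ F ∧ (v - u ∈ M ∨ u - v ∈ M)

/-- `M` connects the set `F`. -/
def connects {ι : Type*} (M F : Set (ι → ℤ)) : Prop :=
  ∀ u ∈ F, ∀ v ∈ F, Relation.ReflTransGen (mstep F M) u v

/-- The inequality fiber `{u ∈ ℒ + v : D u ≥ c}`. -/
def ineqFiber {r n : ℕ} (D : Matrix (Fin r) (Fin n) ℤ) (L : Set (Fin n → ℤ))
    (v : Fin n → ℤ) (c : Fin r → ℤ) : Set (Fin n → ℤ) :=
  {u | u - v ∈ L ∧ c ≤ D.mulVec u}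

/-- `G` is an `(ℒ,D)`-Markov basis: it connects all inequality fibers. -/
def isIneqMarkov {r n : ℕ} (D : Matrix (Fin r) (Fin n) ℤ) (L : Set (Fin n → ℤ))
    (G : Set (Fin n → ℤ)) : Prop :=
  ∀ (c : Fin r → ℤ) (v : Fin n → ℤ), connects G (ineqFiber D L v c)

/-- The lattice fiber `{w ∈ ℕʳ : w - b ∈ Lat}`. -/
def latFiber {r : ℕ} (Lat : Set (Fin r → ℤ)) (b : Fin r → ℤ) : Set (Fin r → ℤ) :=
  {w | 0 ≤ w ∧ w - b ∈ Lat}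

/-- `G` is a Markov basis of the lattice `Lat ⊆ ℤʳ`. -/
def isLatMarkov {r : ℕ} (Lat : Set (Fin r → ℤ)) (G : Set (Fin r → ℤ)) : Prop :=
  ∀ b : Fin r → ℤ, connects G (latFiber Lat b)

/-! The map `u ↦ D u - c` sends the inequality fiber `{u ∈ ℒ + v : D u ≥ c}` into the fiber of
the lattice `ℤD̃` at `D v - c`, injectively because `D̃ = D L` has full column rank. A move
`g ∈ 𝒢' ⊆ ℤD̃` out of the image of `u` lifts to the move `m ∈ ℒ` with `D m = g` out of `u`, so
every `𝒢'`-path between images lifts to a path starting at `u` whose end has the same image as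
the target, hence is the target. -/

open Matrix Set Relation

theorem _root_.Matrix.mulVec_injective_of_rank_eq_card {R m n : Type*} [CommRing R] [IsDomain R]
    [Fintype m] [Fintype n] {A : Matrix m n R} (h : A.rank = Fintype.card n) :
    Function.Injective A.mulVec := by
  have hrange : Module.rank R (LinearMap.range A.mulVecLin) = Fintype.card n := by
    rw [← Module.finrank_eq_rank]
    exact_mod_cast h
  have hnullity := A.mulVecLin.lift_rank_range_add_rank_ker
  rw [hrange, rank_fun'] at hnullity
  simp only [Cardinal.lift_natCast] at hnullity
  have hker : Module.rank R (LinearMap.ker A.mulVecLin) = 0 := by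
    rw [← Cardinal.lift_eq_zero]
    exact Cardinal.eq_of_add_eq_add_left (by rw [hnullity, add_zero]) Cardinal.natCast_lt_aleph0
  exact LinearMap.ker_eq_bot.mp (Submodule.rank_eq_zero.mp hker)

theorem connects_of_injOn_of_lift {ι κ : Type*} {F G : Set (ι → ℤ)} {F' G' : Set (κ → ℤ)}
    (φ : (ι → ℤ) → κ → ℤ) (hmaps : MapsTo φ F F') (hinj : InjOn φ F)
    (hlift : ∀ z ∈ F, ∀ w, mstep F' G' (φ z) w → ∃ z', φ z' = w ∧ mstep F G z z')
    (hconn : connects G' F') : connects G F := by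
  intro u hu u' hu'
  have lift_path : ∀ w, ReflTransGen (mstep F' G') (φ u) w →
      ∃ z ∈ F, φ z = w ∧ ReflTransGen (mstep F G) u z := by
    intro w hw
    induction hw with
    | refl => exact ⟨u, hu, rfl, .refl⟩
    | tail _ hstep ih =>
      obtain ⟨z, hz, rfl, hpath⟩ := ih
      obtain ⟨z', rfl, hzz'⟩ := hlift z hz _ hstep
      exact ⟨z', hzz'.2.1, rfl, hpath.tail hzz'⟩
  obtain ⟨z, hz, hzu', hpath⟩ := lift_path _ (hconn _ (hmaps hu) _ (hmaps hu'))
  rwa [hinj hz hu' hzu'] at hpath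

section InequalityFiber

variable {r n t : ℕ} {D : Matrix (Fin r) (Fin n) ℤ} {L : Matrix (Fin n) (Fin t) ℤ}
  {v z : Fin n → ℤ} {c : Fin r → ℤ}

theorem mulVec_sub_mem_latFiber (hz : z ∈ ineqFiber D (Set.range L.mulVec) v c) :
    D *ᵥ z - c ∈ latFiber (Set.range (D * L).mulVec) (D *ᵥ v - c) := by
  obtain ⟨⟨x, hx⟩, hc⟩ := hz
  refine ⟨sub_nonneg.mpr hc, x, ?_⟩
  rw [← mulVec_mulVec, hx, mulVec_sub]
  abel

theorem injOn_mulVec_sub_ineqFiber (hinj : Function.Injective (D * L).mulVec) :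
    InjOn (fun u => D *ᵥ u - c) (ineqFiber D (Set.range L.mulVec) v c) := by
  rintro u ⟨⟨x, hx⟩, -⟩ u' ⟨⟨x', hx'⟩, -⟩ h
  have hD : D *ᵥ u = D *ᵥ u' := sub_left_injective h
  have hxx' : x = x' := hinj <| by rw [← mulVec_mulVec, ← mulVec_mulVec, hx, hx', mulVec_sub,
    mulVec_sub, hD]
  rw [← sub_left_inj (a := v), ← hx, ← hx', hxx']

theorem add_mulVec_mem_ineqFiber (hz : z ∈ ineqFiber D (Set.range L.mulVec) v c)
    {w : Fin r → ℤ} (hw : 0 ≤ w) {x : Fin t → ℤ} (hx : (D * L) *ᵥ x = w - (D *ᵥ z - c)) :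
    z + L *ᵥ x ∈ ineqFiber D (Set.range L.mulVec) v c ∧ D *ᵥ (z + L *ᵥ x) - c = w := by
  have hD : D *ᵥ (z + L *ᵥ x) - c = w := by
    rw [mulVec_add, mulVec_mulVec, hx]
    abel
  obtain ⟨⟨y, hy⟩, -⟩ := hz
  refine ⟨⟨⟨y + x, ?_⟩, sub_nonneg.mp (hD ▸ hw)⟩, hD⟩
  rw [mulVec_add, hy]
  abel

theorem exists_mstep_ineqFiber_of_mstep_latFiber {G' : Set (Fin r → ℤ)}
    (hG' : G' ⊆ Set.range (D * L).mulVec) (hz : z ∈ ineqFiber D (Set.range L.mulVec) v c)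
    {w : Fin r → ℤ}
    (hstep : mstep (latFiber (Set.range (D * L).mulVec) (D *ᵥ v - c)) G' (D *ᵥ z - c) w) :
    ∃ z', D *ᵥ z' - c = w ∧ mstep (ineqFiber D (Set.range L.mulVec) v c)
      {m | m ∈ Set.range L.mulVec ∧ D.mulVec m ∈ G'} z z' := by
  obtain ⟨-, hw, hmove⟩ := hstep
  rcases hmove with hfwd | hbwd
  · obtain ⟨x, hx⟩ := hG' hfwd
    obtain ⟨hz', hDz'⟩ := add_mulVec_mem_ineqFiber hz hw.1 hx
    refine ⟨_, hDz', hz, hz', Or.inl ?_⟩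
    rw [add_sub_cancel_left]
    exact ⟨⟨x, rfl⟩, by rwa [mulVec_mulVec, hx]⟩
  · obtain ⟨x, hx⟩ := hG' hbwd
    obtain ⟨hz', hDz'⟩ :=
      add_mulVec_mem_ineqFiber hz hw.1 (x := -x) (by rw [mulVec_neg, hx, neg_sub])
    refine ⟨_, hDz', hz, hz', Or.inr ?_⟩
    rw [mulVec_neg, ← sub_eq_add_neg, sub_sub_cancel]
    exact ⟨⟨x, rfl⟩, by rwa [mulVec_mulVec, hx]⟩

end InequalityFiber

/-- Lemma 2.6(2): if `𝒢'` is a Markov basis of the lattice `ℤD̃`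
(`D̃ = D L` of rank `t`), then `D⁻¹(𝒢') ∩ ℒ = {m ∈ ℒ : D m ∈ 𝒢'}` is an
`(ℒ,D)`-Markov basis, where `ℒ` is the lattice spanned by the columns of `L`. -/
theorem stmt_4 (r n t : ℕ) (D : Matrix (Fin r) (Fin n) ℤ) (L : Matrix (Fin n) (Fin t) ℤ)
    (hrank : (D * L).rank = t)
    (G' : Set (Fin r → ℤ)) (hG' : G' ⊆ Set.range (D * L).mulVec)
    (hMB : isLatMarkov (Set.range (D * L).mulVec) G') :
    isIneqMarkov D (Set.range L.mulVec)
      {m | m ∈ Set.range L.mulVec ∧ D.mulVec m ∈ G'} := by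
  have hinj : Function.Injective (D * L).mulVec :=
    mulVec_injective_of_rank_eq_card (by rwa [Fintype.card_fin])
  intro c v
  exact connects_of_injOn_of_lift (fun u => D *ᵥ u - c) (fun _ => mulVec_sub_mem_latFiber)
    (injOn_mulVec_sub_ineqFiber hinj)
    (fun _ hz _ => exists_mstep_ineqFiber_of_mstep_latFiber hG' hz) (hMB _)

end Stmt4
end

section
/- Let ℒ ⊆ ℤⁿ be a lattice and ⪰ an additive preorder on ℤⁿ. If 𝒢 ⊆ ℒ is a ⪰-Gröbner basis of ℒ and v, v₁, v₂ ∈ 𝒢 ∖ {0} satisfy v = v₁ + v₂ with v₁ and v₂ sign-consistent (v₁ᵢ·v₂ᵢ ≥ 0 for all i), then 𝒢 ∖ {v} is also a ⪰-Gröbner basis of ℒ. -/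
/-! A move `a → a ± v` inside a fiber can be replaced by the two moves `±v₁`, `±v₂`: by
sign-consistency the intermediate point `a ± v₁` stays nonnegative, hence in the fiber. This
keeps every fiber connected without `v`.

For the sinks, let `u` be a sink for `𝒢 ∖ {v}` and let `z`, reachable from `u`, have an upward
move `z → z + v`. One of `v₁`, `v₂` is `⪰ 0` and so gives an upward step out of `z`; as `u` is a
sink, that step leads back to `z`, forcing this summand to be `≈ 0`, and then the other summand is
`⪰ 0` too. So `z → z + v₁ → z + v` is an upward path avoiding `v`: everything reachable from `u`
with `𝒢` is reachable without `v`, and the sinks and their properties carry over. -/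

namespace Stmt5

def isAddPreorder {n : ℕ} (R : (Fin n → ℤ) → (Fin n → ℤ) → Prop) : Prop :=
  (∀ u, R u u) ∧ (∀ u v w, R u v → R v w → R u w) ∧
  (∀ u v, R u v ∨ R v u) ∧ (∀ u v w, R u v → R (u + w) (v + w))

def dstep {n : ℕ} (F M : Set (Fin n → ℤ)) (R : (Fin n → ℤ) → (Fin n → ℤ) → Prop)
    (u v : Fin n → ℤ) : Prop :=
  u ∈ F ∧ v ∈ F ∧ (v - u ∈ M ∨ u - v ∈ M) ∧ R u v

def mutReach {n : ℕ} (F M : Set (Fin n → ℤ)) (R : (Fin n → ℤ) → (Fin n → ℤ) → Prop)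
    (u v : Fin n → ℤ) : Prop :=
  Relation.ReflTransGen (dstep F M R) u v ∧ Relation.ReflTransGen (dstep F M R) v u

def isSink {n : ℕ} (F M : Set (Fin n → ℤ)) (R : (Fin n → ℤ) → (Fin n → ℤ) → Prop)
    (u : Fin n → ℤ) : Prop :=
  u ∈ F ∧ ∀ v, Relation.ReflTransGen (dstep F M R) u v →
    Relation.ReflTransGen (dstep F M R) v u

def weakConn {n : ℕ} (F M : Set (Fin n → ℤ)) (R : (Fin n → ℤ) → (Fin n → ℤ) → Prop) : Prop :=
  ∀ u ∈ F, ∀ v ∈ F,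
    Relation.ReflTransGen (fun a b => dstep F M R a b ∨ dstep F M R b a) u v

def isGroebner {n : ℕ} (Fam : Set (Set (Fin n → ℤ))) (M : Set (Fin n → ℤ))
    (R : (Fin n → ℤ) → (Fin n → ℤ) → Prop) : Prop :=
  ∀ F ∈ Fam, weakConn F M R ∧
    (∀ u v, isSink F M R u → isSink F M R v → mutReach F M R u v) ∧
    (∀ u, isSink F M R u → ∀ v ∈ F, R v u)

/-- The family of all fibers `F^lat(ℒ,u) = {w ∈ ℕⁿ : w - u ∈ ℒ}` of a lattice `ℒ`. -/
def latFam {n : ℕ} (L : AddSubgroup (Fin n → ℤ)) : Set (Set (Fin n → ℤ)) :=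
  {F | ∃ u : Fin n → ℤ, F = {w | 0 ≤ w ∧ w - u ∈ L}}

open Relation

variable {n : ℕ} {R : (Fin n → ℤ) → (Fin n → ℤ) → Prop} {F M G : Set (Fin n → ℤ)}
  {a b u z z' v v₁ v₂ w₁ w₂ : Fin n → ℤ}

theorem isAddPreorder.trans (hR : isAddPreorder R) : R a b → R b z → R a z :=
  hR.2.1 a b z

theorem isAddPreorder.total (hR : isAddPreorder R) (a b : Fin n → ℤ) : R a b ∨ R b a :=
  hR.2.2.1 a b

theorem isAddPreorder.add_left_iff (hR : isAddPreorder R) : R (z + a) (z + b) ↔ R a b := by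
  refine ⟨fun h => ?_, fun h => ?_⟩
  · simpa using hR.2.2.2 _ _ (-z) h
  · simpa [add_comm z] using hR.2.2.2 _ _ z h

theorem isAddPreorder.rel_self_add_iff (hR : isAddPreorder R) : R z (z + a) ↔ R 0 a := by
  simpa using hR.add_left_iff (z := z) (a := 0) (b := a)

theorem isAddPreorder.self_add_rel_iff (hR : isAddPreorder R) : R (z + a) z ↔ R a 0 := by
  simpa using hR.add_left_iff (z := z) (a := a) (b := 0)

theorem isAddPreorder.zero_rel_neg_iff (hR : isAddPreorder R) : R 0 (-a) ↔ R a 0 := by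
  simpa using (hR.add_left_iff (z := a) (a := 0) (b := -a)).symm

theorem add_nonneg_of_mul_nonneg {α : Type*} [CommRing α] [LinearOrder α] [IsStrictOrderedRing α]
    {a b c : α} (ha : 0 ≤ a) (habc : 0 ≤ a + (b + c)) (hbc : 0 ≤ b * c) : 0 ≤ a + b := by
  rcases le_or_gt 0 b with hb | hb
  · linarith
  · linarith [nonpos_of_mul_nonneg_right hbc hb]

theorem add_mem_of_mem_latFam {L : AddSubgroup (Fin n → ℤ)} (hF : F ∈ latFam L) (hw₁ : w₁ ∈ L)
    (hw : ∀ i, 0 ≤ w₁ i * w₂ i) (ha : a ∈ F) (haw : a + (w₁ + w₂) ∈ F) : a + w₁ ∈ F := by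
  obtain ⟨u₀, rfl⟩ := hF
  refine ⟨fun i => add_nonneg_of_mul_nonneg (ha.1 i) (haw.1 i) (hw i), ?_⟩
  simpa [add_sub_right_comm] using add_mem ha.2 hw₁

theorem dstep.mono {M' : Set (Fin n → ℤ)} (h : M ⊆ M') (hab : dstep F M R a b) :
    dstep F M' R a b :=
  ⟨hab.1, hab.2.1, hab.2.2.1.imp (@h _) (@h _), hab.2.2.2⟩

theorem rel_of_reflTransGen (hR : isAddPreorder R) (h : ReflTransGen (dstep F M R) a b) :
    R a b := by
  induction h with
  | refl => exact hR.1 a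
  | tail _ hbc ih => exact hR.trans ih hbc.2.2.2

theorem dstep_add (hR : isAddPreorder R) (hz : z ∈ F) (hzw : z + w₁ ∈ F)
    (hw₁ : w₁ ∈ M ∨ -w₁ ∈ M) (h0w₁ : R 0 w₁) : dstep F M R z (z + w₁) :=
  ⟨hz, hzw, by simpa using hw₁, hR.rel_self_add_iff.2 h0w₁⟩

theorem symmGen_dstep (hR : isAddPreorder R) (ha : a ∈ F) (hb : b ∈ F)
    (hab : b - a ∈ M ∨ a - b ∈ M) : SymmGen (dstep F M R) a b :=
  (hR.total a b).imp (fun h => ⟨ha, hb, hab, h⟩) (fun h => ⟨hb, ha, hab.symm, h⟩)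

theorem reflTransGen_add_of_isSink (hR : isAddPreorder R) (hu : isSink F M R u)
    (huz : ReflTransGen (dstep F M R) u z) (hz : z ∈ F) (hw₁ : w₁ ∈ M ∨ -w₁ ∈ M)
    (hw₂ : w₂ ∈ M ∨ -w₂ ∈ M) (hz₁ : z + w₁ ∈ F) (hz₂ : z + w₂ ∈ F)
    (hz₁₂ : z + (w₁ + w₂) ∈ F) (h0 : R 0 (w₁ + w₂)) :
    ReflTransGen (dstep F M R) u (z + (w₁ + w₂)) := by
  wlog h₂ : R 0 w₂ generalizing w₁ w₂
  · have h₁ : R 0 w₁ :=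
      hR.trans h0 (hR.self_add_rel_iff.2 ((hR.total 0 w₂).resolve_left h₂))
    rw [add_comm w₁ w₂] at h0 hz₁₂ ⊢
    exact this hw₂ hw₁ hz₂ hz₁ hz₁₂ h0 h₁
  have hback : R (z + w₂) z :=
    hR.trans (rel_of_reflTransGen hR (hu.2 _ (huz.tail (dstep_add hR hz hz₂ hw₂ h₂))))
      (rel_of_reflTransGen hR huz)
  have h₁ : R 0 w₁ := hR.trans h0 (hR.self_add_rel_iff.2 (hR.self_add_rel_iff.1 hback))
  have step₂ : dstep F M R (z + w₁) (z + (w₁ + w₂)) := by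
    rw [← add_assoc] at hz₁₂ ⊢
    exact dstep_add hR hz₁ hz₁₂ hw₂ h₂
  exact (huz.tail (dstep_add hR hz hz₁ hw₁ h₁)).tail step₂

theorem eq_add_or_eq_add_of_mem_insert (hGM : G ⊆ insert v M) (hG : z' - z ∈ G ∨ z - z' ∈ G)
    (hM : ¬(z' - z ∈ M ∨ z - z' ∈ M)) : z' = z + v ∨ z = z' + v := by
  rcases hG with h | h <;> rcases hGM h with h | h
  · exact .inl (by rw [← h]; abel)
  · exact absurd (.inl h) hM
  · exact .inr (by rw [← h]; abel)
  · exact absurd (.inr h) hM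

theorem reflTransGen_of_isSink (hR : isAddPreorder R) (hGM : G ⊆ insert v M) (hv : v = v₁ + v₂)
    (hv₁ : v₁ ∈ M) (hv₂ : v₂ ∈ M) (hF : ∀ a ∈ F, a + v ∈ F → a + v₁ ∈ F ∧ a + v₂ ∈ F)
    (hu : isSink F M R u) (huz : ReflTransGen (dstep F G R) u z) :
    ReflTransGen (dstep F M R) u z := by
  induction huz with
  | refl => rfl
  | @tail z z' _ hzz' ih =>
    obtain ⟨hz, hz', hG, hr⟩ := hzz'
    by_cases hM : z' - z ∈ M ∨ z - z' ∈ M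
    · exact ih.tail ⟨hz, hz', hM, hr⟩
    rcases eq_add_or_eq_add_of_mem_insert hGM hG hM with rfl | rfl
    · obtain ⟨hz₁, hz₂⟩ := hF z hz hz'
      subst hv
      exact reflTransGen_add_of_isSink hR hu ih hz (.inl hv₁) (.inl hv₂) hz₁ hz₂ hz'
        (hR.rel_self_add_iff.1 hr)
    · obtain ⟨hz₁, hz₂⟩ := hF z' hz' hz
      subst hv
      have key := reflTransGen_add_of_isSink hR hu ih hz (w₁ := -v₁) (w₂ := -v₂)
        (.inr (by simpa)) (.inr (by simpa)) (by convert hz₂ using 1; abel)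
        (by convert hz₁ using 1; abel) (by convert hz' using 1; abel)
        (by rw [← neg_add]; exact hR.zero_rel_neg_iff.2 (hR.self_add_rel_iff.1 hr))
      convert key using 1; abel

theorem isSink_of_isSink (hR : isAddPreorder R) (hMG : M ⊆ G) (hGM : G ⊆ insert v M)
    (hv : v = v₁ + v₂) (hv₁ : v₁ ∈ M) (hv₂ : v₂ ∈ M)
    (hF : ∀ a ∈ F, a + v ∈ F → a + v₁ ∈ F ∧ a + v₂ ∈ F) (hu : isSink F M R u) :
    isSink F G R u :=
  ⟨hu.1, fun _ huz => ReflTransGen.mono (fun _ _ => dstep.mono hMG) _ _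
    (hu.2 _ (reflTransGen_of_isSink hR hGM hv hv₁ hv₂ hF hu huz))⟩

theorem reflTransGen_symmGen_add (hR : isAddPreorder R) (hv : v = v₁ + v₂) (hv₁ : v₁ ∈ M)
    (hv₂ : v₂ ∈ M) (ha : a ∈ F) (hav₁ : a + v₁ ∈ F) (hav : a + v ∈ F) :
    ReflTransGen (SymmGen (dstep F M R)) a (a + v) :=
  .head (symmGen_dstep hR ha hav₁ (.inl (by simpa)))
    (.single (symmGen_dstep hR hav₁ hav (.inl (by subst hv; simpa [← add_assoc]))))

theorem weakConn_of_weakConn (hR : isAddPreorder R) (hGM : G ⊆ insert v M) (hv : v = v₁ + v₂)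
    (hv₁ : v₁ ∈ M) (hv₂ : v₂ ∈ M) (hF : ∀ a ∈ F, a + v ∈ F → a + v₁ ∈ F ∧ a + v₂ ∈ F)
    (hG : weakConn F G R) : weakConn F M R := by
  intro a ha b hb
  show ReflTransGen (SymmGen (dstep F M R)) a b
  refine reflTransGen_closed (fun x y hxy => ?_) a b (hG a ha b hb)
  obtain ⟨hx, hy, hxy⟩ : x ∈ F ∧ y ∈ F ∧ (y - x ∈ G ∨ x - y ∈ G) :=
    hxy.elim (fun h => ⟨h.1, h.2.1, h.2.2.1⟩) (fun h => ⟨h.2.1, h.1, h.2.2.1.symm⟩)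
  by_cases hM : y - x ∈ M ∨ x - y ∈ M
  · exact .single (symmGen_dstep hR hx hy hM)
  rcases eq_add_or_eq_add_of_mem_insert hGM hxy hM with rfl | rfl
  · exact reflTransGen_symmGen_add hR hv hv₁ hv₂ hx (hF x hx hy).1 hy
  · exact symm (reflTransGen_symmGen_add hR hv hv₁ hv₂ hy (hF y hy hx).1 hx)

theorem isGroebner_of_subset_insert {Fam : Set (Set (Fin n → ℤ))} (hR : isAddPreorder R)
    (hMG : M ⊆ G) (hGM : G ⊆ insert v M) (hv : v = v₁ + v₂) (hv₁ : v₁ ∈ M) (hv₂ : v₂ ∈ M)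
    (hFam : ∀ F ∈ Fam, ∀ a ∈ F, a + v ∈ F → a + v₁ ∈ F ∧ a + v₂ ∈ F)
    (hG : isGroebner Fam G R) : isGroebner Fam M R := by
  intro F hF
  obtain ⟨hconn, hmut, hmax⟩ := hG F hF
  have hsink {u} (hu : isSink F M R u) : isSink F G R u :=
    isSink_of_isSink hR hMG hGM hv hv₁ hv₂ (hFam F hF) hu
  refine ⟨weakConn_of_weakConn hR hGM hv hv₁ hv₂ (hFam F hF) hconn, fun u w hu hw => ?_,
    fun u hu => hmax u (hsink hu)⟩
  obtain ⟨huw, hwu⟩ := hmut u w (hsink hu) (hsink hw)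
  exact ⟨reflTransGen_of_isSink hR hGM hv hv₁ hv₂ (hFam F hF) hu huw,
    reflTransGen_of_isSink hR hGM hv hv₁ hv₂ (hFam F hF) hw hwu⟩

theorem stmt_5_general (n : ℕ) (L : AddSubgroup (Fin n → ℤ))
    (R : (Fin n → ℤ) → (Fin n → ℤ) → Prop) (hR : isAddPreorder R)
    (G : Set (Fin n → ℤ)) (hGL : ∀ g ∈ G, g ∈ L)
    (hGB : isGroebner (latFam L) G R)
    (v v₁ v₂ : Fin n → ℤ) (hv₁ : v₁ ∈ G) (hv₂ : v₂ ∈ G)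
    (hv₁0 : v₁ ≠ 0) (hv₂0 : v₂ ≠ 0)
    (hsum : v = v₁ + v₂) (hsc : ∀ i, 0 ≤ v₁ i * v₂ i) :
    isGroebner (latFam L) (G \ {v}) R := by
  have hv₁v : v₁ ≠ v := fun h => hv₂0 (by simpa [h] using hsum)
  have hv₂v : v₂ ≠ v := fun h => hv₁0 (by simpa [h, add_comm v₁] using hsum)
  refine isGroebner_of_subset_insert hR Set.sdiff_subset (Set.subset_insert_sdiff_singleton v G)
    hsum ⟨hv₁, hv₁v⟩ ⟨hv₂, hv₂v⟩ (fun F hF a ha hav => ?_) hGB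
  rw [hsum] at hav
  exact ⟨add_mem_of_mem_latFam hF (hGL v₁ hv₁) hsc ha hav,
    add_mem_of_mem_latFam hF (hGL v₂ hv₂) (fun i => (hsc i).trans_eq (mul_comm _ _)) ha
      (by rwa [add_comm v₂])⟩

/-- Lemma 2.8: if `v ∈ 𝒢` decomposes as a sign-consistent sum of two
other nonzero elements of `𝒢`, then `𝒢 \ {v}` is still a `⪰`-Gröbner basis. -/
theorem stmt_5 (n : ℕ) (L : AddSubgroup (Fin n → ℤ))
    (R : (Fin n → ℤ) → (Fin n → ℤ) → Prop) (hR : isAddPreorder R)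
    (G : Set (Fin n → ℤ)) (hGL : ∀ g ∈ G, g ∈ L)
    (hGB : isGroebner (latFam L) G R)
    (v v₁ v₂ : Fin n → ℤ) (hv : v ∈ G) (hv₁ : v₁ ∈ G) (hv₂ : v₂ ∈ G)
    (hv0 : v ≠ 0) (hv₁0 : v₁ ≠ 0) (hv₂0 : v₂ ≠ 0)
    (hsum : v = v₁ + v₂) (hsc : ∀ i, 0 ≤ v₁ i * v₂ i) :
    isGroebner (latFam L) (G \ {v}) R :=
  stmt_5_general n L R hR G hGL hGB v v₁ v₂ hv₁ hv₂ hv₁0 hv₂0 hsum hsc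

end Stmt5
end

section
/- Let ℒ ⊆ ℤⁿ be a lattice. The Graver basis of ℒ (the set of primitive elements of ℒ) is a ⪰-Gröbner basis of the family of fibers {w ∈ ℕⁿ : w − u ∈ ℒ} for every additive preorder ⪰ on ℤⁿ; in particular it is a Markov basis of ℒ. -/
namespace Stmt6

def isAddPreorder {n : ℕ} (R : (Fin n → ℤ) → (Fin n → ℤ) → Prop) : Prop :=
  (∀ u, R u u) ∧ (∀ u v w, R u v → R v w → R u w) ∧
  (∀ u v, R u v ∨ R v u) ∧ (∀ u v w, R u v → R (u + w) (v + w))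

def dstep {n : ℕ} (F M : Set (Fin n → ℤ)) (R : (Fin n → ℤ) → (Fin n → ℤ) → Prop)
    (u v : Fin n → ℤ) : Prop :=
  u ∈ F ∧ v ∈ F ∧ (v - u ∈ M ∨ u - v ∈ M) ∧ R u v

def mutReach {n : ℕ} (F M : Set (Fin n → ℤ)) (R : (Fin n → ℤ) → (Fin n → ℤ) → Prop)
    (u v : Fin n → ℤ) : Prop :=
  Relation.ReflTransGen (dstep F M R) u v ∧ Relation.ReflTransGen (dstep F M R) v u

def isSink {n : ℕ} (F M : Set (Fin n → ℤ)) (R : (Fin n → ℤ) → (Fin n → ℤ) → Prop)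
    (u : Fin n → ℤ) : Prop :=
  u ∈ F ∧ ∀ v, Relation.ReflTransGen (dstep F M R) u v →
    Relation.ReflTransGen (dstep F M R) v u

def weakConn {n : ℕ} (F M : Set (Fin n → ℤ)) (R : (Fin n → ℤ) → (Fin n → ℤ) → Prop) : Prop :=
  ∀ u ∈ F, ∀ v ∈ F,
    Relation.ReflTransGen (fun a b => dstep F M R a b ∨ dstep F M R b a) u v

def isGroebner {n : ℕ} (Fam : Set (Set (Fin n → ℤ))) (M : Set (Fin n → ℤ))
    (R : (Fin n → ℤ) → (Fin n → ℤ) → Prop) : Prop :=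
  ∀ F ∈ Fam, weakConn F M R ∧
    (∀ u v, isSink F M R u → isSink F M R v → mutReach F M R u v) ∧
    (∀ u, isSink F M R u → ∀ v ∈ F, R v u)

/-- The family of all fibers `F^lat(ℒ,u) = {w ∈ ℕⁿ : w - u ∈ ℒ}` of a lattice `ℒ`. -/
def latFam {n : ℕ} (L : AddSubgroup (Fin n → ℤ)) : Set (Set (Fin n → ℤ)) :=
  {F | ∃ u : Fin n → ℤ, F = {w | 0 ≤ w ∧ w - u ∈ L}}


/-- Undirected move step and connectivity. -/
def mstep {n : ℕ} (F M : Set (Fin n → ℤ)) (u v : Fin n → ℤ) : Prop :=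
  u ∈ F ∧ v ∈ F ∧ (v - u ∈ M ∨ u - v ∈ M)

def isMarkov {n : ℕ} (Fam : Set (Set (Fin n → ℤ))) (M : Set (Fin n → ℤ)) : Prop :=
  ∀ F ∈ Fam, ∀ u ∈ F, ∀ v ∈ F, Relation.ReflTransGen (mstep F M) u v

/-- An element of the lattice is primitive if it has no nontrivial conformal
(sign-consistent) decomposition within the lattice. -/
def isPrimitive {n : ℕ} (L : AddSubgroup (Fin n → ℤ)) (v : Fin n → ℤ) : Prop :=
  v ∈ L ∧ v ≠ 0 ∧ ∀ v₁ v₂ : Fin n → ℤ, v₁ ∈ L → v₂ ∈ L → v = v₁ + v₂ →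
    (∀ i, 0 ≤ v₁ i * v₂ i) → v₁ = 0 ∨ v₂ = 0

/-- The Graver basis: the set of primitive elements of `ℒ`. -/
def graver {n : ℕ} (L : AddSubgroup (Fin n → ℤ)) : Set (Fin n → ℤ) :=
  {v | isPrimitive L v}

/-! Two points `u, v` of a fiber differ by a lattice vector, which has a primitive conformal
summand `g`; conformality keeps `u + g` and `v - g` nonnegative, so induction on the `ℓ¹`-norm
of `v - u` connects `u` to `v` by Graver moves. For the Gröbner property, writing `a ⪯ b` for
`R a b`, run the same induction from a sink `s`: the move `s ↦ s + g` cannot go strictly up,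
so `g ⪯ 0` and `v ⪯ v - g ⪯ s`. Between two sinks `u, v` neither `u ↦ u + g` nor
`v ↦ v - g` can go strictly up, so `g ∼ 0` and `v ↦ v - g` is a reversible step to another
sink. -/

section SignConsistent

variable {ι : Type*}

def SignConsistent (a b : ι → ℤ) : Prop := ∀ i, 0 ≤ a i * b i

def oneNorm [Fintype ι] (d : ι → ℤ) : ℕ := ∑ i, (d i).natAbs

theorem oneNorm_pos [Fintype ι] {d : ι → ℤ} (h : d ≠ 0) : 0 < oneNorm d := by
  obtain ⟨i, hi⟩ := Function.ne_iff.1 h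
  exact Finset.sum_pos' (fun _ _ => Nat.zero_le _)
    ⟨i, Finset.mem_univ i, Int.natAbs_pos.2 hi⟩

theorem SignConsistent.symm {a b : ι → ℤ} (h : SignConsistent a b) :
    SignConsistent b a :=
  fun i => mul_comm (a i) (b i) ▸ h i

theorem SignConsistent.oneNorm_add [Fintype ι] {a b : ι → ℤ} (h : SignConsistent a b) :
    oneNorm (a + b) = oneNorm a + oneNorm b := by
  rw [oneNorm, oneNorm, oneNorm, ← Finset.sum_add_distrib]
  refine Finset.sum_congr rfl fun i _ => ?_
  rcases mul_nonneg_iff.1 (h i) with ⟨ha, hb⟩ | ⟨ha, hb⟩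
  exacts [Int.natAbs_add_of_nonneg ha hb, Int.natAbs_add_of_nonpos ha hb]

theorem SignConsistent.of_add {a b c : ι → ℤ} (hab : SignConsistent a b)
    (habc : SignConsistent (a + b) c) : SignConsistent a (b + c) := by
  intro i
  have h1 := hab i
  have h2 := habc i
  simp only [Pi.add_apply] at h2 ⊢
  rcases mul_nonneg_iff.1 h1 with ⟨ha, hb⟩ | ⟨ha, hb⟩ <;>
    rcases mul_nonneg_iff.1 h2 with ⟨hab, hc⟩ | ⟨hab, hc⟩ <;> nlinarith

theorem SignConsistent.add_nonneg {u a b : ι → ℤ} (h : SignConsistent a b)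
    (hu : 0 ≤ u) (huab : 0 ≤ u + a + b) : 0 ≤ u + a := by
  intro i
  have hi := huab i
  simp only [Pi.add_apply, Pi.zero_apply] at hi ⊢
  rcases mul_nonneg_iff.1 (h i) with ⟨ha, -⟩ | ⟨-, hb⟩
  · exact _root_.add_nonneg (hu i) ha
  · linarith

end SignConsistent

section Graver

variable {n : ℕ} {L : AddSubgroup (Fin n → ℤ)}

theorem exists_mem_graver_signConsistent {d : Fin n → ℤ} (hd : d ∈ L) (h0 : d ≠ 0) :
    ∃ g ∈ graver L, SignConsistent g (d - g) := by
  induction hk : oneNorm d using Nat.strong_induction_on generalizing d with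
  | _ k ih =>
    by_cases hprim : isPrimitive L d
    · exact ⟨d, hprim, fun i => by simp⟩
    obtain ⟨v₁, v₂, hv₁, hv₂, rfl, hsc, hne₁, hne₂⟩ : ∃ v₁ v₂, v₁ ∈ L ∧ v₂ ∈ L ∧ d = v₁ + v₂ ∧
        SignConsistent v₁ v₂ ∧ v₁ ≠ 0 ∧ v₂ ≠ 0 := by
      simpa [isPrimitive, hd, h0, SignConsistent] using hprim
    have hlt : oneNorm v₁ < k := by
      rw [← hk, hsc.oneNorm_add]
      exact Nat.lt_add_of_pos_right (oneNorm_pos hne₂)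
    obtain ⟨g, hg, hg₁⟩ := ih _ hlt hv₁ hne₁ rfl
    refine ⟨g, hg, ?_⟩
    have : v₁ + v₂ - g = v₁ - g + v₂ := by abel
    rw [this]
    exact hg₁.of_add (by simpa using hsc)

def fiber (L : AddSubgroup (Fin n → ℤ)) (w : Fin n → ℤ) : Set (Fin n → ℤ) :=
  {u | 0 ≤ u ∧ u - w ∈ L}

variable {w : Fin n → ℤ}

theorem exists_graver_step {u v : Fin n → ℤ} (hu : u ∈ fiber L w) (hv : v ∈ fiber L w)
    (huv : u ≠ v) : ∃ g ∈ graver L, u + g ∈ fiber L w ∧ v - g ∈ fiber L w ∧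
      oneNorm (v - g - u) < oneNorm (v - u) := by
  have hd : v - u ∈ L := by simpa using sub_mem hv.2 hu.2
  obtain ⟨g, hg, hsc⟩ := exists_mem_graver_signConsistent hd (sub_ne_zero.2 huv.symm)
  have hvgu : v - g - u = v - u - g := sub_right_comm v g u
  refine ⟨g, hg, ⟨hsc.add_nonneg hu.1 (by simpa using hv.1), ?_⟩,
    ⟨?_, ?_⟩, ?_⟩
  · simpa [add_sub_right_comm] using add_mem hu.2 hg.1
  · have hvg : u + (v - u - g) = v - g := by abel
    have h := hsc.symm.add_nonneg hu.1 (by rw [hvg, sub_add_cancel]; exact hv.1)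
    rwa [hvg] at h
  · simpa [sub_right_comm] using sub_mem hv.2 hg.1
  · rw [hvgu]
    calc oneNorm (v - u - g) < oneNorm g + oneNorm (v - u - g) :=
          Nat.lt_add_of_pos_left (oneNorm_pos hg.2.1)
      _ = oneNorm (v - u) := by rw [← hsc.oneNorm_add, add_sub_cancel]

theorem fiber_induction {P : (Fin n → ℤ) → (Fin n → ℤ) → Prop} (refl : ∀ u, P u u)
    (step : ∀ u v g, u ∈ fiber L w → v ∈ fiber L w → g ∈ graver L → u + g ∈ fiber L w →
      v - g ∈ fiber L w → P u (v - g) → P u v)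
    {u v : Fin n → ℤ} (hu : u ∈ fiber L w) (hv : v ∈ fiber L w) : P u v := by
  induction hk : oneNorm (v - u) using Nat.strong_induction_on generalizing v with
  | _ k ih =>
    by_cases huv : u = v
    · exact huv ▸ refl u
    obtain ⟨g, hg, hug, hvg, hlt⟩ := exists_graver_step hu hv huv
    exact step u v g hu hv hg hug hvg (ih _ (hk ▸ hlt) hvg rfl)

end Graver

section Preorder

variable {n : ℕ} {R : (Fin n → ℤ) → (Fin n → ℤ) → Prop}

theorem isAddPreorder.rel_iff_sub_rel_zero (hR : isAddPreorder R) {a b : Fin n → ℤ} :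
    R a b ↔ R (a - b) 0 :=
  ⟨fun h => by simpa [sub_eq_add_neg] using hR.2.2.2 a b (-b) h,
    fun h => by simpa using hR.2.2.2 _ _ b h⟩

theorem isAddPreorder.rel_iff_zero_rel_sub (hR : isAddPreorder R) {a b : Fin n → ℤ} :
    R a b ↔ R 0 (b - a) :=
  ⟨fun h => by simpa [sub_eq_add_neg] using hR.2.2.2 a b (-a) h,
    fun h => by simpa using hR.2.2.2 _ _ a h⟩

variable {F M : Set (Fin n → ℤ)}

theorem isAddPreorder.rel_of_reflTransGen (hR : isAddPreorder R) {a b : Fin n → ℤ}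
    (h : Relation.ReflTransGen (dstep F M R) a b) : R a b := by
  induction h with
  | refl => exact hR.1 a
  | tail _ hstep ih => exact hR.2.1 _ _ _ ih hstep.2.2.2

theorem mstep.symm {a b : Fin n → ℤ} (h : mstep F M a b) : mstep F M b a :=
  ⟨h.2.1, h.1, h.2.2.symm⟩

theorem isAddPreorder.dstep_or_dstep_of_mstep (hR : isAddPreorder R) {a b : Fin n → ℤ}
    (h : mstep F M a b) : dstep F M R a b ∨ dstep F M R b a :=
  (hR.2.2.1 a b).imp (fun hab => ⟨h.1, h.2.1, h.2.2, hab⟩)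
    (fun hba => ⟨h.2.1, h.1, h.2.2.symm, hba⟩)

theorem isSink.of_reflTransGen {s u : Fin n → ℤ} (hs : isSink F M R s)
    (h : Relation.ReflTransGen (dstep F M R) s u) : isSink F M R u := by
  refine ⟨?_, fun v huv => (hs.2 v (h.trans huv)).trans h⟩
  rcases h.cases_tail with rfl | ⟨_, -, hstep⟩
  exacts [hs.1, hstep.2.1]

theorem isSink.rel_of_mstep (hR : isAddPreorder R) {s v : Fin n → ℤ} (hs : isSink F M R s)
    (h : mstep F M s v) : R v s :=
  (hR.2.2.1 v s).elim id fun hsv =>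
    hR.rel_of_reflTransGen (hs.2 v (.single ⟨h.1, h.2.1, h.2.2, hsv⟩))

theorem isSink.rel_zero_of_add_mem (hR : isAddPreorder R) {s g : Fin n → ℤ}
    (hs : isSink F M R s) (hg : g ∈ M) (hsg : s + g ∈ F) : R g 0 := by
  simpa using hR.rel_iff_sub_rel_zero.1 (hs.rel_of_mstep hR ⟨hs.1, hsg, Or.inl (by simpa using hg)⟩)

theorem isSink.zero_rel_of_sub_mem (hR : isAddPreorder R) {s g : Fin n → ℤ}
    (hs : isSink F M R s) (hg : g ∈ M) (hsg : s - g ∈ F) : R 0 g := by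
  simpa using hR.rel_iff_zero_rel_sub.1 (hs.rel_of_mstep hR ⟨hs.1, hsg, Or.inr (by simpa using hg)⟩)

end Preorder

section GraverFiber

variable {n : ℕ} {L : AddSubgroup (Fin n → ℤ)} {w : Fin n → ℤ}

theorem reflTransGen_mstep_graver {u v : Fin n → ℤ} (hu : u ∈ fiber L w)
    (hv : v ∈ fiber L w) : Relation.ReflTransGen (mstep (fiber L w) (graver L)) u v :=
  fiber_induction (fun _ => .refl)
    (fun _ v g _ hv hg _ hvg ih => ih.tail ⟨hvg, hv, Or.inl (by simpa using hg)⟩) hu hv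

variable {R : (Fin n → ℤ) → (Fin n → ℤ) → Prop}

theorem weakConn_fiber_graver (hR : isAddPreorder R) : weakConn (fiber L w) (graver L) R :=
  fun _ hu _ hv =>
    Relation.ReflTransGen.mono (fun _ _ => hR.dstep_or_dstep_of_mstep) _ _
      (reflTransGen_mstep_graver hu hv)

theorem isSink.rel_of_mem_fiber (hR : isAddPreorder R) {s v : Fin n → ℤ}
    (hs : isSink (fiber L w) (graver L) R s) (hv : v ∈ fiber L w) : R v s :=
  fiber_induction (P := fun s v => isSink (fiber L w) (graver L) R s → R v s)
    (fun _ _ => hR.1 _)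
    (fun _ _ _ _ _ hg hsg _ ih hs => hR.2.1 _ _ _
      (hR.rel_iff_sub_rel_zero.2 (by simpa using hs.rel_zero_of_add_mem hR hg hsg)) (ih hs))
    hs.1 hv hs

theorem isSink.mutReach_of_isSink (hR : isAddPreorder R) {u v : Fin n → ℤ}
    (hu : isSink (fiber L w) (graver L) R u) (hv : isSink (fiber L w) (graver L) R v) :
    mutReach (fiber L w) (graver L) R u v :=
  fiber_induction (P := fun u v => isSink (fiber L w) (graver L) R u →
      isSink (fiber L w) (graver L) R v → mutReach (fiber L w) (graver L) R u v)
    (fun _ _ _ => ⟨.refl, .refl⟩)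
    (fun u v g _ hvF hg hug hvg ih hu hv => by
      have hg0 : R g 0 := hu.rel_zero_of_add_mem hR hg hug
      have h0g : R 0 g := hv.zero_rel_of_sub_mem hR hg hvg
      have hdown : dstep (fiber L w) (graver L) R v (v - g) :=
        ⟨hvF, hvg, Or.inr (by simpa using hg), hR.rel_iff_sub_rel_zero.2 (by simpa using hg0)⟩
      have hup : dstep (fiber L w) (graver L) R (v - g) v :=
        ⟨hvg, hvF, Or.inl (by simpa using hg), hR.rel_iff_zero_rel_sub.2 (by simpa using h0g)⟩
      obtain ⟨hto, hfrom⟩ := ih hu (hv.of_reflTransGen (.single hdown))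
      exact ⟨hto.tail hup, hfrom.head hdown⟩)
    hu.1 hv.1 hu hv

end GraverFiber

/-- the Graver basis of `ℒ` is a `⪰`-Gröbner basis of the family of
lattice fibers for every additive preorder `⪰` (fibers being finite, or well-ordered
by `⪰`); in particular it is a Markov basis of `ℒ`. -/
theorem stmt_6 (n : ℕ) (L : AddSubgroup (Fin n → ℤ)) :
    (∀ R : (Fin n → ℤ) → (Fin n → ℤ) → Prop, isAddPreorder R →
      (∀ u : Fin n → ℤ, ({w | 0 ≤ w ∧ w - u ∈ L} : Set (Fin n → ℤ)).Finite ∨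
        ({w | 0 ≤ w ∧ w - u ∈ L} : Set (Fin n → ℤ)).WellFoundedOn
          (fun a b => R b a ∧ ¬ R a b)) →
      isGroebner (latFam L) (graver L) R) ∧
    isMarkov (latFam L) (graver L) := by
  refine ⟨fun R hR _ => ?_, ?_⟩
  · rintro F ⟨w, rfl⟩
    exact ⟨weakConn_fiber_graver hR, fun _ _ hu hv => hu.mutReach_of_isSink hR hv,
      fun _ hs _ hv => hs.rel_of_mem_fiber hR hv⟩
  · rintro F ⟨w, rfl⟩ u hu v hv
    exact reflTransGen_mstep_graver hu hv

end Stmt6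
end

section
/- Let ℱ be a family of subsets of ℤⁿ, φ : ℤⁿ → ℤᵗ a linear map. Suppose a Markov basis ℳ₀ ∪ ℳ₁ is given where ℳ₀ connects every fiber F ∩ (u + ker φ) for F ∈ ℱ, u ∈ ℤⁿ, and ℳ₁ is an (ℱ, φ, ⪰₀)-lift of a Markov basis 𝒢 of φ(ℱ). Then ℳ₀ ∪ ℳ₁ is a Markov basis of ℱ, i.e., for every F ∈ ℱ the graph with vertex set F and edges {u,v} for u−v ∈ ±(ℳ₀ ∪ ℳ₁) is connected. -/
/-!
Two points of `F` with the same image under `φ` are joined inside their `φ`-fiber by `M₀`-moves.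
A `G`-move between images `φ w` and `φ u` of points of `F` is realised, up to such fiber paths,
by a single `M₁`-move supplied by the lift. Hence a `G`-path in `φ(F)` from `φ u` to `φ v` lifts,
move by move, to an `(M₀ ∪ M₁)`-path in `F` from `u` to `v`.
-/

namespace Stmt9

def mstep {ι : Type*} (F M : Set (ι → ℤ)) (u v : ι → ℤ) : Prop :=
  u ∈ F ∧ v ∈ F ∧ (v - u ∈ M ∨ u - v ∈ M)

def connects {ι : Type*} (M F : Set (ι → ℤ)) : Prop :=
  ∀ u ∈ F, ∀ v ∈ F, Relation.ReflTransGen (mstep F M) u v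

def isMarkov {ι : Type*} (Fam : Set (Set (ι → ℤ))) (M : Set (ι → ℤ)) : Prop :=
  ∀ F ∈ Fam, connects M F

/-- `M` is an `(ℱ, φ, ⪰₀)`-lift of `G` (the trivial preorder version). -/
def isLift0 {n t : ℕ} (Fam : Set (Set (Fin n → ℤ))) (φ : (Fin n → ℤ) →ₗ[ℤ] (Fin t → ℤ))
    (G : Set (Fin t → ℤ)) (M : Set (Fin n → ℤ)) : Prop :=
  ∀ F ∈ Fam, ∀ v ∈ F, ∀ v' ∈ F, φ (v - v') ∈ G →
    ∃ m₀ m : Fin n → ℤ, φ m₀ = 0 ∧ m ∈ M ∧ v + m₀ ∈ F ∧ v + m₀ + m ∈ F ∧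
      φ (v + m₀ + m) = φ v'

open Relation

theorem reflTransGen_of_reflTransGen_image {α β : Type*} {f : α → β} {F : Set α}
    {r : α → α → Prop} {s : β → β → Prop} (hs : ∀ b c, s b c → b ∈ f '' F)
    (hfib : ∀ x ∈ F, ∀ y ∈ F, f x = f y → ReflTransGen r x y)
    (hstep : ∀ x ∈ F, ∀ y ∈ F, s (f x) (f y) → ReflTransGen r x y)
    {x y : α} (hx : x ∈ F) (hy : y ∈ F) (h : ReflTransGen s (f x) (f y)) :
    ReflTransGen r x y := by
  suffices ∀ c, ReflTransGen s (f x) c → ∀ y ∈ F, f y = c → ReflTransGen r x y from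
    this _ h y hy rfl
  intro c hc
  induction hc with
  | refl => exact fun y hy hxy => hfib x hx y hy hxy.symm
  | @tail b c _ hbc ih =>
    intro y hy hyc
    obtain ⟨z, hz, rfl⟩ := hs b c hbc
    exact (ih z hz rfl).trans (hstep z hz y hy (hyc ▸ hbc))

section

variable {ι κ : Type*} {F : Set (ι → ℤ)} {M : Set (ι → ℤ)}

theorem mstep.mono {F' M' : Set (ι → ℤ)} (hF : F ⊆ F') (hM : M ⊆ M') {u v : ι → ℤ}
    (h : mstep F M u v) : mstep F' M' u v :=
  ⟨hF h.1, hF h.2.1, h.2.2.imp (@hM _) (@hM _)⟩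

instance : Std.Symm (mstep F M) where
  symm _ _ h := ⟨h.2.1, h.1, h.2.2.symm⟩

theorem reflTransGen_mstep_of_map_eq {φ : (ι → ℤ) →ₗ[ℤ] (κ → ℤ)}
    (hM : ∀ u, connects M (F ∩ {x | φ (x - u) = 0})) {x y : ι → ℤ} (hx : x ∈ F) (hy : y ∈ F)
    (hxy : φ x = φ y) : ReflTransGen (mstep F M) x y :=
  ReflTransGen.mono (fun _ _ => mstep.mono Set.inter_subset_left subset_rfl) _ _
    (hM x x ⟨hx, by simp⟩ y ⟨hy, by simp [hxy]⟩)

theorem reflTransGen_mstep_of_lift {G : Set (κ → ℤ)} {M₁ : Set (ι → ℤ)}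
    {φ : (ι → ℤ) →ₗ[ℤ] (κ → ℤ)} (hM₁ : M₁ ⊆ M)
    (hfib : ∀ x ∈ F, ∀ y ∈ F, φ x = φ y → ReflTransGen (mstep F M) x y)
    (hlift : ∀ v ∈ F, ∀ v' ∈ F, φ (v - v') ∈ G →
      ∃ m₀ m : ι → ℤ, φ m₀ = 0 ∧ m ∈ M₁ ∧ v + m₀ ∈ F ∧ v + m₀ + m ∈ F ∧
        φ (v + m₀ + m) = φ v')
    {x y : ι → ℤ} (hx : x ∈ F) (hy : y ∈ F) (h : mstep (φ '' F) G (φ x) (φ y)) :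
    ReflTransGen (mstep F M) x y := by
  wlog hG : φ (y - x) ∈ G generalizing x y
  · have hG' : φ (x - y) ∈ G := by
      simpa only [map_sub] using h.2.2.resolve_left (by rwa [← map_sub])
    exact symm (this hy hx (symm h) hG')
  obtain ⟨m₀, m, hm₀, hm, h₀, h₁, hφ⟩ := hlift y hy x hx hG
  have hmove : mstep F M (y + m₀ + m) (y + m₀) :=
    ⟨h₁, h₀, Or.inr (by simpa using hM₁ hm)⟩
  exact (hfib x hx _ h₁ hφ.symm).trans (.head hmove (hfib _ h₀ y hy (by simp [hm₀])))

end

/-- a kernel Markov basis together with a lift of a Markov basis of the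
projected fibers is a Markov basis of `ℱ`. -/
theorem stmt_9 (n t : ℕ) (Fam : Set (Set (Fin n → ℤ)))
    (φ : (Fin n → ℤ) →ₗ[ℤ] (Fin t → ℤ))
    (G : Set (Fin t → ℤ))
    (hG : isMarkov {S | ∃ F ∈ Fam, S = φ '' F} G)
    (M₁ : Set (Fin n → ℤ)) (hM₁ : isLift0 Fam φ G M₁)
    (M₀ : Set (Fin n → ℤ))
    (hM₀ : ∀ F ∈ Fam, ∀ u : Fin n → ℤ, connects M₀ (F ∩ {x | φ (x - u) = 0})) :
    isMarkov Fam (M₀ ∪ M₁) := by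
  intro F hF u hu v hv
  have hfib : ∀ x ∈ F, ∀ y ∈ F, φ x = φ y → ReflTransGen (mstep F (M₀ ∪ M₁)) x y :=
    fun x hx y hy hxy =>
      ReflTransGen.mono (fun _ _ => mstep.mono subset_rfl Set.subset_union_left) _ _
        (reflTransGen_mstep_of_map_eq (hM₀ F hF) hx hy hxy)
  have hstep : ∀ x ∈ F, ∀ y ∈ F, mstep (φ '' F) G (φ x) (φ y) →
      ReflTransGen (mstep F (M₀ ∪ M₁)) x y :=
    fun x hx y hy => reflTransGen_mstep_of_lift Set.subset_union_right hfib (hM₁ F hF) hx hy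
  exact reflTransGen_of_reflTransGen_image (fun _ _ h => h.1) hfib hstep hu hv
    (hG _ ⟨F, hF, rfl⟩ _ ⟨u, hu, rfl⟩ _ ⟨v, hv, rfl⟩)

end Stmt9
end

section
/- Let ℬ ∈ ℤ^{h×n}, φ : ℤⁿ → ℤᵗ linear, and suppose the affine semigroup ℕℬ^φ generated by the columns (bᵢ, φ(eᵢ)) ∈ ℤ^{h+t} is normal (equals ℤℬ^φ ∩ ℝ≥0·ℬ^φ). Then there exists an integer matrix D ∈ ℤ^{r×t} and a lattice ℒ = {u ∈ ℤᵗ : (0,u) ∈ ℤℬ^φ} such that for every b ∈ ℕℬ there exist c ∈ ℤʳ and v ∈ ℤᵗ with φ(F(ℬ,b)) = {u ∈ ℒ + v : Du ≥ c}, where F(ℬ,b) = {w ∈ ℕⁿ : ℬw = b}. -/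
/-!
By Weyl's theorem (via Fourier–Motzkin elimination) the rational cone `ℝ≥0ℬ^φ` is
cut out by finitely many integer inequalities `0 ≤ d'ₘ ⬝ b + Dₘ ⬝ u`, i.e. `D u ≥ c` with
`c = -d' b`. Normality says that `(b, u) ∈ ℕℬ^φ`, which means `u ∈ φ(F(ℬ, b))`, exactly when
`(b, u)` lies both in this cone and in the lattice `ℤℬ^φ`; given one `w₀ ∈ F(ℬ, b)`, the lattice
condition is `(0, u - φ w₀) ∈ ℤℬ^φ`.
-/

namespace Stmt11

/-- The `i`-th column `(bᵢ, φ(eᵢ))` of the augmented matrix `ℬ^φ`. -/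
def col {h n t : ℕ} (B : Matrix (Fin h) (Fin n) ℤ)
    (φ : (Fin n → ℤ) →ₗ[ℤ] (Fin t → ℤ)) (i : Fin n) :
    (Fin h → ℤ) × (Fin t → ℤ) :=
  (fun j => B j i, φ (Pi.single i 1))

/-- The affine semigroup `ℕℬ^φ`. -/
def Nspan {h n t : ℕ} (B : Matrix (Fin h) (Fin n) ℤ)
    (φ : (Fin n → ℤ) →ₗ[ℤ] (Fin t → ℤ)) : Set ((Fin h → ℤ) × (Fin t → ℤ)) :=
  {x | ∃ a : Fin n → ℕ, x = ∑ i, (a i : ℤ) • col B φ i}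

/-- The lattice `ℤℬ^φ`. -/
def Zspan {h n t : ℕ} (B : Matrix (Fin h) (Fin n) ℤ)
    (φ : (Fin n → ℤ) →ₗ[ℤ] (Fin t → ℤ)) : Set ((Fin h → ℤ) × (Fin t → ℤ)) :=
  {x | ∃ a : Fin n → ℤ, x = ∑ i, a i • col B φ i}

/-- Membership in the rational cone `ℝ≥0 ℬ^φ` (rational coefficients suffice for
integer points of a rational cone). -/
def inCone {h n t : ℕ} (B : Matrix (Fin h) (Fin n) ℤ)
    (φ : (Fin n → ℤ) →ₗ[ℤ] (Fin t → ℤ)) (x : (Fin h → ℤ) × (Fin t → ℤ)) : Prop :=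
  ∃ a : Fin n → ℚ, (∀ i, 0 ≤ a i) ∧
    (∀ j, (x.1 j : ℚ) = ∑ i, a i * ((col B φ i).1 j : ℚ)) ∧
    (∀ j, (x.2 j : ℚ) = ∑ i, a i * ((col B φ i).2 j : ℚ))

open Matrix


theorem exists_forall_le_and_forall_le_iff {ι α : Type*} [Finite ι] [LinearOrder α] [Nonempty α]
    (p q : ι → Prop) (f : ι → α) :
    (∃ y, (∀ i, p i → f i ≤ y) ∧ ∀ j, q j → y ≤ f j) ↔ ∀ i j, p i → q j → f i ≤ f j := by
  refine ⟨fun ⟨y, hp, hq⟩ i j hi hj => (hp i hi).trans (hq j hj), fun h => ?_⟩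
  by_cases hP : ∃ i, p i
  · obtain ⟨i₀, hi₀, hmax⟩ := Set.exists_max_image {i | p i} f (Set.toFinite _) hP
    exact ⟨f i₀, hmax, fun j hj => h i₀ j hi₀ hj⟩
  by_cases hQ : ∃ j, q j
  · obtain ⟨j₀, hj₀, hmin⟩ := Set.exists_min_image {j | q j} f (Set.toFinite _) hQ
    exact ⟨f j₀, fun i hi => h i j₀ hi hj₀, hmin⟩
  simp only [not_exists] at hP hQ
  exact ⟨Classical.arbitrary α, fun i hi => absurd hi (hP i), fun j hj => absurd hj (hQ j)⟩

theorem exists_forall_nonneg_mul_add_iff {κ : Type*} [Finite κ] (α β : κ → ℚ) :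
    (∃ y, ∀ k, 0 ≤ α k * y + β k) ↔
      (∀ k, α k = 0 → 0 ≤ β k) ∧ ∀ i j, 0 < α i → α j < 0 → 0 ≤ α i * β j - α j * β i := by
  set f : κ → ℚ := fun k => -β k / α k
  have hbound : ∀ y k, 0 ≤ α k * y + β k ↔
      (α k = 0 → 0 ≤ β k) ∧ (0 < α k → f k ≤ y) ∧ (α k < 0 → y ≤ f k) := by
    intro y k
    rcases lt_trichotomy (α k) 0 with hk | hk | hk
    · simp only [hk.ne, hk.not_gt, hk, f, le_div_iff_of_neg hk, false_imp_iff, true_imp_iff,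
        true_and]
      constructor <;> intro <;> linarith
    · simp [hk]
    · simp only [hk.ne', hk.not_gt, hk, f, div_le_iff₀ hk, false_imp_iff, true_imp_iff,
        true_and, and_true]
      constructor <;> intro <;> linarith
  have hpair : ∀ i j, 0 < α i → α j < 0 → (f i ≤ f j ↔ 0 ≤ α i * β j - α j * β i) := by
    intro i j hi hj
    have hfi : f i * (α i * -α j) = β i * α j := by
      linear_combination (-α j) * (div_mul_cancel₀ (-β i) hi.ne')
    have hfj : f j * (α i * -α j) = β j * α i := by
      linear_combination (-α i) * (div_mul_cancel₀ (-β j) hj.ne)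
    rw [← mul_le_mul_iff_of_pos_right (mul_pos hi (neg_pos.2 hj)), hfi, hfj]
    constructor <;> intro <;> linarith
  simp_rw [hbound, forall_and, exists_and_left, exists_forall_le_and_forall_le_iff]
  exact and_congr_right fun _ => forall₄_congr fun i j hi hj => hpair i j hi hj

/-- Eliminating the variable with coefficients `α`: each pair of a lower and an upper bound on it
yields the positive combination in which it cancels. -/
def fourierMotzkinRows {κ M : Type*} [AddCommGroup M] [Module ℚ M] (α : κ → ℚ) (v : κ → M) :
    κ ⊕ κ × κ → M
  | .inl k => if α k = 0 then v k else 0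
  | .inr (i, j) => if 0 < α i ∧ α j < 0 then α i • v j - α j • v i else 0

theorem fourierMotzkinRows_dotProduct_add {κ ι δ : Type*} [Fintype ι] [Fintype δ] (α : κ → ℚ)
    (v : κ → ι → ℚ) (w : κ → δ → ℚ) (a : ι → ℚ) (x : δ → ℚ) (k : κ ⊕ κ × κ) :
    fourierMotzkinRows α v k ⬝ᵥ a + fourierMotzkinRows α w k ⬝ᵥ x =
      fourierMotzkinRows α (fun k => v k ⬝ᵥ a + w k ⬝ᵥ x) k := by
  rcases k with k | ⟨i, j⟩ <;> simp only [fourierMotzkinRows] <;> split_ifs <;>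
    simp only [sub_dotProduct, smul_dotProduct, zero_dotProduct, smul_eq_mul] <;> ring

theorem forall_nonneg_fourierMotzkinRows_iff {κ : Type*} (α β : κ → ℚ) :
    (∀ k, 0 ≤ fourierMotzkinRows α β k) ↔
      (∀ k, α k = 0 → 0 ≤ β k) ∧ ∀ i j, 0 < α i → α j < 0 → 0 ≤ α i * β j - α j * β i := by
  simp only [Sum.forall, Prod.forall, fourierMotzkinRows, smul_eq_mul]
  refine and_congr (forall_congr' fun k => ?_) (forall₂_congr fun i j => ?_) <;> split_ifs <;>
    simp_all

theorem exists_forall_nonneg_iff_fourierMotzkinRows {κ δ : Type*} [Finite κ] [Fintype δ] {n : ℕ}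
    (P : κ → Fin (n + 1) → ℚ) (Q : κ → δ → ℚ) (x : δ → ℚ) :
    (∃ a, ∀ k, 0 ≤ P k ⬝ᵥ a + Q k ⬝ᵥ x) ↔
      ∃ a, ∀ k, 0 ≤ fourierMotzkinRows (fun k => P k 0) (fun k => Fin.tail (P k)) k ⬝ᵥ a +
        fourierMotzkinRows (fun k => P k 0) Q k ⬝ᵥ x := by
  have hcons : ∀ k y a, P k ⬝ᵥ Fin.cons y a = P k 0 * y + Fin.tail (P k) ⬝ᵥ a :=
    fun k y a => dotProduct_cons (P k) y a
  simp_rw [fourierMotzkinRows_dotProduct_add, forall_nonneg_fourierMotzkinRows_iff,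
    ← exists_forall_nonneg_mul_add_iff, Fin.exists_fin_succ_pi, hcons, add_assoc]
  exact exists_comm

def IsPolyhedralCone {δ : Type*} [Fintype δ] (C : Set (δ → ℚ)) : Prop :=
  ∃ (s : ℕ) (R : Fin s → δ → ℚ), ∀ x, x ∈ C ↔ ∀ m, 0 ≤ R m ⬝ᵥ x

/-- Fourier–Motzkin: the projection of a polyhedral cone is polyhedral. -/
theorem isPolyhedralCone_exists_forall_nonneg {δ : Type*} [Fintype δ] (n : ℕ) :
    ∀ {κ : Type*} [Fintype κ] (P : κ → Fin n → ℚ) (Q : κ → δ → ℚ),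
      IsPolyhedralCone {x | ∃ a, ∀ k, 0 ≤ P k ⬝ᵥ a + Q k ⬝ᵥ x} := by
  induction n with
  | zero =>
    intro κ _ P Q
    refine ⟨Fintype.card κ, Q ∘ (Fintype.equivFin κ).symm, fun x => ?_⟩
    simp [(Fintype.equivFin κ).symm.forall_congr_left]
  | succ n ih =>
    intro κ _ P Q
    obtain ⟨s, R, hR⟩ := ih (fourierMotzkinRows (fun k => P k 0) (fun k => Fin.tail (P k)))
      (fourierMotzkinRows (fun k => P k 0) Q)
    exact ⟨s, R, fun x => (exists_forall_nonneg_iff_fourierMotzkinRows P Q x).trans (hR x)⟩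

def coneSpan {ι δ : Type*} [Fintype ι] (v : ι → δ → ℚ) : Set (δ → ℚ) :=
  {x | ∃ a : ι → ℚ, (∀ i, 0 ≤ a i) ∧ ∀ j, x j = ∑ i, a i * v i j}

theorem isPolyhedralCone_coneSpan {δ : Type*} [Fintype δ] {n : ℕ} (v : Fin n → δ → ℚ) :
    IsPolyhedralCone (coneSpan v) := by
  classical
  -- `x = ∑ aᵢ vᵢ` with `a ≥ 0` as a system of inequalities in `(a, x)`
  let P : Fin n ⊕ δ ⊕ δ → Fin n → ℚ :=
    Sum.elim (fun i => Pi.single i 1) (Sum.elim (fun j => -fun i => v i j) fun j i => v i j)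
  let Q : Fin n ⊕ δ ⊕ δ → δ → ℚ :=
    Sum.elim 0 (Sum.elim (fun j => Pi.single j 1) fun j => -Pi.single j 1)
  obtain ⟨s, R, hR⟩ := isPolyhedralCone_exists_forall_nonneg n P Q
  refine ⟨s, R, fun x => Iff.trans (exists_congr fun a => ?_) (hR x)⟩
  simp only [Sum.forall, P, Q, Sum.elim_inl, Sum.elim_inr, single_one_dotProduct,
    neg_dotProduct, zero_dotProduct, Pi.zero_apply, add_zero, ← forall_and]
  refine and_congr Iff.rfl (forall_congr' fun j => ?_)
  rw [dotProduct_comm, dotProduct]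
  constructor
  · intro hx; constructor <;> linarith
  · intro hx; linarith [hx.1, hx.2]

theorem exists_pos_mul_eq_intCast {δ : Type*} [Fintype δ] (r : δ → ℚ) :
    ∃ d : ℚ, 0 < d ∧ ∃ z : δ → ℤ, ∀ j, d * r j = z j := by
  refine ⟨∏ j, ((r j).den : ℚ), by positivity, ?_⟩
  have : ∀ j, ∃ z : ℤ, (∏ j, ((r j).den : ℚ)) * r j = z := by
    intro j
    obtain ⟨e, he⟩ := Finset.dvd_prod_of_mem (fun j => (r j).den) (Finset.mem_univ j)
    refine ⟨e * (r j).num, ?_⟩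
    rw [← Nat.cast_prod, he]
    push_cast
    rw [← Rat.mul_den_eq_num]
    ring
  choose z hz using this
  exact ⟨z, hz⟩

theorem IsPolyhedralCone.exists_int_rows {δ : Type*} [Fintype δ] {C : Set (δ → ℚ)}
    (hC : IsPolyhedralCone C) :
    ∃ (s : ℕ) (D : Fin s → δ → ℤ), ∀ x, x ∈ C ↔ ∀ m, 0 ≤ (fun j => (D m j : ℚ)) ⬝ᵥ x := by
  obtain ⟨s, R, hR⟩ := hC
  choose d hd z hz using fun m => exists_pos_mul_eq_intCast (R m)
  refine ⟨s, z, fun x => (hR x).trans (forall_congr' fun m => ?_)⟩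
  have : (fun j => (z m j : ℚ)) = d m • R m := funext fun j => (hz m j).symm
  rw [this, smul_dotProduct, smul_eq_mul, mul_nonneg_iff_of_pos_left (hd m)]

def ratVec {ι κ : Type*} (x : (ι → ℤ) × (κ → ℤ)) : ι ⊕ κ → ℚ :=
  Sum.elim (fun j => (x.1 j : ℚ)) fun j => (x.2 j : ℚ)

theorem intCast_dotProduct_ratVec {ι κ : Type*} [Fintype ι] [Fintype κ] (d : ι ⊕ κ → ℤ)
    (x : (ι → ℤ) × (κ → ℤ)) :
    (fun j => (d j : ℚ)) ⬝ᵥ ratVec x = ((d ∘ Sum.inl) ⬝ᵥ x.1 + (d ∘ Sum.inr) ⬝ᵥ x.2 : ℤ) := by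
  simp [dotProduct, ratVec, Fintype.sum_sum_type]

section Semigroup

variable {h n t : ℕ} (B : Matrix (Fin h) (Fin n) ℤ) (φ : (Fin n → ℤ) →ₗ[ℤ] (Fin t → ℤ))

theorem sum_smul_col (a : Fin n → ℤ) : ∑ i, a i • col B φ i = (B *ᵥ a, φ a) := by
  ext j
  · simp [col, Prod.fst_sum, Finset.sum_apply, mulVec, dotProduct, mul_comm]
  · conv_rhs => rw [pi_eq_sum_univ' a, map_sum]
    simp only [col, Prod.snd_sum, map_smul]
    rfl

theorem mem_Zspan_iff {x : (Fin h → ℤ) × (Fin t → ℤ)} :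
    x ∈ Zspan B φ ↔ ∃ a, x = (B *ᵥ a, φ a) := by
  simp only [Zspan, Set.mem_ofPred_eq, sum_smul_col]

theorem mem_Nspan_iff {x : (Fin h → ℤ) × (Fin t → ℤ)} :
    x ∈ Nspan B φ ↔ ∃ w, 0 ≤ w ∧ x = (B *ᵥ w, φ w) := by
  constructor
  · rintro ⟨a, rfl⟩
    exact ⟨fun i => a i, fun i => Int.natCast_nonneg _, sum_smul_col B φ _⟩
  · rintro ⟨w, hw, rfl⟩
    refine ⟨fun i => (w i).toNat, ?_⟩
    rw [sum_smul_col]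
    simp only [Int.toNat_of_nonneg (hw _)]

theorem mem_Zspan_of_mem_Nspan {x : (Fin h → ℤ) × (Fin t → ℤ)} (hx : x ∈ Nspan B φ) :
    x ∈ Zspan B φ := by
  obtain ⟨a, rfl⟩ := hx
  exact ⟨fun i => a i, rfl⟩

theorem inCone_of_mem_Nspan {x : (Fin h → ℤ) × (Fin t → ℤ)} (hx : x ∈ Nspan B φ) :
    inCone B φ x := by
  obtain ⟨a, rfl⟩ := hx
  refine ⟨fun i => a i, fun i => Nat.cast_nonneg _, fun j => ?_, fun j => ?_⟩ <;>
    simp [Prod.fst_sum, Prod.snd_sum, Finset.sum_apply]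

theorem mem_Nspan_iff_of_normal
    (hnormal : ∀ x, x ∈ Zspan B φ → inCone B φ x → x ∈ Nspan B φ)
    {x : (Fin h → ℤ) × (Fin t → ℤ)} : x ∈ Nspan B φ ↔ x ∈ Zspan B φ ∧ inCone B φ x :=
  ⟨fun hx => ⟨mem_Zspan_of_mem_Nspan B φ hx, inCone_of_mem_Nspan B φ hx⟩,
    fun hx => hnormal x hx.1 hx.2⟩

theorem mem_Zspan_iff_sub {b : Fin h → ℤ} {u u₀ : Fin t → ℤ} (h₀ : (b, u₀) ∈ Zspan B φ) :
    (b, u) ∈ Zspan B φ ↔ (0, u - u₀) ∈ Zspan B φ := by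
  obtain ⟨a₀, ha₀⟩ := (mem_Zspan_iff B φ).1 h₀
  simp only [mem_Zspan_iff, Prod.ext_iff] at ha₀ ⊢
  constructor
  · rintro ⟨a, rfl, rfl⟩
    exact ⟨a - a₀, by rw [mulVec_sub, ← ha₀.1, sub_self], by rw [map_sub, ← ha₀.2]⟩
  · rintro ⟨a, ha, hu⟩
    exact ⟨a + a₀, by rw [mulVec_add, ← ha, ← ha₀.1, zero_add], by
      rw [map_add, ← hu, ← ha₀.2, sub_add_cancel]⟩

theorem inCone_iff_mem_coneSpan (x : (Fin h → ℤ) × (Fin t → ℤ)) :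
    inCone B φ x ↔ ratVec x ∈ coneSpan fun i => ratVec (col B φ i) := by
  simp only [inCone, coneSpan, Set.mem_ofPred_eq, Sum.forall, ratVec, Sum.elim_inl, Sum.elim_inr]

end Semigroup

/-- Lemma 3.7: if the semigroup `ℕℬ^φ` is normal, then with
`ℒ = {u : (0,u) ∈ ℤℬ^φ}` there is an integer matrix `D` such that every projected
fiber `φ(F(ℬ,b))`, `b ∈ ℕℬ`, has the form `{u ∈ ℒ + v : D u ≥ c}`. -/
theorem stmt_11 (h n t : ℕ) (B : Matrix (Fin h) (Fin n) ℤ)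
    (φ : (Fin n → ℤ) →ₗ[ℤ] (Fin t → ℤ))
    (hnormal : ∀ x, x ∈ Zspan B φ → inCone B φ x → x ∈ Nspan B φ) :
    ∃ (r : ℕ) (D : Matrix (Fin r) (Fin t) ℤ),
      ∀ b : Fin h → ℤ, (∃ w : Fin n → ℤ, 0 ≤ w ∧ B.mulVec w = b) →
        ∃ (c : Fin r → ℤ) (v : Fin t → ℤ),
          (⇑φ) '' {w | 0 ≤ w ∧ B.mulVec w = b} =
            {u | (0, u - v) ∈ Zspan B φ ∧ c ≤ D.mulVec u} := by
  obtain ⟨r, D, hD⟩ := (isPolyhedralCone_coneSpan fun i => ratVec (col B φ i)).exists_int_rows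
  refine ⟨r, Matrix.of fun m j => D m (.inr j), fun b ⟨w₀, hw₀, hBw₀⟩ =>
    ⟨-(Matrix.of fun m j => D m (.inl j)) *ᵥ b, φ w₀, ?_⟩⟩
  have h₀ : (b, φ w₀) ∈ Nspan B φ := (mem_Nspan_iff B φ).2 ⟨w₀, hw₀, by rw [hBw₀]⟩
  ext u
  calc u ∈ φ '' {w | 0 ≤ w ∧ B *ᵥ w = b} ↔ (b, u) ∈ Nspan B φ := by
        simp [mem_Nspan_iff, Prod.ext_iff, eq_comm, and_assoc]
    _ ↔ (b, u) ∈ Zspan B φ ∧ inCone B φ (b, u) := mem_Nspan_iff_of_normal B φ hnormal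
    _ ↔ _ := by
      rw [mem_Zspan_iff_sub B φ (mem_Zspan_of_mem_Nspan B φ h₀), inCone_iff_mem_coneSpan B φ, hD]
      refine and_congr Iff.rfl (forall_congr' fun m => ?_)
      rw [intCast_dotProduct_ratVec, Int.cast_nonneg_iff, neg_mulVec, Pi.neg_apply,
        neg_le_iff_add_nonneg']
      rfl

end Stmt11
end

section
/- Let ℬ, ℬ' be integer matrices that are 𝒜-graded by surjections φ : [n] → [t] and φ' : [n'] → [t], and let ℬ ×_𝒜 ℬ' be their toric fiber product with projections ψ, ψ' and ξ = φ∘ψ = φ'∘ψ'. Then for all b ∈ ℕℬ and b' ∈ ℕℬ': ξ(F(ℬ×_𝒜ℬ', (b,b'))) = φ(F(ℬ, b)) ∩ φ'(F(ℬ', b')). -/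
/-!
The maps `φ`, `φ'`, `ψ`, `ψ'` and `ξ` are all pushforwards of integer vectors along maps of index
sets, and pushforwards compose. Since `ξ = φ ∘ ψ = φ' ∘ ψ'` and the columns of `ℬ ×_𝒜 ℬ'` stack
columns of `ℬ` and `ℬ'`, `ψ` and `ψ'` carry `F(ℬ ×_𝒜 ℬ', (b, b'))` into `F(ℬ, b)` and `F(ℬ', b')`,
which gives `⊆`. For `⊇`, nonnegative `v`, `v'` with `φ(v) = φ'(v')` are the two marginals of a
nonnegative `w` on the fibre product, built greedily by induction on the total mass: move one unit
from some `vᵢ > 0` and some `v'ⱼ > 0` in the same fibre onto the pair `(i, j)`.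
-/

namespace Stmt12

/-- The marginalization map `ℤⁿ → ℤᵗ` induced by an index map `φ : [n] → [t]`,
sending `eᵢ ↦ e_{φ(i)}`. -/
def marg {n t : ℕ} (φ : Fin n → Fin t) (v : Fin n → ℤ) : Fin t → ℤ :=
  fun a => ∑ i, if φ i = a then v i else 0

/-- The index set of the toric fiber product: pairs `(i,j)` with `φ(i) = φ'(j)`. -/
abbrev tfpIdx (n n' t : ℕ) (φ : Fin n → Fin t) (φ' : Fin n' → Fin t) :=
  {p : Fin n × Fin n' // φ p.1 = φ' p.2}

/-- The toric fiber product matrix `ℬ ×_𝒜 ℬ'`, with column `(i,j)` equal to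
`(bᵢ ; b'ⱼ)`. -/
def tfpMat {h h' n n' t : ℕ} (B : Matrix (Fin h) (Fin n) ℤ)
    (B' : Matrix (Fin h') (Fin n') ℤ) (φ : Fin n → Fin t) (φ' : Fin n' → Fin t) :
    Matrix (Fin h ⊕ Fin h') (tfpIdx n n' t φ φ') ℤ :=
  Matrix.of fun k p => Sum.elim (fun a => B a p.1.1) (fun a => B' a p.1.2) k

/-- The map `ξ` sending `e_{i,j}` to `e_{φ(i)} = e_{φ'(j)}`. -/
def xiMap {n n' t : ℕ} (φ : Fin n → Fin t) (φ' : Fin n' → Fin t)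
    (w : tfpIdx n n' t φ φ' → ℤ) : Fin t → ℤ :=
  fun a => ∑ p : tfpIdx n n' t φ φ', if φ p.1.1 = a then w p else 0

open Finset Function

section FiberSum

variable {I J T M : Type*} [Fintype I] [Fintype J] [DecidableEq T]

/-- The pushforward along `f`; `marg φ`, `xiMap φ φ'` and the projections `ψ, ψ'` are instances. -/
def fiberSum [AddCommMonoid M] (f : I → T) : (I → M) →+ (T → M) where
  toFun x a := ∑ i, if f i = a then x i else 0
  map_zero' := by ext; simp
  map_add' x y := by ext; simp [ite_add_zero, sum_add_distrib]

theorem fiberSum_apply [AddCommMonoid M] (f : I → T) (x : I → M) (a : T) :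
    fiberSum f x a = ∑ i, if f i = a then x i else 0 := rfl

theorem fiberSum_single [AddCommMonoid M] [DecidableEq I] (f : I → T) (i : I) (c : M) :
    fiberSum f (Pi.single i c) = Pi.single (f i) c := by
  ext a
  rw [fiberSum_apply, sum_eq_single i (fun j _ hj => by simp [hj]) (by simp)]
  simp [Pi.single_apply, eq_comm]

theorem fiberSum_fiberSum [AddCommMonoid M] [DecidableEq J] (g : I → J) (f : J → T)
    (x : I → M) : fiberSum f (fiberSum g x) = fiberSum (f ∘ g) x := by
  ext a
  simp only [fiberSum_apply, Function.comp_apply]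
  calc _ = ∑ j, ∑ i, if g i = j then (if f j = a then x i else 0) else 0 := by
        refine sum_congr rfl fun j _ => ?_
        by_cases hj : f j = a <;> simp [hj]
    _ = _ := by rw [sum_comm]; simp

theorem dotProduct_fiberSum [Fintype T] [CommSemiring M] (f : I → T) (v : T → M) (x : I → M) :
    v ⬝ᵥ fiberSum f x = ∑ i, v (f i) * x i := by
  simp only [dotProduct, fiberSum_apply, mul_sum, mul_ite, mul_zero]
  rw [sum_comm]
  simp

section Nonneg

variable [AddCommMonoid M] [PartialOrder M] [IsOrderedAddMonoid M] (f : I → T) {x : I → M}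

theorem fiberSum_nonneg (hx : 0 ≤ x) : 0 ≤ fiberSum f x := fun _ =>
  sum_nonneg fun i _ => by split_ifs; exacts [hx i, le_rfl]

theorem le_fiberSum_apply (hx : 0 ≤ x) (i : I) : x i ≤ fiberSum f x (f i) := by
  simpa [fiberSum_apply] using single_le_sum (f := fun i' => if f i' = f i then x i' else 0)
    (fun i' _ => by split_ifs; exacts [hx i', le_rfl]) (mem_univ i)

end Nonneg

theorem exists_pos_of_fiberSum_pos [AddCommMonoid M] [LinearOrder M]
    [IsOrderedAddMonoid M] {f : I → T} {x : I → M} {a : T} (h : 0 < fiberSum f x a) :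
    ∃ i, f i = a ∧ 0 < x i := by
  have h₀ : ∑ _i : I, (0 : M) < ∑ i, if f i = a then x i else 0 := by
    rwa [sum_const_zero]
  obtain ⟨i, -, hi⟩ := exists_lt_of_sum_lt h₀
  by_cases hia : f i = a
  · exact ⟨i, hia, by rwa [if_pos hia] at hi⟩
  · rw [if_neg hia] at hi
    exact absurd hi (lt_irrefl 0)

theorem exists_nonneg_coupling_of_fiberSum_eq [DecidableEq I] [DecidableEq J]
    {f : I → T} {g : J → T} {x : I → ℤ} {y : J → ℤ} (hx : 0 ≤ x) (hy : 0 ≤ y)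
    (hxy : fiberSum f x = fiberSum g y) :
    ∃ w : Pullback f g → ℤ, 0 ≤ w ∧ fiberSum Pullback.fst w = x ∧
      fiberSum Pullback.snd w = y := by
  obtain ⟨N, hN⟩ : ∃ N : ℕ, ∑ i, x i = N :=
    ⟨_, (Int.toNat_of_nonneg (sum_nonneg fun i _ => hx i)).symm⟩
  induction N generalizing x y with
  | zero =>
    have hx0 : x = 0 :=
      funext fun i => (sum_eq_zero_iff_of_nonneg fun i _ => hx i).1 hN i (mem_univ i)
    have hy0 : y = 0 := funext fun j => le_antisymm
      (by simpa [hx0, ← hxy] using le_fiberSum_apply g hy j) (hy j)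
    exact ⟨0, le_rfl, by simp [hx0], by simp [hy0]⟩
  | succ N ih =>
    obtain ⟨i₀, -, hi₀⟩ : ∃ i ∈ univ, 0 < x i := exists_lt_of_sum_lt (by simp [hN])
    obtain ⟨j₀, hgj₀, hj₀⟩ : ∃ j, g j = f i₀ ∧ 0 < y j :=
      exists_pos_of_fiberSum_pos (hxy ▸ hi₀.trans_le (le_fiberSum_apply f hx i₀))
    have hx' : 0 ≤ x - Pi.single i₀ 1 := fun i => by
      by_cases h : i = i₀ <;> simp [h] <;> [omega; exact hx i]
    have hy' : 0 ≤ y - Pi.single j₀ 1 := fun j => by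
      by_cases h : j = j₀ <;> simp [h] <;> [omega; exact hy j]
    obtain ⟨w, hw, hw₁, hw₂⟩ := ih hx' hy'
      (by rw [map_sub, map_sub, fiberSum_single, fiberSum_single, hxy, hgj₀])
      (by simp [sum_sub_distrib, hN])
    refine ⟨w + Pi.single ⟨(i₀, j₀), hgj₀.symm⟩ 1,
      add_nonneg hw (Pi.single_nonneg.2 zero_le_one), ?_, ?_⟩
    · rw [map_add, fiberSum_single, hw₁]
      exact sub_add_cancel x _
    · rw [map_add, fiberSum_single, hw₂]
      exact sub_add_cancel y _

end FiberSum

section ToricFiberProduct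

variable {h h' n n' t : ℕ} {φ : Fin n → Fin t} {φ' : Fin n' → Fin t}

theorem marg_eq_fiberSum : marg φ = fiberSum φ := rfl

theorem xiMap_eq_fiberSum : xiMap φ φ' = fiberSum (φ ∘ Pullback.fst (g := φ')) := rfl

theorem tfpMat_mulVec (B : Matrix (Fin h) (Fin n) ℤ) (B' : Matrix (Fin h') (Fin n') ℤ)
    (w : tfpIdx n n' t φ φ' → ℤ) :
    (tfpMat B B' φ φ').mulVec w =
      Sum.elim (B.mulVec (fiberSum Pullback.fst w)) (B'.mulVec (fiberSum Pullback.snd w)) := by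
  ext (k | k) <;> simp only [Sum.elim_inl, Sum.elim_inr, Matrix.mulVec, dotProduct_fiberSum] <;>
    simp [tfpMat, dotProduct, Pullback.fst, Pullback.snd]

theorem marg_fiberSum_fst (w : tfpIdx n n' t φ φ' → ℤ) :
    marg φ (fiberSum Pullback.fst w) = xiMap φ φ' w := by
  rw [marg_eq_fiberSum, fiberSum_fiberSum, xiMap_eq_fiberSum]

theorem marg_fiberSum_snd (w : tfpIdx n n' t φ φ' → ℤ) :
    marg φ' (fiberSum Pullback.snd w) = xiMap φ φ' w := by
  rw [marg_eq_fiberSum, fiberSum_fiberSum, xiMap_eq_fiberSum, pullback_comm_sq]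

end ToricFiberProduct

theorem stmt_12_general (t h h' n n' : ℕ)
    (B : Matrix (Fin h) (Fin n) ℤ) (B' : Matrix (Fin h') (Fin n') ℤ)
    (φ : Fin n → Fin t) (φ' : Fin n' → Fin t)
    (b : Fin h → ℤ) (b' : Fin h' → ℤ) :
    xiMap φ φ' '' {w | 0 ≤ w ∧ (tfpMat B B' φ φ').mulVec w = Sum.elim b b'} =
      (marg φ '' {w | 0 ≤ w ∧ B.mulVec w = b}) ∩
      (marg φ' '' {w | 0 ≤ w ∧ B'.mulVec w = b'}) := by
  ext u
  constructor
  · rintro ⟨w, ⟨hw, hBw⟩, rfl⟩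
    rw [tfpMat_mulVec, Sum.elim_eq_iff] at hBw
    exact ⟨⟨_, ⟨fiberSum_nonneg _ hw, hBw.1⟩, marg_fiberSum_fst w⟩,
      ⟨_, ⟨fiberSum_nonneg _ hw, hBw.2⟩, marg_fiberSum_snd w⟩⟩
  · rintro ⟨⟨v, ⟨hv, rfl⟩, rfl⟩, ⟨v', ⟨hv', rfl⟩, hvv'⟩⟩
    obtain ⟨w, hw, rfl, rfl⟩ := exists_nonneg_coupling_of_fiberSum_eq hv hv' hvv'.symm
    exact ⟨w, ⟨hw, tfpMat_mulVec B B' w⟩, (marg_fiberSum_fst w).symm⟩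

/-- Lemma 4.4: `ξ(F(ℬ×_𝒜ℬ', (b,b'))) = φ(F(ℬ,b)) ∩ φ'(F(ℬ',b'))`. -/
theorem stmt_12 (s t h h' n n' : ℕ)
    (A : Matrix (Fin s) (Fin t) ℤ)
    (B : Matrix (Fin h) (Fin n) ℤ) (B' : Matrix (Fin h') (Fin n') ℤ)
    (φ : Fin n → Fin t) (φ' : Fin n' → Fin t)
    (hφ : Function.Surjective φ) (hφ' : Function.Surjective φ')
    (hgrB : ∀ v, B.mulVec v = 0 → A.mulVec (marg φ v) = 0)
    (hgrB' : ∀ v, B'.mulVec v = 0 → A.mulVec (marg φ' v) = 0)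
    (b : Fin h → ℤ) (b' : Fin h' → ℤ)
    (hb : ∃ w : Fin n → ℤ, 0 ≤ w ∧ B.mulVec w = b)
    (hb' : ∃ w : Fin n' → ℤ, 0 ≤ w ∧ B'.mulVec w = b') :
    xiMap φ φ' '' {w | 0 ≤ w ∧ (tfpMat B B' φ φ').mulVec w = Sum.elim b b'} =
      (marg φ '' {w | 0 ≤ w ∧ B.mulVec w = b}) ∩
      (marg φ' '' {w | 0 ≤ w ∧ B'.mulVec w = b'}) :=
  stmt_12_general t h h' n n' B B' φ φ' b b'

end Stmt12
end

section
/- Let ℬ, ℬ' be 𝒜-graded integer matrices via φ, φ', with toric fiber product ℬ ×_𝒜 ℬ' and maps ψ, ψ', ξ. Then ker_ℤ(ξ) ∩ ker_ℤ(ℬ ×_𝒜 ℬ') = ker_ℤ(ℬ^φ ×_Ã (ℬ')^{φ'}), where Ã is the t×t identity matrix and ℬ^φ, (ℬ')^{φ'} are the augmented matrices whose columns append φ(eᵢ), φ'(eⱼ) to the respective columns. -/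
namespace Stmt13

/-- The marginalization map `ℤⁿ → ℤᵗ` induced by an index map `φ : [n] → [t]`,
sending `eᵢ ↦ e_{φ(i)}`. -/
def marg {n t : ℕ} (φ : Fin n → Fin t) (v : Fin n → ℤ) : Fin t → ℤ :=
  fun a => ∑ i, if φ i = a then v i else 0

/-- The index set of the toric fiber product: pairs `(i,j)` with `φ(i) = φ'(j)`. -/
abbrev tfpIdx (n n' t : ℕ) (φ : Fin n → Fin t) (φ' : Fin n' → Fin t) :=
  {p : Fin n × Fin n' // φ p.1 = φ' p.2}

/-- The toric fiber product matrix `ℬ ×_𝒜 ℬ'`, with column `(i,j)` equal to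
`(bᵢ ; b'ⱼ)`. -/
def tfpMat {h h' n n' t : ℕ} (B : Matrix (Fin h) (Fin n) ℤ)
    (B' : Matrix (Fin h') (Fin n') ℤ) (φ : Fin n → Fin t) (φ' : Fin n' → Fin t) :
    Matrix (Fin h ⊕ Fin h') (tfpIdx n n' t φ φ') ℤ :=
  Matrix.of fun k p => Sum.elim (fun a => B a p.1.1) (fun a => B' a p.1.2) k

/-- The map `ξ` sending `e_{i,j}` to `e_{φ(i)} = e_{φ'(j)}`. -/
def xiMap {n n' t : ℕ} (φ : Fin n → Fin t) (φ' : Fin n' → Fin t)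
    (w : tfpIdx n n' t φ φ' → ℤ) : Fin t → ℤ :=
  fun a => ∑ p : tfpIdx n n' t φ φ', if φ p.1.1 = a then w p else 0

/-- The associated codimension-zero toric fiber product matrix
`ℬ^φ ×_Ã (ℬ')^{φ'}`, with column `(i,j)` equal to `(bᵢ ; e_{φ(i)} ; b'ⱼ ; e_{φ'(j)})`. -/
def tfpAug {h h' n n' t : ℕ} (B : Matrix (Fin h) (Fin n) ℤ)
    (B' : Matrix (Fin h') (Fin n') ℤ) (φ : Fin n → Fin t) (φ' : Fin n' → Fin t) :
    Matrix ((Fin h ⊕ Fin t) ⊕ (Fin h' ⊕ Fin t)) (tfpIdx n n' t φ φ') ℤ :=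
  Matrix.of fun k p =>
    Sum.elim
      (Sum.elim (fun a => B a p.1.1) (fun a => if φ p.1.1 = a then 1 else 0))
      (Sum.elim (fun a => B' a p.1.2) (fun a => if φ' p.1.2 = a then 1 else 0)) k

theorem _root_.Sum.elim_eq_zero_iff {α β M : Type*} [Zero M] {f : α → M} {g : β → M} :
    Sum.elim f g = 0 ↔ f = 0 ∧ g = 0 := by
  rw [← Sum.elim_zero_zero, Sum.elim_eq_iff]

/-- On the index set `φ(i) = φ'(j)` the two identity blocks `e_{φ(i)}` and `e_{φ'(j)}` of the
augmented matrix coincide, so both compute `ξ`. -/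
theorem tfpAug_mulVec {h h' n n' t : ℕ} (B : Matrix (Fin h) (Fin n) ℤ)
    (B' : Matrix (Fin h') (Fin n') ℤ) (φ : Fin n → Fin t) (φ' : Fin n' → Fin t)
    (w : tfpIdx n n' t φ φ' → ℤ) :
    (tfpAug B B' φ φ').mulVec w =
      Sum.elim (Sum.elim ((tfpMat B B' φ φ').mulVec w ∘ Sum.inl) (xiMap φ φ' w))
        (Sum.elim ((tfpMat B B' φ φ').mulVec w ∘ Sum.inr) (xiMap φ φ' w)) := by
  funext k
  rcases k with (a | a) | (a | a) <;>
    simp only [tfpAug, tfpMat, xiMap, Matrix.mulVec, dotProduct, Matrix.of_apply,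
      Function.comp_apply, Sum.elim_inl, Sum.elim_inr, ite_mul, one_mul, zero_mul]
  exact Finset.sum_congr rfl fun p _ => by rw [p.2]

theorem stmt_13_general (t h h' n n' : ℕ)
    (B : Matrix (Fin h) (Fin n) ℤ) (B' : Matrix (Fin h') (Fin n') ℤ)
    (φ : Fin n → Fin t) (φ' : Fin n' → Fin t) :
    {w : tfpIdx n n' t φ φ' → ℤ |
        xiMap φ φ' w = 0 ∧ (tfpMat B B' φ φ').mulVec w = 0} =
      {w | (tfpAug B B' φ φ').mulVec w = 0} := by
  ext w
  simp only [Set.mem_ofPred_eq, tfpAug_mulVec, Sum.elim_eq_zero_iff]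
  rw [← Sum.elim_comp_inl_inr ((tfpMat B B' φ φ').mulVec w), Sum.elim_eq_zero_iff]
  tauto

/-- Lemma 4.3:
`ker_ℤ(ξ) ∩ ker_ℤ(ℬ ×_𝒜 ℬ') = ker_ℤ(ℬ^φ ×_Ã (ℬ')^{φ'})`. -/
theorem stmt_13 (s t h h' n n' : ℕ)
    (A : Matrix (Fin s) (Fin t) ℤ)
    (B : Matrix (Fin h) (Fin n) ℤ) (B' : Matrix (Fin h') (Fin n') ℤ)
    (φ : Fin n → Fin t) (φ' : Fin n' → Fin t)
    (hφ : Function.Surjective φ) (hφ' : Function.Surjective φ')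
    (hgrB : ∀ v, B.mulVec v = 0 → A.mulVec (marg φ v) = 0)
    (hgrB' : ∀ v, B'.mulVec v = 0 → A.mulVec (marg φ' v) = 0) :
    {w : tfpIdx n n' t φ φ' → ℤ |
        xiMap φ φ' w = 0 ∧ (tfpMat B B' φ φ').mulVec w = 0} =
      {w | (tfpAug B B' φ φ').mulVec w = 0} :=
  stmt_13_general t h h' n n' B B' φ φ'

end Stmt13
end

section
/- Let ℳ ⊆ ker_ℤ ℬ and ℳ' ⊆ ker_ℤ ℬ' be (ℱ(ℬ), φ, ⪰_ℬ)- and (ℱ(ℬ'), φ', ⪰_{ℬ'})-lifts, respectively, of a ⪰_𝒜-Gröbner basis 𝒢 of ξ(ℱ(ℬ ×_𝒜 ℬ')). Then Glues(ℳ, ℳ') is a (ℱ(ℬ ×_𝒜 ℬ'), ξ, ⪰_×)-lift of 𝒢, where ⪰_× is any compatible additive preorder. -/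
/-!
Take `v, v'` in a fiber of `ℬ ×_𝒜 ℬ'` with `v ⪯_× v'` and `ξ(v - v') ∈ 𝒢`. By compatibility of
the orders (or trivially, when `ξ v = ξ v'`), the lifts `ℳ` and `ℳ'` apply to the projections:
they give moves `ψ v ↦ ψ v + m₀ ↦ ψ v + m₀ + m` in a fiber of `ℬ` and
`ψ' v ↦ ψ' v + m₀' ↦ ψ' v + m₀' + m'` in a fiber of `ℬ'`, lying over the same points of `𝒜`.
Two nonnegative vectors over `ℬ` and `ℬ'` with the same image in `𝒜` are the two projections of a
nonnegative vector on the toric fiber product (a transportation problem, solved one unit at a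
time). Solving such problems separately for the positive parts, the negative parts and the rest
of the moves produces a point `w` with `ψ w = ψ v + m₀`, `ψ' w = ψ' v + m₀'` and a glue `m̃` of
`m, m'` with `w + m̃ ≥ 0`. The assumption on `⪰_×` turns the two pairs of order relations into
`v ⪯_× w ⪯_× w + m̃`.
-/

namespace Stmt15

/-- The marginalization map `ℤⁿ → ℤᵗ` induced by an index map `φ : [n] → [t]`,
sending `eᵢ ↦ e_{φ(i)}`. -/
def marg {n t : ℕ} (φ : Fin n → Fin t) (v : Fin n → ℤ) : Fin t → ℤ :=
  fun a => ∑ i, if φ i = a then v i else 0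

/-- The index set of the toric fiber product: pairs `(i,j)` with `φ(i) = φ'(j)`. -/
abbrev tfpIdx (n n' t : ℕ) (φ : Fin n → Fin t) (φ' : Fin n' → Fin t) :=
  {p : Fin n × Fin n' // φ p.1 = φ' p.2}

/-- The toric fiber product matrix `ℬ ×_𝒜 ℬ'`, with column `(i,j)` equal to
`(bᵢ ; b'ⱼ)`. -/
def tfpMat {h h' n n' t : ℕ} (B : Matrix (Fin h) (Fin n) ℤ)
    (B' : Matrix (Fin h') (Fin n') ℤ) (φ : Fin n → Fin t) (φ' : Fin n' → Fin t) :
    Matrix (Fin h ⊕ Fin h') (tfpIdx n n' t φ φ') ℤ :=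
  Matrix.of fun k p => Sum.elim (fun a => B a p.1.1) (fun a => B' a p.1.2) k

/-- The map `ξ` sending `e_{i,j}` to `e_{φ(i)} = e_{φ'(j)}`. -/
def xiMap {n n' t : ℕ} (φ : Fin n → Fin t) (φ' : Fin n' → Fin t)
    (w : tfpIdx n n' t φ φ' → ℤ) : Fin t → ℤ :=
  fun a => ∑ p : tfpIdx n n' t φ φ', if φ p.1.1 = a then w p else 0

/-- The projection `ψ` sending `e_{i,j}` to `eᵢ`. -/
def psiMap {n n' t : ℕ} (φ : Fin n → Fin t) (φ' : Fin n' → Fin t)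
    (w : tfpIdx n n' t φ φ' → ℤ) : Fin n → ℤ :=
  fun i => ∑ p : tfpIdx n n' t φ φ', if p.1.1 = i then w p else 0

/-- The projection `ψ'` sending `e_{i,j}` to `eⱼ`. -/
def psiMap' {n n' t : ℕ} (φ : Fin n → Fin t) (φ' : Fin n' → Fin t)
    (w : tfpIdx n n' t φ φ' → ℤ) : Fin n' → ℤ :=
  fun j => ∑ p : tfpIdx n n' t φ φ', if p.1.2 = j then w p else 0

/-- Positive part of an integer vector. -/
def pos {ι : Type*} (v : ι → ℤ) : ι → ℤ := fun i => max (v i) 0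

/-- Negative part of an integer vector. -/
def neg {ι : Type*} (v : ι → ℤ) : ι → ℤ := fun i => max (-v i) 0

/-- `mt` is a glue of `m` and `m'`:  `mt = P - N` where the nonnegative vectors `P`
and `N` project under `ψ, ψ'` onto the extensions `m̄⁺ = m⁺ + a`, `m̄⁻ = m⁻ + a`,
`m̄'⁺ = m'⁺ + b`, `m̄'⁻ = m'⁻ + b`, with `φ(a) = v⁺`, `φ'(b) = v⁻` for
`v = φ'(m'⁺) - φ(m⁺)`. -/
def isGlue {n n' t : ℕ} (φ : Fin n → Fin t) (φ' : Fin n' → Fin t)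
    (m : Fin n → ℤ) (m' : Fin n' → ℤ) (mt : tfpIdx n n' t φ φ' → ℤ) : Prop :=
  ∃ P N : tfpIdx n n' t φ φ' → ℤ, 0 ≤ P ∧ 0 ≤ N ∧ mt = P - N ∧
    ∃ (a : Fin n → ℤ) (b : Fin n' → ℤ), 0 ≤ a ∧ 0 ≤ b ∧
      marg φ a = pos (marg φ' (pos m') - marg φ (pos m)) ∧
      marg φ' b = neg (marg φ' (pos m') - marg φ (pos m)) ∧
      psiMap φ φ' P = pos m + a ∧ psiMap φ φ' N = neg m + a ∧
      psiMap' φ φ' P = pos m' + b ∧ psiMap' φ φ' N = neg m' + b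

def isAddPreorder {ι : Type*} (R : (ι → ℤ) → (ι → ℤ) → Prop) : Prop :=
  (∀ u, R u u) ∧ (∀ u v w, R u v → R v w → R u w) ∧
  (∀ u v, R u v ∨ R v u) ∧ (∀ u v w, R u v → R (u + w) (v + w))

def dstep {ι : Type*} (F M : Set (ι → ℤ)) (R : (ι → ℤ) → (ι → ℤ) → Prop)
    (u v : ι → ℤ) : Prop :=
  u ∈ F ∧ v ∈ F ∧ (v - u ∈ M ∨ u - v ∈ M) ∧ R u v

def mutReach {ι : Type*} (F M : Set (ι → ℤ)) (R : (ι → ℤ) → (ι → ℤ) → Prop)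
    (u v : ι → ℤ) : Prop :=
  Relation.ReflTransGen (dstep F M R) u v ∧ Relation.ReflTransGen (dstep F M R) v u

def isSink {ι : Type*} (F M : Set (ι → ℤ)) (R : (ι → ℤ) → (ι → ℤ) → Prop)
    (u : ι → ℤ) : Prop :=
  u ∈ F ∧ ∀ v, Relation.ReflTransGen (dstep F M R) u v →
    Relation.ReflTransGen (dstep F M R) v u

def weakConn {ι : Type*} (F M : Set (ι → ℤ)) (R : (ι → ℤ) → (ι → ℤ) → Prop) : Prop :=
  ∀ u ∈ F, ∀ v ∈ F,
    Relation.ReflTransGen (fun a b => dstep F M R a b ∨ dstep F M R b a) u v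

def isGroebner {ι : Type*} (Fam : Set (Set (ι → ℤ))) (M : Set (ι → ℤ))
    (R : (ι → ℤ) → (ι → ℤ) → Prop) : Prop :=
  ∀ F ∈ Fam, weakConn F M R ∧
    (∀ u v, isSink F M R u → isSink F M R v → mutReach F M R u v) ∧
    (∀ u, isSink F M R u → ∀ v ∈ F, R v u)

/-- `M` is an `(ℱ, φ, ⪰)`-lift of `G` (Definition 3.2), for an additive map `φm`. -/
def isLiftF {ι κ : Type*} (Fam : Set (Set (ι → ℤ))) (φm : (ι → ℤ) → (κ → ℤ))
    (R : (ι → ℤ) → (ι → ℤ) → Prop) (G : Set (κ → ℤ)) (M : Set (ι → ℤ)) : Prop :=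
  ∀ F ∈ Fam, ∀ v ∈ F, ∀ v' ∈ F, R v v' → φm (v - v') ∈ G →
    ∃ m₀ m : ι → ℤ, φm m₀ = 0 ∧ m ∈ M ∧ v + m₀ ∈ F ∧ v + m₀ + m ∈ F ∧
      R v (v + m₀) ∧ R (v + m₀) (v + m₀ + m) ∧ φm (v + m₀ + m) = φm v'

/-- The family `ℱ(M)` of all fibers of an integer matrix `M`. -/
def matFam {ι κ : Type*} [Fintype ι] (Mat : Matrix κ ι ℤ) : Set (Set (ι → ℤ)) :=
  {F | ∃ b : κ → ℤ, F = {w | 0 ≤ w ∧ Mat.mulVec w = b}}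

section Pushforward

variable {ι κ : Type*} [Fintype ι] [DecidableEq κ]

def pushforward (f : ι → κ) : (ι → ℤ) →+ (κ → ℤ) where
  toFun v a := ∑ i, if f i = a then v i else 0
  map_zero' := by ext; simp
  map_add' x y := by
    ext a; simp only [Pi.add_apply, ← Finset.sum_add_distrib, ite_add_ite, add_zero]

theorem pushforward_apply (f : ι → κ) (v : ι → ℤ) (a : κ) :
    pushforward f v a = ∑ i, if f i = a then v i else 0 := rfl

theorem pushforward_mono (f : ι → κ) : Monotone (pushforward f) := fun x y h a =>
  Finset.sum_le_sum fun i _ => by split_ifs <;> simp [h i]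

theorem pushforward_nonneg (f : ι → κ) {x : ι → ℤ} (hx : 0 ≤ x) : 0 ≤ pushforward f x := by
  simpa using pushforward_mono f hx

theorem pushforward_single (f : ι → κ) [DecidableEq ι] (i : ι) (c : ℤ) :
    pushforward f (Pi.single i c) = Pi.single (f i) c := by
  ext a
  rw [pushforward_apply, Finset.sum_eq_single i (fun j _ hj => by simp [hj]) (by simp)]
  by_cases h : f i = a
  · subst h; simp
  · simp [h, Ne.symm h]

theorem pushforward_pushforward {τ : Type*} [Fintype κ] [DecidableEq τ] (g : κ → τ) (f : ι → κ)
    (v : ι → ℤ) : pushforward g (pushforward f v) = pushforward (g ∘ f) v := by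
  ext c
  calc ∑ b, (if g b = c then ∑ i, if f i = b then v i else 0 else 0)
      = ∑ b, ∑ i, if f i = b then (if g b = c then v i else 0) else 0 :=
        Finset.sum_congr rfl fun b _ => by by_cases h : g b = c <;> simp [h]
    _ = ∑ i, ∑ b, if f i = b then (if g b = c then v i else 0) else 0 := Finset.sum_comm
    _ = ∑ i, if g (f i) = c then v i else 0 := by simp

theorem le_pushforward_apply (f : ι → κ) {x : ι → ℤ} (hx : 0 ≤ x) (i : ι) :
    x i ≤ pushforward f x (f i) :=
  calc x i = if f i = f i then x i else 0 := by simp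
    _ ≤ ∑ j, if f j = f i then x j else 0 :=
      Finset.single_le_sum (f := fun j => if f j = f i then x j else 0)
        (fun j _ => by split_ifs; exacts [hx j, le_rfl]) (Finset.mem_univ i)

theorem exists_pos_of_pushforward_apply_pos (f : ι → κ) {x : ι → ℤ} {a : κ}
    (h : 0 < pushforward f x a) : ∃ i, f i = a ∧ 0 < x i := by
  obtain ⟨i, -, hi⟩ := Finset.exists_lt_of_sum_lt (f := fun _ => (0 : ℤ))
    (g := fun i => if f i = a then x i else 0) (by simpa [pushforward_apply] using h)
  by_cases hfi : f i = a
  · exact ⟨i, hfi, by simpa [hfi] using hi⟩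
  · simp [hfi] at hi

end Pushforward

theorem sub_single_one_nonneg {ι : Type*} [DecidableEq ι] {x : ι → ℤ} (hx : 0 ≤ x) {i : ι}
    (hi : 0 < x i) : 0 ≤ x - Pi.single i 1 := by
  intro j
  by_cases h : j = i
  · subst h; simpa using Int.add_one_le_iff.2 hi
  · simpa [h] using hx j

section Transport

variable {ι ι' κ : Type*} [Fintype ι] [Fintype ι'] [DecidableEq ι] [DecidableEq κ]

theorem exists_le_pushforward_eq [Fintype κ] (f : ι → κ) {z : ι → ℤ} {c : κ → ℤ}
    (hz : 0 ≤ z) (hc : 0 ≤ c) (hcz : c ≤ pushforward f z) :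
    ∃ a, 0 ≤ a ∧ a ≤ z ∧ pushforward f a = c := by
  obtain ⟨k, hk⟩ := Int.eq_ofNat_of_zero_le (Fintype.sum_nonneg hc)
  induction k generalizing z c with
  | zero =>
    obtain rfl : c = 0 := (Fintype.sum_eq_zero_iff_of_nonneg hc).1 hk
    exact ⟨0, le_rfl, hz, map_zero _⟩
  | succ k ih =>
    obtain ⟨α, -, hα⟩ := Finset.exists_lt_of_sum_lt (s := .univ) (f := 0) (g := c) (by simp [hk])
    obtain ⟨i, rfl, hi⟩ := exists_pos_of_pushforward_apply_pos f (hα.trans_le (hcz _))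
    obtain ⟨a, ha, haz, hac⟩ := ih (sub_single_one_nonneg hz hi) (sub_single_one_nonneg hc hα)
      (by rw [map_sub, pushforward_single]; exact sub_le_sub_right hcz _)
      (by simp [Finset.sum_sub_distrib, hk])
    refine ⟨a + Pi.single i 1, add_nonneg ha (Pi.single_nonneg.2 zero_le_one), ?_, ?_⟩
    · exact le_sub_iff_add_le.mp haz
    · rw [map_add, hac, pushforward_single, sub_add_cancel]

theorem exists_transport [DecidableEq ι'] (f : ι → κ) (g : ι' → κ) {x : ι → ℤ} {y : ι' → ℤ}
    (hx : 0 ≤ x) (hy : 0 ≤ y) (hxy : pushforward f x = pushforward g y) :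
    ∃ W : {p : ι × ι' // f p.1 = g p.2} → ℤ, 0 ≤ W ∧
      pushforward (fun p => p.1.1) W = x ∧ pushforward (fun p => p.1.2) W = y := by
  obtain ⟨k, hk⟩ := Int.eq_ofNat_of_zero_le (Fintype.sum_nonneg hx)
  induction k generalizing x y with
  | zero =>
    obtain rfl : x = 0 := (Fintype.sum_eq_zero_iff_of_nonneg hx).1 hk
    obtain rfl : y = 0 := funext fun j => le_antisymm
      (by simpa [← hxy] using le_pushforward_apply g hy j) (hy j)
    exact ⟨0, le_rfl, map_zero _, map_zero _⟩
  | succ k ih =>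
    obtain ⟨i, -, hi⟩ := Finset.exists_lt_of_sum_lt (s := .univ) (f := 0) (g := x) (by simp [hk])
    obtain ⟨j, hj, hyj⟩ := exists_pos_of_pushforward_apply_pos g
      ((hi.trans_le (le_pushforward_apply f hx i)).trans_eq (congrFun hxy (f i)))
    obtain ⟨W, hW, hWx, hWy⟩ := ih (sub_single_one_nonneg hx hi) (sub_single_one_nonneg hy hyj)
      (by rw [map_sub, map_sub, pushforward_single, pushforward_single, hxy, hj])
      (by simp [Finset.sum_sub_distrib, hk])
    refine ⟨W + Pi.single ⟨(i, j), hj.symm⟩ 1, add_nonneg hW (Pi.single_nonneg.2 zero_le_one),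
      ?_, ?_⟩
    · rw [map_add, hWx, pushforward_single, sub_add_cancel]
    · rw [map_add, hWy, pushforward_single, sub_add_cancel]

theorem exists_le_sub_pushforward_eq_pos [Fintype κ] (f : ι → κ) (g : ι' → κ)
    {x p : ι → ℤ} {y q : ι' → ℤ} (hpx : p ≤ x) (hqy : q ≤ y)
    (hxy : pushforward f x = pushforward g y) :
    ∃ a, 0 ≤ a ∧ a ≤ x - p ∧ pushforward f a = pos (pushforward g q - pushforward f p) := by
  refine exists_le_pushforward_eq f (sub_nonneg.2 hpx) (fun _ => le_max_right _ _) fun α => ?_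
  have hq : pushforward g q α ≤ pushforward g y α := pushforward_mono g hqy α
  have hp : pushforward f p α ≤ pushforward f x α := pushforward_mono f hpx α
  have hxyα := congrFun hxy α
  simp only [pos, map_sub, Pi.sub_apply]
  omega

end Transport

open Matrix

theorem pos_sub_neg {ι : Type*} (v : ι → ℤ) : pos v - neg v = v := by
  ext i; simp only [pos, neg, Pi.sub_apply]; omega

theorem pos_nonneg {ι : Type*} (v : ι → ℤ) : 0 ≤ pos v := fun _ => le_max_right _ _

theorem neg_nonneg {ι : Type*} (v : ι → ℤ) : 0 ≤ neg v := fun _ => le_max_right _ _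

theorem neg_le_of_nonneg_add {ι : Type*} {x m : ι → ℤ} (hx : 0 ≤ x) (hxm : 0 ≤ x + m) :
    neg m ≤ x := fun i => max_le (by linarith [show 0 ≤ x i + m i from hxm i]) (hx i)

theorem mulVec_pushforward {ι κ κ' : Type*} [Fintype ι] [Fintype κ] [DecidableEq κ]
    (B : Matrix κ' κ ℤ) (f : ι → κ) (w : ι → ℤ) :
    B *ᵥ pushforward f w = B.submatrix id f *ᵥ w := by
  ext k
  simp only [Matrix.mulVec, dotProduct, pushforward_apply, Finset.mul_sum, mul_ite, mul_zero]
  rw [Finset.sum_comm]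
  simp

def fiber {ι κ : Type*} [Fintype ι] (Mat : Matrix κ ι ℤ) (b : κ → ℤ) : Set (ι → ℤ) :=
  {w | 0 ≤ w ∧ Mat *ᵥ w = b}

section ToricFiberProduct

variable {n n' t : ℕ} {φ : Fin n → Fin t} {φ' : Fin n' → Fin t}

theorem marg_eq_pushforward (φ : Fin n → Fin t) : marg φ = pushforward φ := rfl

theorem psiMap_eq_pushforward :
    psiMap φ φ' = pushforward (fun p : tfpIdx n n' t φ φ' => p.1.1) := rfl

theorem psiMap'_eq_pushforward :
    psiMap' φ φ' = pushforward (fun p : tfpIdx n n' t φ φ' => p.1.2) := rfl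

theorem xiMap_eq_pushforward :
    xiMap φ φ' = pushforward (fun p : tfpIdx n n' t φ φ' => φ p.1.1) := rfl

theorem marg_add (x y : Fin n → ℤ) : marg φ (x + y) = marg φ x + marg φ y :=
  map_add (pushforward φ) x y

theorem marg_sub (x y : Fin n → ℤ) : marg φ (x - y) = marg φ x - marg φ y :=
  map_sub (pushforward φ) x y

theorem psiMap_add (x y : tfpIdx n n' t φ φ' → ℤ) :
    psiMap φ φ' (x + y) = psiMap φ φ' x + psiMap φ φ' y := by
  rw [psiMap_eq_pushforward]; exact map_add _ x y

theorem psiMap_sub (x y : tfpIdx n n' t φ φ' → ℤ) :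
    psiMap φ φ' (x - y) = psiMap φ φ' x - psiMap φ φ' y := by
  rw [psiMap_eq_pushforward]; exact map_sub _ x y

theorem psiMap'_add (x y : tfpIdx n n' t φ φ' → ℤ) :
    psiMap' φ φ' (x + y) = psiMap' φ φ' x + psiMap' φ φ' y := by
  rw [psiMap'_eq_pushforward]; exact map_add _ x y

theorem psiMap'_sub (x y : tfpIdx n n' t φ φ' → ℤ) :
    psiMap' φ φ' (x - y) = psiMap' φ φ' x - psiMap' φ φ' y := by
  rw [psiMap'_eq_pushforward]; exact map_sub _ x y

theorem xiMap_sub (x y : tfpIdx n n' t φ φ' → ℤ) :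
    xiMap φ φ' (x - y) = xiMap φ φ' x - xiMap φ φ' y := by
  rw [xiMap_eq_pushforward]; exact map_sub _ x y

theorem psiMap_nonneg {w : tfpIdx n n' t φ φ' → ℤ} (hw : 0 ≤ w) : 0 ≤ psiMap φ φ' w :=
  pushforward_nonneg _ hw

theorem psiMap'_nonneg {w : tfpIdx n n' t φ φ' → ℤ} (hw : 0 ≤ w) : 0 ≤ psiMap' φ φ' w :=
  pushforward_nonneg _ hw

theorem marg_psiMap (w : tfpIdx n n' t φ φ' → ℤ) : marg φ (psiMap φ φ' w) = xiMap φ φ' w :=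
  pushforward_pushforward φ (fun p : tfpIdx n n' t φ φ' => p.1.1) w

theorem marg_psiMap' (w : tfpIdx n n' t φ φ' → ℤ) : marg φ' (psiMap' φ φ' w) = xiMap φ φ' w := by
  rw [marg_eq_pushforward, psiMap'_eq_pushforward, pushforward_pushforward, xiMap_eq_pushforward]
  exact congrArg (pushforward · w) (funext fun p => p.2.symm)

theorem tfpMat_mulVec_eq_iff {h h' : ℕ} (B : Matrix (Fin h) (Fin n) ℤ)
    (B' : Matrix (Fin h') (Fin n') ℤ) (w w' : tfpIdx n n' t φ φ' → ℤ) :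
    tfpMat B B' φ φ' *ᵥ w = tfpMat B B' φ φ' *ᵥ w' ↔
      B *ᵥ psiMap φ φ' w = B *ᵥ psiMap φ φ' w' ∧ B' *ᵥ psiMap' φ φ' w = B' *ᵥ psiMap' φ φ' w' := by
  simp only [psiMap_eq_pushforward, psiMap'_eq_pushforward, mulVec_pushforward, funext_iff,
    Sum.forall]
  rfl

theorem exists_nonneg_psiMap_eq {x : Fin n → ℤ} {y : Fin n' → ℤ} (hx : 0 ≤ x) (hy : 0 ≤ y)
    (hxy : marg φ x = marg φ' y) :
    ∃ w, 0 ≤ w ∧ psiMap φ φ' w = x ∧ psiMap' φ φ' w = y :=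
  exists_transport φ φ' hx hy hxy

theorem isGlue.psiMap_eq {m : Fin n → ℤ} {m' : Fin n' → ℤ} {mt : tfpIdx n n' t φ φ' → ℤ}
    (hg : isGlue φ φ' m m' mt) : psiMap φ φ' mt = m := by
  obtain ⟨P, N, -, -, rfl, a, b, -, -, -, -, hP, hN, -, -⟩ := hg
  rw [psiMap_sub, hP, hN, add_sub_add_right_eq_sub, pos_sub_neg]

theorem isGlue.psiMap'_eq {m : Fin n → ℤ} {m' : Fin n' → ℤ} {mt : tfpIdx n n' t φ φ' → ℤ}
    (hg : isGlue φ φ' m m' mt) : psiMap' φ φ' mt = m' := by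
  obtain ⟨P, N, -, -, rfl, a, b, -, -, -, -, -, -, hP, hN⟩ := hg
  rw [psiMap'_sub, hP, hN, add_sub_add_right_eq_sub, pos_sub_neg]

theorem exists_glue {m x : Fin n → ℤ} {m' y : Fin n' → ℤ} (hm : marg φ m = marg φ' m')
    (hx : 0 ≤ x) (hy : 0 ≤ y) (hxy : marg φ x = marg φ' y)
    (hxm : 0 ≤ x + m) (hym : 0 ≤ y + m') :
    ∃ w mt, 0 ≤ w ∧ psiMap φ φ' w = x ∧ psiMap' φ φ' w = y ∧ isGlue φ φ' m m' mt ∧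
      0 ≤ w + mt := by
  have hkey : marg φ (pos m) - marg φ (neg m) = marg φ' (pos m') - marg φ' (neg m') := by
    rwa [← marg_sub, ← marg_sub, pos_sub_neg, pos_sub_neg]
  obtain ⟨a, ha, hax, ha'⟩ := exists_le_sub_pushforward_eq_pos φ φ'
    (neg_le_of_nonneg_add hx hxm) (neg_le_of_nonneg_add hy hym) hxy
  obtain ⟨b, hb, hby, hb'⟩ := exists_le_sub_pushforward_eq_pos φ' φ
    (neg_le_of_nonneg_add hy hym) (neg_le_of_nonneg_add hx hxm) hxy.symm
  replace ha' : marg φ a = pos (marg φ' (pos m') - marg φ (pos m)) := by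
    ext α; have h₁ := congrFun hkey α; have h₂ := congrFun ha' α
    simp only [marg_eq_pushforward, pos, Pi.sub_apply] at h₁ h₂ ⊢; omega
  replace hb' : marg φ' b = neg (marg φ' (pos m') - marg φ (pos m)) := by
    ext α; have h₁ := congrFun hkey α; have h₂ := congrFun hb' α
    simp only [marg_eq_pushforward, pos, neg, Pi.sub_apply] at h₁ h₂ ⊢; omega
  have hN : marg φ (neg m + a) = marg φ' (neg m' + b) := by
    ext α; have h₁ := congrFun hkey α
    simp only [marg_add, ha', hb', pos, neg, Pi.add_apply, Pi.sub_apply] at h₁ ⊢; omega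
  have hP : marg φ (pos m + a) = marg φ' (pos m' + b) := by
    ext α
    simp only [marg_add, ha', hb', pos, neg, Pi.add_apply, Pi.sub_apply]; omega
  -- The glue is `P - N` and `w = N + D`, where `N`, `P`, `D` transport the extended negative
  -- parts, the extended positive parts and the remaining parts of `x` and `y`.
  obtain ⟨N, hN0, hNψ, hNψ'⟩ := exists_nonneg_psiMap_eq
    (add_nonneg (neg_nonneg m) ha) (add_nonneg (neg_nonneg m') hb) hN
  obtain ⟨P, hP0, hPψ, hPψ'⟩ := exists_nonneg_psiMap_eq
    (add_nonneg (pos_nonneg m) ha) (add_nonneg (pos_nonneg m') hb) hP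
  obtain ⟨D, hD0, hDψ, hDψ'⟩ := exists_nonneg_psiMap_eq
    (sub_nonneg.2 (le_sub_iff_add_le'.1 hax)) (sub_nonneg.2 (le_sub_iff_add_le'.1 hby))
    (by rw [marg_sub, marg_sub, hxy, hN])
  refine ⟨N + D, P - N, add_nonneg hN0 hD0, ?_, ?_,
    ⟨P, N, hP0, hN0, rfl, a, b, ha, hb, ha', hb', hPψ, hNψ, hPψ', hNψ'⟩, ?_⟩
  · rw [psiMap_add, hNψ, hDψ, add_sub_cancel]
  · rw [psiMap'_add, hNψ', hDψ', add_sub_cancel]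
  · exact (add_nonneg hD0 hP0).trans_eq (by abel)

theorem exists_glue_mem_fiber {h h' : ℕ} (B : Matrix (Fin h) (Fin n) ℤ)
    (B' : Matrix (Fin h') (Fin n') ℤ) {v : tfpIdx n n' t φ φ' → ℤ} {m x : Fin n → ℤ}
    {m' y : Fin n' → ℤ} (hm : marg φ m = marg φ' m') (hxy : marg φ x = marg φ' y)
    (hx : x ∈ fiber B (B *ᵥ psiMap φ φ' v)) (hxm : x + m ∈ fiber B (B *ᵥ psiMap φ φ' v))
    (hy : y ∈ fiber B' (B' *ᵥ psiMap' φ φ' v)) (hym : y + m' ∈ fiber B' (B' *ᵥ psiMap' φ φ' v)) :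
    ∃ w mt, w ∈ fiber (tfpMat B B' φ φ') (tfpMat B B' φ φ' *ᵥ v) ∧
      w + mt ∈ fiber (tfpMat B B' φ φ') (tfpMat B B' φ φ' *ᵥ v) ∧
      psiMap φ φ' w = x ∧ psiMap' φ φ' w = y ∧
      psiMap φ φ' (w + mt) = x + m ∧ psiMap' φ φ' (w + mt) = y + m' ∧ isGlue φ φ' m m' mt := by
  obtain ⟨w, mt, hw0, hψw, hψ'w, hglue, hwmt⟩ := exists_glue hm hx.1 hy.1 hxy hxm.1 hym.1
  have hψwmt : psiMap φ φ' (w + mt) = x + m := by rw [psiMap_add, hψw, hglue.psiMap_eq]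
  have hψ'wmt : psiMap' φ φ' (w + mt) = y + m' := by rw [psiMap'_add, hψ'w, hglue.psiMap'_eq]
  refine ⟨w, mt, ⟨hw0, ?_⟩, ⟨hwmt, ?_⟩, hψw, hψ'w, hψwmt, hψ'wmt, hglue⟩ <;>
    rw [tfpMat_mulVec_eq_iff]
  · rw [hψw, hψ'w]; exact ⟨hx.2, hy.2⟩
  · rw [hψwmt, hψ'wmt]; exact ⟨hxm.2, hym.2⟩

end ToricFiberProduct

theorem isLiftF.exists_of_compatible {n t : ℕ} {φ : Fin n → Fin t}
    {Fam : Set (Set (Fin n → ℤ))} {RB : (Fin n → ℤ) → (Fin n → ℤ) → Prop}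
    {RA : (Fin t → ℤ) → (Fin t → ℤ) → Prop} {G : Set (Fin t → ℤ)} {M : Set (Fin n → ℤ)}
    (hM : isLiftF Fam (marg φ) RB G M) (hrefl : ∀ u, RB u u)
    (hc : ∀ F ∈ Fam, ∀ u ∈ F, ∀ v ∈ F, marg φ u ≠ marg φ v →
      (RA (marg φ u) (marg φ v) ↔ RB u v))
    {F : Set (Fin n → ℤ)} (hF : F ∈ Fam) {u u' : Fin n → ℤ} (hu : u ∈ F) (hu' : u' ∈ F)
    (hRA : marg φ u ≠ marg φ u' → RA (marg φ u) (marg φ u')) (hG : marg φ (u - u') ∈ G) :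
    ∃ m₀ m, marg φ m₀ = 0 ∧ m ∈ M ∧ u + m₀ ∈ F ∧ u + m₀ + m ∈ F ∧
      RB u (u + m₀) ∧ RB (u + m₀) (u + m₀ + m) ∧ marg φ (u + m₀ + m) = marg φ u' := by
  by_cases heq : marg φ u = marg φ u'
  -- compatibility says nothing here, but the lift of the pair `(u, u)` already ends over `φ u'`
  · obtain ⟨m₀, m, h₀, hm, h₁, h₂, h₃, h₄, h₅⟩ :=
      hM F hF u hu u hu (hrefl u) (by rwa [marg_sub, ← heq, ← marg_sub] at hG)
    exact ⟨m₀, m, h₀, hm, h₁, h₂, h₃, h₄, h₅.trans heq⟩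
  · exact hM F hF u hu u' hu' ((hc F hF u hu u' hu' heq).1 (hRA heq)) hG

theorem stmt_15_general (t h h' n n' : ℕ)
    (B : Matrix (Fin h) (Fin n) ℤ) (B' : Matrix (Fin h') (Fin n') ℤ)
    (φ : Fin n → Fin t) (φ' : Fin n' → Fin t)
    (RB : (Fin n → ℤ) → (Fin n → ℤ) → Prop)
    (RB' : (Fin n' → ℤ) → (Fin n' → ℤ) → Prop)
    (RA : (Fin t → ℤ) → (Fin t → ℤ) → Prop)
    (RX : (tfpIdx n n' t φ φ' → ℤ) → (tfpIdx n n' t φ φ' → ℤ) → Prop)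
    (haB : isAddPreorder RB) (haB' : isAddPreorder RB')
    (hcB : ∀ F ∈ matFam B, ∀ u ∈ F, ∀ v ∈ F, marg φ u ≠ marg φ v →
      (RA (marg φ u) (marg φ v) ↔ RB u v))
    (hcB' : ∀ F ∈ matFam B', ∀ u ∈ F, ∀ v ∈ F, marg φ' u ≠ marg φ' v →
      (RA (marg φ' u) (marg φ' v) ↔ RB' u v))
    (hcX : ∀ F ∈ matFam (tfpMat B B' φ φ'), ∀ u ∈ F, ∀ v ∈ F,
      xiMap φ φ' u ≠ xiMap φ φ' v → (RA (xiMap φ φ' u) (xiMap φ φ' v) ↔ RX u v))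
    (hXψ : ∀ u₁ u₂ : tfpIdx n n' t φ φ' → ℤ,
      RB (psiMap φ φ' u₁) (psiMap φ φ' u₂) →
      RB' (psiMap' φ φ' u₁) (psiMap' φ φ' u₂) → RX u₁ u₂)
    (G : Set (Fin t → ℤ))
    (M : Set (Fin n → ℤ))
    (hM : isLiftF (matFam B) (marg φ) RB G M)
    (M' : Set (Fin n' → ℤ))
    (hM' : isLiftF (matFam B') (marg φ') RB' G M') :
    isLiftF (matFam (tfpMat B B' φ φ')) (xiMap φ φ') RX G
      {mt | ∃ m ∈ M, ∃ m' ∈ M', marg φ m = marg φ' m' ∧ isGlue φ φ' m m' mt} := by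
  rintro F ⟨b, rfl⟩ v ⟨hv0, rfl⟩ v' hv' hRX hGv
  have hRA : xiMap φ φ' v ≠ xiMap φ φ' v' → RA (xiMap φ φ' v) (xiMap φ φ' v') :=
    fun hne => (hcX _ ⟨_, rfl⟩ v ⟨hv0, rfl⟩ v' hv' hne).2 hRX
  obtain ⟨hBv', hB'v'⟩ := (tfpMat_mulVec_eq_iff B B' v' v).1 hv'.2
  obtain ⟨m₀, m, hm₀, hm, hx, hxm, hR₀, hR, hxv'⟩ := hM.exists_of_compatible haB.1 hcB ⟨_, rfl⟩
    ⟨psiMap_nonneg hv0, rfl⟩ ⟨psiMap_nonneg hv'.1, hBv'⟩ (by simpa only [marg_psiMap] using hRA)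
    (by rwa [← psiMap_sub, marg_psiMap])
  obtain ⟨m₀', m', hm₀', hm', hy, hym, hR₀', hR', hyv'⟩ := hM'.exists_of_compatible haB'.1 hcB'
    ⟨_, rfl⟩ ⟨psiMap'_nonneg hv0, rfl⟩ ⟨psiMap'_nonneg hv'.1, hB'v'⟩
    (by simpa only [marg_psiMap'] using hRA) (by rwa [← psiMap'_sub, marg_psiMap'])
  have hxξ : marg φ (psiMap φ φ' v + m₀) = xiMap φ φ' v := by
    rw [marg_add, hm₀, add_zero, marg_psiMap]
  have hyξ : marg φ' (psiMap' φ φ' v + m₀') = xiMap φ φ' v := by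
    rw [marg_add, hm₀', add_zero, marg_psiMap']
  have hmm' : marg φ m = marg φ' m' := by
    have := hxv'.trans ((marg_psiMap v').trans ((marg_psiMap' v').symm.trans hyv'.symm))
    rwa [marg_add _ m, marg_add _ m', hxξ, hyξ, add_right_inj] at this
  obtain ⟨w, mt, hw, hwmt, hψw, hψ'w, hψwmt, hψ'wmt, hglue⟩ :=
    exists_glue_mem_fiber B B' hmm' (hxξ.trans hyξ.symm) hx hxm hy hym
  refine ⟨w - v, mt, ?_, ⟨m, hm, m', hm', hmm', hglue⟩, ?_⟩
  · rw [xiMap_sub, ← marg_psiMap, hψw, hxξ, sub_self]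
  simp only [add_sub_cancel]
  refine ⟨hw, hwmt, hXψ v w ?_ ?_, hXψ w (w + mt) ?_ ?_, ?_⟩
  · rwa [hψw]
  · rwa [hψ'w]
  · rwa [hψw, hψwmt]
  · rwa [hψ'w, hψ'wmt]
  · rw [← marg_psiMap, hψwmt, hxv', marg_psiMap]

/-- Lemma 4.8: the glues of `φ`- and `φ'`-lifts of a `⪰_𝒜`-Gröbner
basis `𝒢` of `ξ(ℱ(ℬ ×_𝒜 ℬ'))` form a `(ℱ(ℬ×_𝒜ℬ'), ξ, ⪰_×)`-lift of `𝒢`. -/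
theorem stmt_15 (s t h h' n n' : ℕ)
    (A : Matrix (Fin s) (Fin t) ℤ)
    (B : Matrix (Fin h) (Fin n) ℤ) (B' : Matrix (Fin h') (Fin n') ℤ)
    (φ : Fin n → Fin t) (φ' : Fin n' → Fin t)
    (hφ : Function.Surjective φ) (hφ' : Function.Surjective φ')
    (hgrB : ∀ v, B.mulVec v = 0 → A.mulVec (marg φ v) = 0)
    (hgrB' : ∀ v, B'.mulVec v = 0 → A.mulVec (marg φ' v) = 0)
    (RB : (Fin n → ℤ) → (Fin n → ℤ) → Prop)
    (RB' : (Fin n' → ℤ) → (Fin n' → ℤ) → Prop)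
    (RA : (Fin t → ℤ) → (Fin t → ℤ) → Prop)
    (RX : (tfpIdx n n' t φ φ' → ℤ) → (tfpIdx n n' t φ φ' → ℤ) → Prop)
    (haB : isAddPreorder RB) (haB' : isAddPreorder RB')
    (haA : isAddPreorder RA) (haX : isAddPreorder RX)
    (hcB : ∀ F ∈ matFam B, ∀ u ∈ F, ∀ v ∈ F, marg φ u ≠ marg φ v →
      (RA (marg φ u) (marg φ v) ↔ RB u v))
    (hcB' : ∀ F ∈ matFam B', ∀ u ∈ F, ∀ v ∈ F, marg φ' u ≠ marg φ' v →
      (RA (marg φ' u) (marg φ' v) ↔ RB' u v))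
    (hcX : ∀ F ∈ matFam (tfpMat B B' φ φ'), ∀ u ∈ F, ∀ v ∈ F,
      xiMap φ φ' u ≠ xiMap φ φ' v → (RA (xiMap φ φ' u) (xiMap φ φ' v) ↔ RX u v))
    (hXψ : ∀ u₁ u₂ : tfpIdx n n' t φ φ' → ℤ,
      RB (psiMap φ φ' u₁) (psiMap φ φ' u₂) →
      RB' (psiMap' φ φ' u₁) (psiMap' φ φ' u₂) → RX u₁ u₂)
    (G : Set (Fin t → ℤ))
    (hG : isGroebner {S | ∃ F ∈ matFam (tfpMat B B' φ φ'), S = xiMap φ φ' '' F} G RA)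
    (M : Set (Fin n → ℤ)) (hMk : M ⊆ {v | B.mulVec v = 0})
    (hM : isLiftF (matFam B) (marg φ) RB G M)
    (M' : Set (Fin n' → ℤ)) (hMk' : M' ⊆ {v | B'.mulVec v = 0})
    (hM' : isLiftF (matFam B') (marg φ') RB' G M') :
    isLiftF (matFam (tfpMat B B' φ φ')) (xiMap φ φ') RX G
      {mt | ∃ m ∈ M, ∃ m' ∈ M', marg φ m = marg φ' m' ∧ isGlue φ φ' m m' mt} :=
  stmt_15_general t h h' n n' B B' φ φ' RB RB' RA RX haB haB' hcB hcB' hcX hXψ G M hM M' hM'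

end Stmt15
end

section
/- Let d = (p, 2, r) and C₃ = [12][13][23] the three-cycle (no three-way interaction model). For sequences i = i₁,…,i_k ∈ [p] and j = j₁,…,j_k ∈ [r] with pairwise distinct entries, define f_{i,j} = Σ_{t=1}^{k}(e_{i_t,1,j_t} − e_{i_t,2,j_t} + e_{i_t,2,j_{t+1}} − e_{i_t,1,j_{t+1}}) with j_{k+1} = j₁. Then the set ℳ of all f_{i,j} for k = 2,…,min(p,r) is the Graver basis of ker_ℤ ℬ_{C₃,d}; in particular ℳ is a Gröbner basis for every additive preorder. -/
/-!
With `v (i, 1, j) = -v (i, 0, j)`, the kernel of `ℬ_{C₃,(p,2,r)}` is the lattice of `p × r`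
integer tables with zero row and column sums, and `f_{i,j}` becomes the cycle table with `+1` at
`(i_t, j_t)` and `-1` at `(i_t, j_{t+1})`. A nonzero table with zero margins contains a cycle
conformally: go from a positive entry to a negative one in its row, then to a positive one in
that column, and so on until a periodic orbit of rows closes up. A table conformal to a cycle is
`0` or the cycle itself. Both facts transfer along the embedding, and they alone give the Graver
basis and, by induction on the `ℓ¹` distance inside a fiber, the Gröbner property.
-/

namespace Stmt16

/-- The design matrix of the hierarchical model of the 3-cycle `C₃ = [12][13][23]`
with state space `[p] × [2] × [r]`. -/
def designC3 (p r : ℕ) :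
    Matrix ((Fin p × Fin 2) ⊕ (Fin p × Fin r) ⊕ (Fin 2 × Fin r))
      (Fin p × Fin 2 × Fin r) ℤ :=
  Matrix.of fun k x =>
    Sum.elim (fun e => if e = (x.1, x.2.1) then 1 else 0)
      (Sum.elim (fun e => if e = (x.1, x.2.2) then 1 else 0)
        (fun e => if e = (x.2.1, x.2.2) then 1 else 0)) k

/-- The set of moves `f_{i,j}` for sequences `i`, `j` of length `k` (written as
`k + 2` so that `2 ≤ length`) with pairwise distinct entries,
`f_{i,j} = Σ_t (e_{i_t,1,j_t} − e_{i_t,2,j_t} + e_{i_t,2,j_{t+1}} − e_{i_t,1,j_{t+1}})`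
with cyclic indexing `j_{k+1} = j₁`. -/
def movesC3 (p r : ℕ) : Set (Fin p × Fin 2 × Fin r → ℤ) :=
  {f | ∃ k : ℕ, k + 2 ≤ min p r ∧
    ∃ (i : Fin (k + 2) → Fin p) (j : Fin (k + 2) → Fin r),
      Function.Injective i ∧ Function.Injective j ∧
      f = ∑ t : Fin (k + 2),
        (Pi.single (i t, (0 : Fin 2), j t) (1 : ℤ)
          - Pi.single (i t, (1 : Fin 2), j t) 1
          + Pi.single (i t, (1 : Fin 2), j (t + 1)) 1
          - Pi.single (i t, (0 : Fin 2), j (t + 1)) 1)}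

def isAddPreorder {ι : Type*} (R : (ι → ℤ) → (ι → ℤ) → Prop) : Prop :=
  (∀ u, R u u) ∧ (∀ u v w, R u v → R v w → R u w) ∧
  (∀ u v, R u v ∨ R v u) ∧ (∀ u v w, R u v → R (u + w) (v + w))

def dstep {ι : Type*} (F M : Set (ι → ℤ)) (R : (ι → ℤ) → (ι → ℤ) → Prop)
    (u v : ι → ℤ) : Prop :=
  u ∈ F ∧ v ∈ F ∧ (v - u ∈ M ∨ u - v ∈ M) ∧ R u v

def mutReach {ι : Type*} (F M : Set (ι → ℤ)) (R : (ι → ℤ) → (ι → ℤ) → Prop)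
    (u v : ι → ℤ) : Prop :=
  Relation.ReflTransGen (dstep F M R) u v ∧ Relation.ReflTransGen (dstep F M R) v u

def isSink {ι : Type*} (F M : Set (ι → ℤ)) (R : (ι → ℤ) → (ι → ℤ) → Prop)
    (u : ι → ℤ) : Prop :=
  u ∈ F ∧ ∀ v, Relation.ReflTransGen (dstep F M R) u v →
    Relation.ReflTransGen (dstep F M R) v u

def weakConn {ι : Type*} (F M : Set (ι → ℤ)) (R : (ι → ℤ) → (ι → ℤ) → Prop) : Prop :=
  ∀ u ∈ F, ∀ v ∈ F,
    Relation.ReflTransGen (fun a b => dstep F M R a b ∨ dstep F M R b a) u v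

def isGroebner {ι : Type*} (Fam : Set (Set (ι → ℤ))) (M : Set (ι → ℤ))
    (R : (ι → ℤ) → (ι → ℤ) → Prop) : Prop :=
  ∀ F ∈ Fam, weakConn F M R ∧
    (∀ u v, isSink F M R u → isSink F M R v → mutReach F M R u v) ∧
    (∀ u, isSink F M R u → ∀ v ∈ F, R v u)

/-- The family of lattice fibers of a lattice given as a set. -/
def latFam {ι : Type*} (Lat : Set (ι → ℤ)) : Set (Set (ι → ℤ)) :=
  {F | ∃ u : ι → ℤ, F = {w | 0 ≤ w ∧ w - u ∈ Lat}}

/-- The Graver basis (primitive elements) of a lattice given as a set. -/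
def graver {ι : Type*} (Lat : Set (ι → ℤ)) : Set (ι → ℤ) :=
  {v | v ∈ Lat ∧ v ≠ 0 ∧ ∀ v₁ v₂ : ι → ℤ, v₁ ∈ Lat → v₂ ∈ Lat → v = v₁ + v₂ →
    (∀ i, 0 ≤ v₁ i * v₂ i) → v₁ = 0 ∨ v₂ = 0}


section Conformal

variable {ι : Type*}

/-- The conformal order `m ⊑ v` of Graver theory. -/
def ConformalLE (m v : ι → ℤ) : Prop :=
  ∀ c, (0 ≤ m c ∧ m c ≤ v c) ∨ (v c ≤ m c ∧ m c ≤ 0)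

theorem ConformalLE.eq_zero_of_eq_zero {m v : ι → ℤ} (h : ConformalLE m v) {c : ι}
    (hc : v c = 0) : m c = 0 := by
  have := h c; omega

theorem conformalLE_zero_iff {m : ι → ℤ} : ConformalLE m 0 ↔ m = 0 :=
  ⟨fun h => funext fun _ => h.eq_zero_of_eq_zero rfl, fun h c => by simp [h]⟩

theorem conformalLE_add_of_mul_nonneg {a b : ι → ℤ} (h : ∀ c, 0 ≤ a c * b c) :
    ConformalLE a (a + b) := by
  intro c
  simp only [Pi.add_apply]
  rcases le_total 0 (a c) with ha | ha <;> rcases le_total 0 (b c) with hb | hb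
  · left; omega
  · rcases mul_eq_zero.1 ((mul_nonpos_of_nonneg_of_nonpos ha hb).antisymm (h c)) with h0 | h0
      <;> omega
  · rcases mul_eq_zero.1 ((mul_nonpos_of_nonpos_of_nonneg ha hb).antisymm (h c)) with h0 | h0
      <;> omega
  · right; omega

theorem ConformalLE.mul_sub_nonneg {m v : ι → ℤ} (h : ConformalLE m v) (c : ι) :
    0 ≤ m c * (v - m) c := by
  rcases h c with ⟨h₁, h₂⟩ | ⟨h₁, h₂⟩
  · exact mul_nonneg h₁ (by simpa using h₂)
  · exact mul_nonneg_of_nonpos_of_nonpos h₂ (by simpa using h₁)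

theorem ConformalLE.sum_natAbs_sub_lt [Fintype ι] {m v : ι → ℤ} (h : ConformalLE m v)
    (hm : m ≠ 0) : ∑ c, ((v - m) c).natAbs < ∑ c, (v c).natAbs := by
  obtain ⟨c₀, hc₀⟩ := Function.ne_iff.1 hm
  refine Finset.sum_lt_sum (fun c _ => ?_) ⟨c₀, Finset.mem_univ _, ?_⟩
  · have := h c; simp only [Pi.sub_apply]; omega
  · have := h c₀; simp only [Pi.sub_apply, Pi.zero_apply] at hc₀ ⊢; omega

end Conformal

section Graver

variable {ι κ : Type*}

structure IsConformalGenerating (L : AddSubgroup (ι → ℤ)) (M : Set (ι → ℤ)) : Prop where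
  subset : M ⊆ L
  zero_notMem : (0 : ι → ℤ) ∉ M
  exists_conformalLE : ∀ v ∈ L, v ≠ 0 → ∃ m ∈ M, ConformalLE m v

def IsPrimitiveIn (L : AddSubgroup (ι → ℤ)) (m : ι → ℤ) : Prop :=
  ∀ w ∈ L, ConformalLE w m → w = 0 ∨ w = m

variable {L : AddSubgroup (ι → ℤ)} {M : Set (ι → ℤ)}

theorem IsConformalGenerating.eq_graver (hM : IsConformalGenerating L M)
    (hprim : ∀ m ∈ M, IsPrimitiveIn L m) : M = graver L := by
  ext v
  constructor
  · intro hv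
    refine ⟨hM.subset hv, fun h => hM.zero_notMem (h ▸ hv), ?_⟩
    rintro v₁ v₂ h₁ - rfl hmul
    rcases hprim _ hv v₁ h₁ (conformalLE_add_of_mul_nonneg hmul) with h | h
    · exact .inl h
    · exact .inr (by simpa using h)
  · rintro ⟨hvL, hv0, hprimv⟩
    obtain ⟨m, hmM, hmv⟩ := hM.exists_conformalLE v hvL hv0
    have hm : m ∈ L := hM.subset hmM
    rcases hprimv m (v - m) hm (L.sub_mem hvL hm) (by abel) hmv.mul_sub_nonneg with h | h
    · exact absurd (h ▸ hmM) hM.zero_notMem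
    · rwa [sub_eq_zero.1 h]

theorem IsConformalGenerating.map (hM : IsConformalGenerating L M)
    (φ : (ι → ℤ) →+ (κ → ℤ)) (hφ : ∀ a b, ConformalLE (φ a) (φ b) ↔ ConformalLE a b) :
    IsConformalGenerating (L.map φ) (φ '' M) where
  subset := Set.image_mono hM.subset
  zero_notMem := by
    rintro ⟨m, hm, hm0⟩
    refine hM.zero_notMem (conformalLE_zero_iff.1 ((hφ m 0).1 ?_) ▸ hm)
    rw [hm0, map_zero]
    exact conformalLE_zero_iff.2 rfl
  exists_conformalLE := by
    rintro _ ⟨v, hv, rfl⟩ hv0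
    obtain ⟨m, hm, hmv⟩ := hM.exists_conformalLE v hv (by rintro rfl; exact hv0 (map_zero φ))
    exact ⟨φ m, ⟨m, hm, rfl⟩, (hφ m v).2 hmv⟩

theorem IsPrimitiveIn.map {m : ι → ℤ} (hm : IsPrimitiveIn L m)
    (φ : (ι → ℤ) →+ (κ → ℤ)) (hφ : ∀ a b, ConformalLE (φ a) (φ b) ↔ ConformalLE a b) :
    IsPrimitiveIn (L.map φ) (φ m) := by
  rintro _ ⟨w, hw, rfl⟩ hwm
  rcases hm w hw ((hφ w m).1 hwm) with rfl | rfl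
  · exact .inl (map_zero φ)
  · exact .inr rfl

end Graver

section Groebner

variable {ι : Type*} {F M : Set (ι → ℤ)} {R : (ι → ℤ) → (ι → ℤ) → Prop}

theorem isSink.of_reflTransGen {u v : ι → ℤ} (hu : isSink F M R u)
    (huv : Relation.ReflTransGen (dstep F M R) u v) : isSink F M R v := by
  refine ⟨?_, fun w hvw => (hu.2 w (huv.trans hvw)).trans huv⟩
  rcases Relation.ReflTransGen.cases_tail huv with rfl | ⟨_, -, hstep⟩
  exacts [hu.1, hstep.2.1]

theorem rel_of_reflTransGen_dstep (hR : isAddPreorder R) {u v : ι → ℤ}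
    (h : Relation.ReflTransGen (dstep F M R) u v) : R u v := by
  induction h with
  | refl => exact hR.1 u
  | tail _ hstep ih => exact hR.2.1 _ _ _ ih hstep.2.2.2

def fiber (L : AddSubgroup (ι → ℤ)) (u₀ : ι → ℤ) : Set (ι → ℤ) := {w | 0 ≤ w ∧ w - u₀ ∈ L}

variable {L : AddSubgroup (ι → ℤ)}

theorem ConformalLE.add_sub_mem_fiber {u₀ u v m : ι → ℤ}
    (hu : u ∈ fiber L u₀) (hv : v ∈ fiber L u₀)
    (hmL : m ∈ L) (hm : ConformalLE m (v - u)) :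
    u + m ∈ fiber L u₀ ∧ v - m ∈ fiber L u₀ := by
  refine ⟨⟨fun c => ?_, ?_⟩, ⟨fun c => ?_, ?_⟩⟩
  · have := hm c; have := hu.1 c; have := hv.1 c; simp only [Pi.add_apply, Pi.sub_apply] at *
    omega
  · simpa [add_sub_right_comm] using L.add_mem hu.2 hmL
  · have := hm c; have := hu.1 c; have := hv.1 c; simp only [Pi.sub_apply] at *
    omega
  · simpa [sub_right_comm] using L.sub_mem hv.2 hmL

variable [Fintype ι]

/-- The pair `u, v` is replaced by `u + m, v` or `u, v - m` for some `m ∈ M` conformal to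
`v - u`, which shortens `v - u` in `ℓ¹`: by totality of `R` either `u → u + m` is a step, or
additivity makes `v → v - m` one. -/
theorem IsConformalGenerating.fiber_induction (hM : IsConformalGenerating L M)
    (hR : isAddPreorder R) {u₀ : ι → ℤ} {P : (ι → ℤ) → (ι → ℤ) → Prop}
    (refl : ∀ u, P u u)
    (fwd : ∀ u v m, dstep (fiber L u₀) M R u (u + m) → P (u + m) v → P u v)
    (bwd : ∀ u v m, dstep (fiber L u₀) M R v (v - m) → P u (v - m) → P u v)
    {u v : ι → ℤ} (hu : u ∈ fiber L u₀) (hv : v ∈ fiber L u₀) :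
    P u v := by
  induction hn : ∑ c, ((v - u) c).natAbs using Nat.strong_induction_on generalizing u v with
  | _ n ih =>
  obtain rfl | huv := eq_or_ne u v
  · exact refl u
  obtain ⟨m, hmM, hm⟩ := hM.exists_conformalLE (v - u)
    (by simpa using L.sub_mem hv.2 hu.2) (sub_ne_zero.2 huv.symm)
  obtain ⟨hum, hvm⟩ := hm.add_sub_mem_fiber hu hv (hM.subset hmM)
  have hlt := hm.sum_natAbs_sub_lt (fun h => hM.zero_notMem (h ▸ hmM))
  rcases hR.2.2.1 u (u + m) with hR₁ | hR₁
  · refine fwd u v m ⟨hu, hum, .inl (by simpa using hmM), hR₁⟩ (ih _ ?_ hum hv rfl)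
    rwa [← hn, sub_add_eq_sub_sub]
  · have hR₂ : R v (v - m) := by
      convert hR.2.2.2 _ _ (v - m - u) hR₁ using 1 <;> abel
    refine bwd u v m ⟨hv, hvm, .inr (by simpa using hmM), hR₂⟩ (ih _ ?_ hu hvm rfl)
    rwa [← hn, sub_right_comm]

theorem IsConformalGenerating.isGroebner (hM : IsConformalGenerating L M)
    (hR : isAddPreorder R) : isGroebner (latFam L) M R := by
  rintro _ ⟨u₀, rfl⟩
  refine ⟨fun u hu v hv => ?_, fun u v hu hv => ?_, fun u hu v hv => ?_⟩
  · refine hM.fiber_induction hR (fun _ => .refl) (fun u v m hstep ih => ?_)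
      (fun u v m hstep ih => ?_) hu hv
    exacts [ih.head (.inl hstep), ih.tail (.inr hstep)]
  · refine hM.fiber_induction
      (P := fun u v => isSink _ M R u → isSink _ M R v → mutReach _ M R u v) hR
      (fun _ _ _ => ⟨.refl, .refl⟩) (fun u v m hstep ih hu hv => ?_)
      (fun u v m hstep ih hu hv => ?_) hu.1 hv.1 hu hv
    · have hback := hu.2 _ (.single hstep)
      obtain ⟨h₁, h₂⟩ := ih (hu.of_reflTransGen (.single hstep)) hv
      exact ⟨h₁.head hstep, h₂.trans hback⟩
    · have hback := hv.2 _ (.single hstep)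
      obtain ⟨h₁, h₂⟩ := ih hu (hv.of_reflTransGen (.single hstep))
      exact ⟨h₁.trans hback, h₂.head hstep⟩
  · refine hM.fiber_induction (P := fun u v => isSink _ M R u → R v u) hR
      (fun u _ => hR.1 u) (fun u v m hstep ih hu => ?_) (fun u v m hstep ih hu => ?_) hu.1 hv hu
    · exact hR.2.1 _ _ _ (ih (hu.of_reflTransGen (.single hstep)))
        (rel_of_reflTransGen_dstep hR (hu.2 _ (.single hstep)))
    · exact hR.2.1 _ _ _ hstep.2.2.2 (ih hu)

end Groebner

open Function in
theorem exists_injective_orbit {X : Type*} [Finite X] [Nonempty X] (f : X → X) :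
    ∃ (n : ℕ) (xs : Fin (n + 1) → X), Injective xs ∧ ∀ t, xs (t + 1) = f (xs t) := by
  obtain ⟨x₀⟩ := ‹Nonempty X›
  obtain ⟨a, b, hab, hne⟩ : ∃ a b, f^[a] x₀ = f^[b] x₀ ∧ a ≠ b := by
    simpa [Injective] using not_injective_infinite_finite (f^[·] x₀)
  wlog hlt : a < b generalizing a b
  · exact this b a hab.symm hne.symm (by omega)
  set x := f^[a] x₀
  have hx : x ∈ periodicPts f := mk_mem_periodicPts (n := b - a) (by omega) <| by
    rw [IsPeriodicPt, IsFixedPt, ← iterate_add_apply, Nat.sub_add_cancel hlt.le, hab]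
  obtain ⟨n, hn⟩ := Nat.exists_eq_add_one_of_ne_zero (minimalPeriod_pos_of_mem_periodicPts hx).ne'
  refine ⟨n, fun t => f^[t] x, fun s t h => Fin.ext ?_, fun t => ?_⟩
  · exact iterate_injOn_Iio_minimalPeriod (by simp [hn, s.is_lt]) (by simp [hn, t.is_lt]) h
  · have := iterate_mod_minimalPeriod_eq (f := f) (x := x) (n := t + 1)
    rwa [hn, ← Nat.add_mod_mod, ← Fin.val_one', ← Fin.val_add, iterate_succ_apply'] at this

section TwoWayTables

def zeroMargins (α β : Type*) [Fintype α] [Fintype β] : AddSubgroup (α × β → ℤ) where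
  carrier := {w | (∀ i, ∑ j, w (i, j) = 0) ∧ ∀ j, ∑ i, w (i, j) = 0}
  add_mem' ha hb := ⟨fun i => by simp [Finset.sum_add_distrib, ha.1 i, hb.1 i],
    fun j => by simp [Finset.sum_add_distrib, ha.2 j, hb.2 j]⟩
  zero_mem' := by simp
  neg_mem' ha := ⟨fun i => by simp [ha.1 i], fun j => by simp [ha.2 j]⟩

variable {α β : Type*}

theorem exists_neg_of_pos [Fintype α] [Fintype β] {w : α × β → ℤ} (hw : w ∈ zeroMargins α β)
    {i : α} {j : β} (h : 0 < w (i, j)) : ∃ j', w (i, j') < 0 := by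
  by_contra! hall
  have := (Finset.sum_eq_zero_iff_of_nonneg fun j _ => hall j).1 (hw.1 i) j (Finset.mem_univ _)
  omega

theorem exists_pos_of_neg [Fintype α] [Fintype β] {w : α × β → ℤ} (hw : w ∈ zeroMargins α β)
    {i : α} {j : β} (h : w (i, j) < 0) : ∃ i', 0 < w (i', j) := by
  by_contra! hall
  have := (Finset.sum_eq_zero_iff_of_nonpos fun i _ => hall i).1 (hw.2 j) i (Finset.mem_univ _)
  omega

variable [DecidableEq α] [DecidableEq β]

def cycleMove {k : ℕ} (I : Fin (k + 2) → α) (J : Fin (k + 2) → β) : α × β → ℤ :=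
  ∑ t, (Pi.single (I t, J t) 1 - Pi.single (I t, J (t + 1)) 1)

variable (α β) in
def cycleMoves : Set (α × β → ℤ) :=
  {f | ∃ (k : ℕ) (I : Fin (k + 2) → α) (J : Fin (k + 2) → β),
    Function.Injective I ∧ Function.Injective J ∧ f = cycleMove I J}

variable {k : ℕ} {I : Fin (k + 2) → α} {J : Fin (k + 2) → β}

theorem cycleMove_apply (I : Fin (k + 2) → α) (J : Fin (k + 2) → β) (c : α × β) :
    cycleMove I J c =
      ∑ t, ((if c = (I t, J t) then 1 else 0) - if c = (I t, J (t + 1)) then 1 else 0) := by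
  simp [cycleMove, Finset.sum_apply, Pi.single_apply]

theorem cycleMove_apply_pos (hI : Function.Injective I) (hJ : Function.Injective J)
    (s : Fin (k + 2)) : cycleMove I J (I s, J s) = 1 := by
  rw [cycleMove_apply, Finset.sum_eq_single s]
  · simp [hJ.ne (show s ≠ s + 1 by simp)]
  · intro t _ hts
    simp [hI.ne hts.symm]
  · simp

theorem cycleMove_apply_neg (hI : Function.Injective I) (hJ : Function.Injective J)
    (s : Fin (k + 2)) : cycleMove I J (I s, J (s + 1)) = -1 := by
  rw [cycleMove_apply, Finset.sum_eq_single s]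
  · simp [hJ.ne (show s + 1 ≠ s by simp)]
  · intro t _ hts
    simp [hI.ne hts.symm]
  · simp

theorem cycleMove_apply_eq_zero {c : α × β} (hpos : ∀ t, c ≠ (I t, J t))
    (hneg : ∀ t, c ≠ (I t, J (t + 1))) : cycleMove I J c = 0 := by
  simp [cycleMove_apply, hpos, hneg]

theorem cycleMove_cases (hI : Function.Injective I) (hJ : Function.Injective J) (c : α × β) :
    (∃ t, c = (I t, J t) ∧ cycleMove I J c = 1) ∨
      (∃ t, c = (I t, J (t + 1)) ∧ cycleMove I J c = -1) ∨ cycleMove I J c = 0 := by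
  by_cases hpos : ∃ t, c = (I t, J t)
  · obtain ⟨t, rfl⟩ := hpos
    exact .inl ⟨t, rfl, cycleMove_apply_pos hI hJ t⟩
  by_cases hneg : ∃ t, c = (I t, J (t + 1))
  · obtain ⟨t, rfl⟩ := hneg
    exact .inr (.inl ⟨t, rfl, cycleMove_apply_neg hI hJ t⟩)
  push Not at hpos hneg
  exact .inr (.inr (cycleMove_apply_eq_zero hpos hneg))

theorem cycleMove_mem_zeroMargins [Fintype α] [Fintype β] (I : Fin (k + 2) → α)
    (J : Fin (k + 2) → β) :
    cycleMove I J ∈ zeroMargins α β := by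
  refine ⟨fun i => ?_, fun j => ?_⟩
  · simp [cycleMove_apply, Finset.sum_comm (γ := β), Finset.sum_sub_distrib, ite_and]
  · have hshift : ∑ t, (if j = J (t + 1) then 1 else 0 : ℤ) = ∑ t, if j = J t then 1 else 0 :=
      Equiv.sum_comp (Equiv.addRight (1 : Fin (k + 2))) fun t => if j = J t then 1 else 0
    simp [cycleMove_apply, Finset.sum_comm (γ := α), Finset.sum_sub_distrib, ite_and, hshift]

theorem cycleMove_ne_zero (hI : Function.Injective I) (hJ : Function.Injective J) :
    cycleMove I J ≠ 0 := fun h => by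
  simpa [h] using cycleMove_apply_pos hI hJ 0

theorem Fin.apply_eq_apply_zero_of_apply_add_one {X : Type*} {n : ℕ} {f : Fin (n + 1) → X}
    (h : ∀ t, f (t + 1) = f t) (t : Fin (n + 1)) : f t = f 0 := by
  induction t using Fin.induction with
  | zero => rfl
  | succ i ih => rw [← Fin.coeSucc_eq_succ, h, ih]

/-- The margin equations at the two nonzero cells of each row and column of the cycle make a
table conformal to it constant along the positive cells. -/
theorem isPrimitiveIn_cycleMove [Fintype α] [Fintype β] (hI : Function.Injective I)
    (hJ : Function.Injective J) : IsPrimitiveIn (zeroMargins α β) (cycleMove I J) := by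
  intro w hw hwm
  have hrow : ∀ t, w (I t, J t) + w (I t, J (t + 1)) = 0 := fun t => by
    rw [← hw.1 (I t), Fintype.sum_eq_add _ _ (hJ.ne (show t ≠ t + 1 by simp))]
    rintro j ⟨hj₁, hj₂⟩
    refine hwm.eq_zero_of_eq_zero (cycleMove_apply_eq_zero (fun s h => ?_) (fun s h => ?_))
    all_goals
      obtain ⟨h₁, rfl⟩ := Prod.mk.inj h
      cases hI h₁
      contradiction
  have hcol : ∀ t, w (I (t + 1), J (t + 1)) + w (I t, J (t + 1)) = 0 := fun t => by
    rw [← hw.2 (J (t + 1)), Fintype.sum_eq_add _ _ (hI.ne (show t + 1 ≠ t by simp))]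
    rintro i ⟨hi₁, hi₂⟩
    refine hwm.eq_zero_of_eq_zero (cycleMove_apply_eq_zero (fun s h => ?_) (fun s h => ?_))
    · obtain ⟨rfl, h₂⟩ := Prod.mk.inj h
      exact hi₁ (by rw [hJ h₂])
    · obtain ⟨rfl, h₂⟩ := Prod.mk.inj h
      exact hi₂ (by rw [add_right_cancel (hJ h₂)])
  have hconst : ∀ t, w (I t, J t) = w (I 0, J 0) :=
    Fin.apply_eq_apply_zero_of_apply_add_one fun t => by linarith [hrow t, hcol t]
  have hsmul : w = w (I 0, J 0) • cycleMove I J := funext fun c => by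
    rcases cycleMove_cases hI hJ c with ⟨t, rfl, hc⟩ | ⟨t, rfl, hc⟩ | hc
    · simp [hc, hconst t]
    · simp only [Pi.smul_apply, hc, smul_eq_mul]; linarith [hrow t, hconst t]
    · simp [hc, hwm.eq_zero_of_eq_zero hc]
  have h₀ := hwm (I 0, J 0)
  rw [cycleMove_apply_pos hI hJ] at h₀
  obtain h | h : w (I 0, J 0) = 0 ∨ w (I 0, J 0) = 1 := by omega
  · exact .inl (by rw [hsmul, h, zero_smul])
  · exact .inr (by rw [hsmul, h, one_smul])

theorem conformalLE_cycleMove (hI : Function.Injective I) (hJ : Function.Injective J)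
    {w : α × β → ℤ} (hpos : ∀ t, 0 < w (I t, J t)) (hneg : ∀ t, w (I t, J (t + 1)) < 0) :
    ConformalLE (cycleMove I J) w := fun c => by
  rcases cycleMove_cases hI hJ c with ⟨t, rfl, hc⟩ | ⟨t, rfl, hc⟩ | hc
  · have := hpos t; omega
  · have := hneg t; omega
  · rw [hc]; omega

theorem exists_mem_cycleMoves_conformalLE [Fintype α] [Fintype β] {w : α × β → ℤ}
    (hw : w ∈ zeroMargins α β) (hw0 : w ≠ 0) : ∃ m ∈ cycleMoves α β, ConformalLE m w := by
  obtain ⟨c, hc⟩ : ∃ c, 0 < w c := by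
    obtain ⟨c, hc⟩ := Function.ne_iff.1 hw0
    rcases (Ne.lt_or_gt hc : w c < 0 ∨ 0 < w c) with hc | hc
    · obtain ⟨i, hi⟩ := exists_pos_of_neg hw hc
      exact ⟨_, hi⟩
    · exact ⟨c, hc⟩
  let S := {i // ∃ j, 0 < w (i, j)}
  let T := {j // ∃ i, w (i, j) < 0}
  have : Nonempty S := ⟨⟨c.1, c.2, hc⟩⟩
  choose col hcol using fun i : S => exists_neg_of_pos hw i.2.choose_spec
  choose row hrow using fun j : T => exists_pos_of_neg hw j.2.choose_spec
  let toCol : S → T := fun i => ⟨col i, i, hcol i⟩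
  let toRow : T → S := fun j => ⟨row j, j, hrow j⟩
  obtain ⟨n, xs, hxs, hsucc⟩ := exists_injective_orbit (toRow ∘ toCol)
  have hn : n ≠ 0 := by
    rintro rfl
    have hfix : (xs 0).1 = row (toCol (xs 0)) := congrArg Subtype.val (hsucc 0)
    have hpos : 0 < w ((xs 0).1, col (xs 0)) := by rw [hfix]; exact hrow (toCol (xs 0))
    exact (hcol (xs 0)).not_gt hpos
  obtain ⟨k, rfl⟩ := Nat.exists_eq_add_one_of_ne_zero hn
  let I : Fin (k + 2) → α := fun t => (xs (t + 1)).1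
  let J : Fin (k + 2) → β := fun t => col (xs t)
  have hI : Function.Injective I :=
    Subtype.val_injective.comp (hxs.comp (add_left_injective 1))
  have hJ : Function.Injective J := fun s t h => by
    have : toCol (xs s) = toCol (xs t) := Subtype.ext h
    exact add_right_cancel (hxs (by rw [hsucc, hsucc, Function.comp_apply, this]; rfl))
  refine ⟨cycleMove I J, ⟨k, I, J, hI, hJ, rfl⟩, conformalLE_cycleMove hI hJ (fun t => ?_) ?_⟩
  · rw [show I t = row (toCol (xs t)) by simp only [I, hsucc]; rfl]
    exact hrow (toCol (xs t))
  · exact fun t => hcol (xs (t + 1))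

variable (α β) in
theorem isConformalGenerating_cycleMoves [Fintype α] [Fintype β] :
    IsConformalGenerating (zeroMargins α β) (cycleMoves α β) where
  subset := by
    rintro _ ⟨k, I, J, -, -, rfl⟩
    exact cycleMove_mem_zeroMargins I J
  zero_notMem := by
    rintro ⟨k, I, J, hI, hJ, h⟩
    exact cycleMove_ne_zero hI hJ h.symm
  exists_conformalLE _ := exists_mem_cycleMoves_conformalLE

end TwoWayTables

section DesignC3

variable {α β : Type*}

def stackNeg : (α × β → ℤ) →+ (α × Fin 2 × β → ℤ) where
  toFun w x := ![1, -1] x.2.1 * w (x.1, x.2.2)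
  map_zero' := by ext; simp
  map_add' _ _ := by ext; simp [mul_add]

@[simp]
theorem stackNeg_apply_zero (w : α × β → ℤ) (i : α) (j : β) : stackNeg w (i, 0, j) = w (i, j) := by
  simp [stackNeg]

@[simp]
theorem stackNeg_apply_one (w : α × β → ℤ) (i : α) (j : β) : stackNeg w (i, 1, j) = -w (i, j) := by
  simp [stackNeg]

theorem conformalLE_stackNeg_iff (a b : α × β → ℤ) :
    ConformalLE (stackNeg a) (stackNeg b) ↔ ConformalLE a b := by
  refine ⟨fun h c => by simpa using h (c.1, 0, c.2), fun h x => ?_⟩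
  obtain ⟨i, s, j⟩ := x
  have := h (i, j)
  fin_cases s <;> simp <;> omega

theorem stackNeg_single [DecidableEq α] [DecidableEq β] (i : α) (j : β) :
    stackNeg (Pi.single (i, j) 1) = Pi.single (i, 0, j) 1 - Pi.single (i, 1, j) 1 := by
  ext ⟨a, s, b⟩
  fin_cases s <;> simp [Pi.single_apply]

variable {p r : ℕ}

theorem designC3_mulVec_inl (v : Fin p × Fin 2 × Fin r → ℤ) (i : Fin p) (s : Fin 2) :
    (designC3 p r).mulVec v (.inl (i, s)) = ∑ j, v (i, s, j) := by
  fin_cases s <;>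
    simp [Matrix.mulVec, dotProduct, designC3, Fintype.sum_prod_type, ite_and, ite_mul]

theorem designC3_mulVec_inr_inl (v : Fin p × Fin 2 × Fin r → ℤ) (i : Fin p) (j : Fin r) :
    (designC3 p r).mulVec v (.inr (.inl (i, j))) = v (i, 0, j) + v (i, 1, j) := by
  simp [Matrix.mulVec, dotProduct, designC3, Fintype.sum_prod_type, ite_and, ite_mul]

theorem designC3_mulVec_inr_inr (v : Fin p × Fin 2 × Fin r → ℤ) (s : Fin 2) (j : Fin r) :
    (designC3 p r).mulVec v (.inr (.inr (s, j))) = ∑ i, v (i, s, j) := by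
  simp [Matrix.mulVec, dotProduct, designC3, Fintype.sum_prod_type, ite_mul]

theorem setOf_designC3_mulVec_eq_zero :
    {v | (designC3 p r).mulVec v = 0} = ((zeroMargins (Fin p) (Fin r)).map stackNeg : Set _) := by
  ext v
  constructor
  · intro hv
    have h := congrFun hv
    refine ⟨fun c => v (c.1, 0, c.2), ⟨fun i => ?_, fun j => ?_⟩, funext fun x => ?_⟩
    · simpa [designC3_mulVec_inl] using h (.inl (i, 0))
    · simpa [designC3_mulVec_inr_inr] using h (.inr (.inr (0, j)))
    · obtain ⟨i, s, j⟩ := x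
      have := h (.inr (.inl (i, j)))
      rw [designC3_mulVec_inr_inl, Pi.zero_apply] at this
      fin_cases s
      · simp
      · simp only [Fin.isValue, Fin.mk_one, stackNeg_apply_one]
        omega
  · rintro ⟨w, hw, rfl⟩
    funext k
    rcases k with ⟨i, s⟩ | ⟨i, j⟩ | ⟨s, j⟩
    · fin_cases s <;> simp [designC3_mulVec_inl, hw.1 i]
    · simp [designC3_mulVec_inr_inl]
    · fin_cases s <;> simp [designC3_mulVec_inr_inr, hw.2 j]

theorem movesC3_eq_image_stackNeg : movesC3 p r = stackNeg '' cycleMoves (Fin p) (Fin r) := by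
  have hmove : ∀ (k : ℕ) (I : Fin (k + 2) → Fin p) (J : Fin (k + 2) → Fin r),
      stackNeg (cycleMove I J) = ∑ t, (Pi.single (I t, (0 : Fin 2), J t) (1 : ℤ)
        - Pi.single (I t, (1 : Fin 2), J t) 1 + Pi.single (I t, (1 : Fin 2), J (t + 1)) 1
        - Pi.single (I t, (0 : Fin 2), J (t + 1)) 1) := by
    intro k I J
    simp only [cycleMove, map_sum, map_sub, stackNeg_single]
    exact Finset.sum_congr rfl fun t _ => by abel
  ext f
  constructor
  · rintro ⟨k, -, I, J, hI, hJ, rfl⟩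
    exact ⟨_, ⟨k, I, J, hI, hJ, rfl⟩, hmove k I J⟩
  · rintro ⟨_, ⟨k, I, J, hI, hJ, rfl⟩, rfl⟩
    refine ⟨k, le_min ?_ ?_, I, J, hI, hJ, hmove k I J⟩
    · simpa using Fintype.card_le_of_injective I hI
    · simpa using Fintype.card_le_of_injective J hJ

end DesignC3

/-- Theorem 5.2: for `d = (p,2,r)` the moves `f_{i,j}` form the Graver
basis of `ker_ℤ ℬ_{C₃,d}`; in particular they are a Gröbner basis for every additive
preorder. -/
theorem stmt_16 (p r : ℕ) :
    movesC3 p r = graver {v | (designC3 p r).mulVec v = 0} ∧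
    ∀ R, isAddPreorder R →
      isGroebner (latFam {v | (designC3 p r).mulVec v = 0}) (movesC3 p r) R := by
  have hM := (isConformalGenerating_cycleMoves (Fin p) (Fin r)).map stackNeg
    conformalLE_stackNeg_iff
  rw [setOf_designC3_mulVec_eq_zero, movesC3_eq_image_stackNeg]
  refine ⟨hM.eq_graver ?_, fun R hR => hM.isGroebner hR⟩
  rintro _ ⟨_, ⟨k, I, J, hI, hJ, rfl⟩, rfl⟩
  exact (isPrimitiveIn_cycleMove hI hJ).map stackNeg conformalLE_stackNeg_iff

end Stmt16
end

section
/- Let ℬ₁,…,ℬ_r be integer matrices with 𝒜-gradings φ₁,…,φ_r, and let m₁ ∈ ker_ℤ ℬ₁, …, m_r ∈ ker_ℤ ℬ_r be lifts of the same move g ∈ ℤ^𝒜, i.e., φᵢ(mᵢ) = g for all i. Then any glued move m̃ ∈ Glues(m₁, …, m_r) satisfies deg(m̃) ≤ deg(g) + deg(max_{i=1,…,r}(φᵢ(mᵢ⁺) − g⁺)), where the max is taken coordinatewise and deg(v) = max{‖v⁺‖₁, ‖v⁻‖₁}. -/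
/-!
Write the glue as `mt = P − N` with `P, N ≥ 0`. Projections and marginalizations preserve
total sums, so `∑ P = ∑ Mx` and `∑ N = ∑ Mx − ∑ g`, and `deg mt` is at most the larger of the two.
Since `g⁺ ≤ Mx`, the first sum is `‖g⁺‖₁ + deg (Mx − g⁺)` and the second `‖g⁻‖₁ + deg (Mx − g⁺)`.
-/

namespace Stmt17

/-- Marginalization map induced by `φ : [n] → [t]`. -/
def marg {n t : ℕ} (φ : Fin n → Fin t) (v : Fin n → ℤ) : Fin t → ℤ :=
  fun a => ∑ i, if φ i = a then v i else 0

/-- Index set of the iterated toric fiber product `ℬ₁ ×_𝒜 ⋯ ×_𝒜 ℬ_r`: tuples of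
column indices with a common `𝒜`-degree. -/
abbrev multiIdx (r t : ℕ) (n : Fin r → ℕ) (φ : ∀ k, Fin (n k) → Fin t) :=
  {f : ∀ k, Fin (n k) // ∃ a : Fin t, ∀ k, φ k (f k) = a}

/-- The `k`-th projection `ψ_k`, sending `e_f` to `e_{f(k)}`. -/
def psiMulti {r t : ℕ} {n : Fin r → ℕ} {φ : ∀ k, Fin (n k) → Fin t}
    (k : Fin r) (w : multiIdx r t n φ → ℤ) : Fin (n k) → ℤ :=
  fun i => ∑ f : multiIdx r t n φ, if f.1 k = i then w f else 0

def pos {ι : Type*} (v : ι → ℤ) : ι → ℤ := fun i => max (v i) 0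
def neg {ι : Type*} (v : ι → ℤ) : ι → ℤ := fun i => max (-v i) 0

/-- `deg(v) = max(‖v⁺‖₁, ‖v⁻‖₁)`. -/
def deg {ι : Type*} [Fintype ι] (v : ι → ℤ) : ℤ :=
  max (∑ i, pos v i) (∑ i, neg v i)

/-- `mt` is a glue of the lifts `m₁, …, m_r`:  `mt = P − N` with `P, N ≥ 0`,
`ψ_k P = m_k⁺ + a_k`, `ψ_k N = m_k⁻ + a_k` for nonnegative extensions `a_k` with
`φ_k(m_k⁺ + a_k) = Mx`, the coordinatewise maximum of the `φ_i(m_i⁺)`. -/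
def isMultiGlue {r t : ℕ} {n : Fin r → ℕ} {φ : ∀ k, Fin (n k) → Fin t}
    (m : ∀ k, Fin (n k) → ℤ) (Mx : Fin t → ℤ) (mt : multiIdx r t n φ → ℤ) : Prop :=
  ∃ P N : multiIdx r t n φ → ℤ, 0 ≤ P ∧ 0 ≤ N ∧ mt = P - N ∧
    ∃ a : ∀ k, Fin (n k) → ℤ, (∀ k, 0 ≤ a k) ∧
      (∀ k, psiMulti k P = pos (m k) + a k) ∧
      (∀ k, psiMulti k N = neg (m k) + a k) ∧
      (∀ k, marg (φ k) (pos (m k) + a k) = Mx)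


lemma pos_sub_neg {ι : Type*} (v : ι → ℤ) : pos v - neg v = v := by
  funext i; simp only [Pi.sub_apply, pos, neg]; omega

section Degree

variable {ι : Type*} [Fintype ι]

lemma sum_eq_sum_pos_sub_sum_neg (v : ι → ℤ) : ∑ i, v i = ∑ i, pos v i - ∑ i, neg v i := by
  rw [← Finset.sum_sub_distrib]
  exact Finset.sum_congr rfl fun i _ => (congrFun (pos_sub_neg v) i).symm

lemma deg_of_nonneg {v : ι → ℤ} (hv : 0 ≤ v) : deg v = ∑ i, v i := by
  have hpos : pos v = v := funext fun i => max_eq_left (hv i)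
  have hneg : neg v = 0 := funext fun i => max_eq_right (neg_nonpos.2 (hv i))
  simp only [deg, hpos, hneg, Pi.zero_apply, Finset.sum_const_zero]
  exact max_eq_left (Finset.sum_nonneg fun i _ => hv i)

lemma deg_sub_le_max_sum {P N : ι → ℤ} (hP : 0 ≤ P) (hN : 0 ≤ N) :
    deg (P - N) ≤ max (∑ i, P i) (∑ i, N i) := by
  refine max_le_max (Finset.sum_le_sum fun i _ => ?_) (Finset.sum_le_sum fun i _ => ?_) <;>
  · have := hP i; have := hN i
    simp only [pos, neg, Pi.sub_apply, Pi.zero_apply] at *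
    omega

lemma max_sum_le_deg_add_deg {g M : ι → ℤ} (hg : pos g ≤ M) :
    max (∑ i, M i) (∑ i, M i - ∑ i, g i) ≤ deg g + deg (fun i => M i - pos g i) := by
  have hM : deg (fun i => M i - pos g i) = ∑ i, M i - ∑ i, pos g i := by
    rw [deg_of_nonneg fun i => sub_nonneg.2 (hg i), Finset.sum_sub_distrib]
  rw [hM, sum_eq_sum_pos_sub_sum_neg g, deg]
  omega

end Degree

lemma sum_marg {n t : ℕ} (φ : Fin n → Fin t) (v : Fin n → ℤ) :
    ∑ a, marg φ v a = ∑ i, v i := by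
  simp only [marg]; rw [Finset.sum_comm]; simp

lemma sum_psiMulti {r t : ℕ} {n : Fin r → ℕ} {φ : ∀ k, Fin (n k) → Fin t}
    (k : Fin r) (w : multiIdx r t n φ → ℤ) :
    ∑ i, psiMulti k w i = ∑ f, w f := by
  simp only [psiMulti]; rw [Finset.sum_comm]; simp

lemma pos_marg_le_marg_pos {n t : ℕ} (φ : Fin n → Fin t) (v : Fin n → ℤ) :
    pos (marg φ v) ≤ marg φ (pos v) := fun a =>
  max_le (Finset.sum_le_sum fun i _ => by split_ifs <;> simp [pos])
    (Finset.sum_nonneg fun i _ => by split_ifs <;> simp [pos])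

lemma isMultiGlue.deg_le_max_sum {r t : ℕ} {n : Fin r → ℕ} {φ : ∀ k, Fin (n k) → Fin t}
    {m : ∀ k, Fin (n k) → ℤ} {Mx : Fin t → ℤ} {mt : multiIdx r t n φ → ℤ}
    (hglue : isMultiGlue m Mx mt) (k : Fin r) :
    deg mt ≤ max (∑ x, Mx x) (∑ x, Mx x - ∑ i, m k i) := by
  obtain ⟨P, N, hP, hN, rfl, a, -, hPk, hNk, hMk⟩ := hglue
  have hsumP : ∑ f, P f = ∑ x, Mx x := by
    rw [← sum_psiMulti k P, hPk k, ← sum_marg (φ k), hMk k]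
  have hNk' : psiMulti k N = (pos (m k) + a k) - m k := by
    funext i; simp only [hNk k, Pi.add_apply, Pi.sub_apply, pos, neg]; omega
  have hsumN : ∑ f, N f = ∑ x, Mx x - ∑ i, m k i := by
    rw [← sum_psiMulti k N, hNk', ← hsumP, ← sum_psiMulti k P, hPk k]
    simp only [Pi.sub_apply, Finset.sum_sub_distrib]
  rw [← hsumN, ← hsumP]
  exact deg_sub_le_max_sum hP hN

theorem stmt_17_general (r t : ℕ) (hr : 0 < r) (n : Fin r → ℕ)
    (φ : ∀ k, Fin (n k) → Fin t)
    (g : Fin t → ℤ) (m : ∀ k, Fin (n k) → ℤ)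
    (hlift : ∀ k, marg (φ k) (m k) = g)
    (Mx : Fin t → ℤ)
    (hMx1 : ∀ (k : Fin r) (a : Fin t), marg (φ k) (pos (m k)) a ≤ Mx a)
    (mt : multiIdx r t n φ → ℤ)
    (hglue : isMultiGlue m Mx mt) :
    deg mt ≤ deg g + deg (fun a => Mx a - pos g a) := by
  let k : Fin r := ⟨0, hr⟩
  have hg : pos g ≤ Mx := hlift k ▸ (pos_marg_le_marg_pos (φ k) (m k)).trans (hMx1 k)
  calc deg mt ≤ max (∑ x, Mx x) (∑ x, Mx x - ∑ x, g x) := by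
        simpa only [← sum_marg (φ k) (m k), hlift k] using hglue.deg_le_max_sum k
    _ ≤ deg g + deg (fun a => Mx a - pos g a) := max_sum_le_deg_add_deg hg

/-- Lemma 6.1: the degree of any glue of lifts `m₁, …, m_r` of the
same move `g` is bounded by `deg(g) + deg(max_i(φ_i(m_i⁺) − g⁺))`. -/
theorem stmt_17 (r s t : ℕ) (hr : 0 < r) (h n : Fin r → ℕ)
    (A : Matrix (Fin s) (Fin t) ℤ)
    (B : ∀ k, Matrix (Fin (h k)) (Fin (n k)) ℤ)
    (φ : ∀ k, Fin (n k) → Fin t)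
    (hgr : ∀ k v, (B k).mulVec v = 0 → A.mulVec (marg (φ k) v) = 0)
    (g : Fin t → ℤ) (m : ∀ k, Fin (n k) → ℤ)
    (hker : ∀ k, (B k).mulVec (m k) = 0)
    (hlift : ∀ k, marg (φ k) (m k) = g)
    (Mx : Fin t → ℤ)
    (hMx1 : ∀ (k : Fin r) (a : Fin t), marg (φ k) (pos (m k)) a ≤ Mx a)
    (hMx2 : ∀ a : Fin t, ∃ k : Fin r, Mx a = marg (φ k) (pos (m k)) a)
    (mt : multiIdx r t n φ → ℤ)
    (hglue : isMultiGlue m Mx mt) :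
    deg mt ≤ deg g + deg (fun a => Mx a - pos g a) :=
  stmt_17_general r t hr n φ g m hlift Mx hMx1 mt hglue

end Stmt17
end
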